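/- arXiv:2104.11006 — 4 statements merged into one kernel-verified Lean document; each statement's English description precedes it below -/
import Mathlib

section
/- Let t = 2 and let g ∈ G^LP. If for some i ∈ {1,…,k} one has g·x_i = ±(1/2)x_{a,b} ± (1/2)x_{a,c} ± (1/2)x_b ± (1/2)x_c for distinct a, b, c ∈ {1,…,k}, then there exists j ∈ {1,…,k} with j ≠ i such that g·x_j = ±(1/2)x_{a',b'} ± (1/2)x_{a',c'} ± (1/2)x_{b'} ± (1/2)x_{c'} for some distinct a', b', c' ∈ {1,…,k}. -/
/-- The set of points of the 2-level full factorial design, `P = {-1,1}^k`,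
with `{-1,1}` encoded as `ℤˣ`. -/
abbrev DesignPoint (k : ℕ) := Fin k → ℤˣ

/-- The vector `x_S ∈ ℚ^P` given by `(x_S)_p = ∏_{i ∈ S} p_i`.
In particular `xvec k ∅` is the all-ones vector `𝟏`, `xvec k {i}` is the
`i`-th main effect and `xvec k {i,j}` is a two-factor interaction. -/
def xvec (k : ℕ) (S : Finset (Fin k)) (p : DesignPoint k) : ℚ :=
  ∏ i ∈ S, ((p i : ℤ) : ℚ)

/-- The linear action of a permutation of the points on `ℚ^P`: `(π·v)_p = v_{π⁻¹(p)}`. -/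
def permVec (k : ℕ) (π : Equiv.Perm (DesignPoint k)) (v : DesignPoint k → ℚ) :
    DesignPoint k → ℚ :=
  fun p => v (π⁻¹ p)

/-- The LP-relaxation feasible set `F` of the OA(N,k,2,t)-defining ILP,
written in terms of J-characteristics: `f ≥ 0`, `𝟏ᵀf = N`, and `x_Sᵀf = 0`
for all nonempty `S` with `|S| ≤ t`. -/
def feas (k N t : ℕ) : Set (DesignPoint k → ℚ) :=
  {f | (∀ p, 0 ≤ f p) ∧ (∑ p, f p = (N : ℚ)) ∧
    ∀ S : Finset (Fin k), S ≠ ∅ → S.card ≤ t → ∑ p, xvec k S p * f p = 0}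

/-- The LP relaxation permutation symmetry group `G^LP`: all permutations of
the points whose induced linear action maps `F` into itself. -/
def GLP (k N t : ℕ) : Set (Equiv.Perm (DesignPoint k)) :=
  {π | ∀ f ∈ feas k N t, permVec k π f ∈ feas k N t}

/-- `v` is of the special form `±(1/2)x_{a,b} ± (1/2)x_{a,c} ± (1/2)x_b ± (1/2)x_c`
for some distinct `a, b, c ∈ {1,…,k}` and some choice of signs. -/
def specialForm (k : ℕ) (v : DesignPoint k → ℚ) : Prop :=
  ∃ a b c : Fin k, a ≠ b ∧ a ≠ c ∧ b ≠ c ∧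
    ∃ e₁ e₂ e₃ e₄ : ℚ,
      (e₁ = 1/2 ∨ e₁ = -(1/2)) ∧ (e₂ = 1/2 ∨ e₂ = -(1/2)) ∧
      (e₃ = 1/2 ∨ e₃ = -(1/2)) ∧ (e₄ = 1/2 ∨ e₄ = -(1/2)) ∧
      v = fun p => e₁ * xvec k {a, b} p + e₂ * xvec k {a, c} p
        + e₃ * xvec k {b} p + e₄ * xvec k {c} p
namespace OAStuff

lemma unit_cast_pm (u : ℤˣ) : ((u : ℤ) : ℚ) = 1 ∨ ((u : ℤ) : ℚ) = -1 := by
  rcases Int.units_eq_one_or u with h | h <;> simp [h]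

lemma unit_cast_sq (u : ℤˣ) : ((u : ℤ) : ℚ)^2 = 1 := by
  rcases unit_cast_pm u with h | h <;> rw [h] <;> norm_num

lemma xvec_pm (k : ℕ) (S : Finset (Fin k)) (p : DesignPoint k) :
    xvec k S p = 1 ∨ xvec k S p = -1 := by
  classical
  induction S using Finset.induction with
  | empty => left; simp [xvec]
  | @insert a s ha ih =>
    rw [xvec, Finset.prod_insert ha]
    rcases unit_cast_pm (p a) with h1 | h1 <;> rcases ih with h2 | h2 <;>
      rw [xvec] at h2 <;> rw [h1, h2] <;> norm_num

lemma xvec_sq (k : ℕ) (S : Finset (Fin k)) (p : DesignPoint k) :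
    (xvec k S p)^2 = 1 := by
  rcases xvec_pm k S p with h | h <;> rw [h] <;> norm_num

lemma univ_units : (Finset.univ : Finset ℤˣ) = {1, -1} := by
  ext u
  rcases Int.units_eq_one_or u with h | h <;> simp [h]

lemma card_dp (k : ℕ) : Fintype.card (DesignPoint k) = 2^k := by
  rw [Fintype.card_fun, Fintype.card_fin]
  have : Fintype.card ℤˣ = 2 := by
    rw [← Finset.card_univ, univ_units]; decide
  rw [this]

lemma sum_one (k : ℕ) : ∑ _p : DesignPoint k, (1:ℚ) = 2^k := by
  rw [Finset.sum_const, Finset.card_univ, card_dp]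
  simp

lemma sum_xvec (k : ℕ) (S : Finset (Fin k)) :
    ∑ p : DesignPoint k, xvec k S p = if S = ∅ then (2:ℚ)^k else 0 := by
  classical
  have h1 : ∀ p : DesignPoint k, xvec k S p
      = ∏ i : Fin k, (if i ∈ S then ((p i : ℤ) : ℚ) else 1) := by
    intro p
    rw [xvec, Finset.prod_ite_mem, Finset.univ_inter]
  simp_rw [h1]
  rw [← Fintype.piFinset_univ, ← Finset.prod_univ_sum (fun _ => Finset.univ) (fun (i : Fin k) (u : ℤˣ) => if i ∈ S then ((u:ℤ):ℚ) else 1)]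
  have h2 : ∀ i : Fin k, (∑ u : ℤˣ, if i ∈ S then ((u : ℤ) : ℚ) else 1)
      = if i ∈ S then 0 else 2 := by
    intro i
    by_cases h : i ∈ S <;> simp [h, univ_units, Finset.sum_pair]
  simp_rw [h2]
  by_cases h : S = ∅
  · simp [h]
  · obtain ⟨i, hi⟩ := Finset.nonempty_iff_ne_empty.mpr h
    rw [if_neg h]
    exact Finset.prod_eq_zero (Finset.mem_univ i) (by simp [hi])

lemma sum_xvec_ne (k : ℕ) {S : Finset (Fin k)} (h : S ≠ ∅) :
    ∑ p : DesignPoint k, xvec k S p = 0 := by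
  rw [sum_xvec, if_neg h]


def ip {k : ℕ} (u v : DesignPoint k → ℚ) : ℚ := ∑ p, u p * v p

lemma xvec_mul_self (k : ℕ) (S : Finset (Fin k)) (p : DesignPoint k) :
    xvec k S p * xvec k S p = 1 := by
  have := xvec_sq k S p; nlinarith [this]

lemma delta (k : ℕ) (p q : DesignPoint k) :
    ∑ T : Finset (Fin k), xvec k T p * xvec k T q
      = if p = q then (2:ℚ)^k else 0 := by
  classical
  have h1 : ∀ T : Finset (Fin k), xvec k T p * xvec k T q
      = ∏ i ∈ T, (((p i : ℤ):ℚ) * ((q i : ℤ):ℚ)) := by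
    intro T; rw [xvec, xvec, Finset.prod_mul_distrib]
  simp_rw [h1]
  have h2 : ∑ T : Finset (Fin k), ∏ i ∈ T, (((p i : ℤ):ℚ) * ((q i : ℤ):ℚ))
      = ∏ i : Fin k, (((p i : ℤ):ℚ) * ((q i : ℤ):ℚ) + 1) := by
    rw [Finset.prod_add]
    rw [← Finset.powerset_univ]
    exact (Finset.sum_congr rfl (fun T _ => by simp)).symm
  rw [h2]
  by_cases h : p = q
  · subst h
    rw [if_pos rfl]
    have : ∀ i : Fin k, ((p i : ℤ):ℚ) * ((p i : ℤ):ℚ) + 1 = 2 := by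
      intro i
      rcases unit_cast_pm (p i) with h | h <;> rw [h] <;> norm_num
    rw [Finset.prod_congr rfl (fun i _ => this i), Finset.prod_const]
    simp
  · rw [if_neg h]
    obtain ⟨i, hi⟩ : ∃ i, p i ≠ q i := by
      by_contra hc
      push_neg at hc
      exact h (funext hc)
    refine Finset.prod_eq_zero (Finset.mem_univ i) ?_
    rcases Int.units_eq_one_or (p i) with hp | hp <;>
      rcases Int.units_eq_one_or (q i) with hq | hq <;>
      rw [hp, hq] at hi ⊢ <;> simp_all
lemma ip_xvec (k : ℕ) (S T : Finset (Fin k)) (hne : S ≠ T) :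
    ip (xvec k S) (xvec k T) = 0 := by
  classical
  have h1 : ∀ p : DesignPoint k, xvec k S p * xvec k T p
      = ∏ i : Fin k, ((if i ∈ S then ((p i : ℤ):ℚ) else 1)
        * (if i ∈ T then ((p i : ℤ):ℚ) else 1)) := by
    intro p
    have hS : (∏ i ∈ S, ((p i : ℤ):ℚ))
        = ∏ i : Fin k, (if i ∈ S then ((p i : ℤ):ℚ) else 1) := by
      rw [Finset.prod_ite_mem, Finset.univ_inter]
    have hT : (∏ i ∈ T, ((p i : ℤ):ℚ))
        = ∏ i : Fin k, (if i ∈ T then ((p i : ℤ):ℚ) else 1) := by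
      rw [Finset.prod_ite_mem, Finset.univ_inter]
    rw [xvec, xvec, hS, hT, ← Finset.prod_mul_distrib]
  rw [ip]
  simp_rw [h1]
  rw [← Fintype.piFinset_univ, ← Finset.prod_univ_sum (fun _ => Finset.univ)
    (fun (i : Fin k) (u : ℤˣ) => (if i ∈ S then ((u:ℤ):ℚ) else 1)
      * (if i ∈ T then ((u:ℤ):ℚ) else 1))]
  obtain ⟨i, hi⟩ := Finset.symmDiff_nonempty.mpr hne
  rw [Finset.mem_symmDiff] at hi
  refine Finset.prod_eq_zero (Finset.mem_univ i) ?_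
  rcases hi with ⟨h1', h2'⟩ | ⟨h1', h2'⟩ <;>
    simp [h1', h2', univ_units, Finset.sum_pair, show (1:ℤˣ) ≠ -1 from by decide]

lemma ip_xvec_self (k : ℕ) (S : Finset (Fin k)) :
    ip (xvec k S) (xvec k S) = (2:ℚ)^k := by
  rw [ip]
  have : ∀ p : DesignPoint k, xvec k S p * xvec k S p = 1 := fun p => xvec_mul_self k S p
  simp_rw [this]
  exact sum_one k

lemma expansion (k : ℕ) (w : DesignPoint k → ℚ) (p : DesignPoint k) :
    ∑ T : Finset (Fin k), ip w (xvec k T) * xvec k T p = (2:ℚ)^k * w p := by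
  classical
  have h1 : ∀ T : Finset (Fin k), ip w (xvec k T) * xvec k T p
      = ∑ q : DesignPoint k, w q * (xvec k T q * xvec k T p) := by
    intro T
    rw [ip, Finset.sum_mul]
    exact Finset.sum_congr rfl (fun q _ => by ring)
  simp_rw [h1]
  rw [Finset.sum_comm]
  have h2 : ∀ q : DesignPoint k,
      ∑ T : Finset (Fin k), w q * (xvec k T q * xvec k T p)
        = w q * (if q = p then (2:ℚ)^k else 0) := by
    intro q
    rw [← Finset.mul_sum, delta]
  simp_rw [h2, mul_ite, mul_zero]
  rw [Finset.sum_ite_eq' Finset.univ p (fun q => w q * (2:ℚ)^k)]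
  simp [mul_comm]
lemma permVec_mul (k : ℕ) (π ρ : Equiv.Perm (DesignPoint k)) (f : DesignPoint k → ℚ) :
    permVec k (π * ρ) f = permVec k π (permVec k ρ f) := by
  funext p
  simp [permVec, Equiv.Perm.mul_apply]

lemma glp_pow {k N t : ℕ} {g : Equiv.Perm (DesignPoint k)} (hg : g ∈ GLP k N t) :
    ∀ n : ℕ, g ^ n ∈ GLP k N t := by
  intro n
  induction n with
  | zero =>
    intro f hf
    have : permVec k 1 f = f := by funext p; simp [permVec]
    rw [pow_zero, this]; exact hf
  | succ n ih =>
    intro f hf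
    rw [pow_succ, permVec_mul]
    exact ih _ (hg f hf)

lemma glp_inv {k N t : ℕ} {g : Equiv.Perm (DesignPoint k)} (hg : g ∈ GLP k N t) :
    g⁻¹ ∈ GLP k N t := by
  have hpos : 0 < orderOf g := orderOf_pos g
  have h1 : g ^ (orderOf g - 1) * g = 1 := by
    rw [← pow_succ, Nat.sub_add_cancel hpos, pow_orderOf_eq_one]
  rw [inv_eq_of_mul_eq_one_left h1]
  exact glp_pow hg _

lemma sum_perm (k : ℕ) (π : Equiv.Perm (DesignPoint k)) (u : DesignPoint k → ℚ) :
    ∑ p, permVec k π u p = ∑ p, u p := by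
  rw [show (∑ p, permVec k π u p) = ∑ p, u (π⁻¹ p) from rfl]
  exact Fintype.sum_equiv π⁻¹ _ _ (fun p => rfl)

lemma ip_perm (k : ℕ) (π : Equiv.Perm (DesignPoint k)) (u v : DesignPoint k → ℚ) :
    ip (permVec k π u) (permVec k π v) = ip u v := by
  rw [ip, ip]
  exact Fintype.sum_equiv π⁻¹ _ _ (fun p => rfl)

lemma rowPerp {k N : ℕ} (hN : 1 ≤ N) {π : Equiv.Perm (DesignPoint k)}
    (hπ : π ∈ GLP k N 2) (T : Finset (Fin k)) (hT : 3 ≤ T.card)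
    (S : Finset (Fin k)) (hSne : S ≠ ∅) (hS : S.card ≤ 2) :
    ip (xvec k S) (permVec k π (xvec k T)) = 0 := by
  classical
  have hTne : T ≠ ∅ := by
    intro h; rw [h] at hT; simp at hT
  set c : ℚ := (N:ℚ)/2^(k+1) with hc
  have hNpos : (0:ℚ) < N := by exact_mod_cast Nat.lt_of_lt_of_le Nat.zero_lt_one hN
  have hcpos : 0 < c := by rw [hc]; positivity
  have hsumconst : ∑ _p : DesignPoint k, (N:ℚ)/2^k = (N:ℚ) := by
    rw [Finset.sum_const, Finset.card_univ, card_dp, nsmul_eq_mul]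
    push_cast
    field_simp
  have hf : (fun p => (N:ℚ)/2^k + c * xvec k T p) ∈ feas k N 2 := by
    refine ⟨?_, ?_, ?_⟩
    · intro p
      show 0 ≤ (N:ℚ)/2^k + c * xvec k T p
      rcases xvec_pm k T p with h | h <;> rw [h, hc]
      · positivity
      · have heq : (N:ℚ)/2^k + (N:ℚ)/2^(k+1) * (-1) = (N:ℚ)/2^(k+1) := by
          rw [pow_succ]; field_simp; ring
        rw [heq]; positivity
    · rw [Finset.sum_add_distrib, ← Finset.mul_sum, sum_xvec_ne k hTne,
        mul_zero, add_zero, hsumconst]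
    · intro S' hS'ne hS'
      have hS'T : S' ≠ T := fun h => by rw [h] at hS'; omega
      simp_rw [show ∀ p : DesignPoint k, xvec k S' p * ((N:ℚ)/2^k + c * xvec k T p)
          = (N:ℚ)/2^k * xvec k S' p + c * (xvec k S' p * xvec k T p)
        from fun p => by ring]
      rw [Finset.sum_add_distrib, ← Finset.mul_sum, ← Finset.mul_sum,
        sum_xvec_ne k hS'ne]
      have h0 : (∑ p, xvec k S' p * xvec k T p) = 0 := ip_xvec k S' T hS'T
      rw [h0]
      ring
  obtain ⟨-, -, h3⟩ := hπ _ hf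
  have h4 := h3 S hSne hS
  rw [show permVec k π (fun q => (N:ℚ)/2^k + c * xvec k T q)
      = fun p => (N:ℚ)/2^k + c * permVec k π (xvec k T) p from rfl] at h4
  simp_rw [show ∀ p : DesignPoint k, xvec k S p * ((N:ℚ)/2^k + c * permVec k π (xvec k T) p)
      = (N:ℚ)/2^k * xvec k S p + c * (xvec k S p * permVec k π (xvec k T) p)
    from fun p => by ring] at h4
  rw [Finset.sum_add_distrib, ← Finset.mul_sum, ← Finset.mul_sum,
    sum_xvec_ne k hSne, mul_zero, zero_add] at h4
  exact (mul_eq_zero.mp h4).resolve_left (ne_of_gt hcpos)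
lemma permVec_one (k : ℕ) (f : DesignPoint k → ℚ) : permVec k 1 f = f := by
  funext p; simp [permVec]

lemma permVec_inv_cancel (k : ℕ) (g : Equiv.Perm (DesignPoint k)) (f : DesignPoint k → ℚ) :
    permVec k g (permVec k g⁻¹ f) = f := by
  rw [← permVec_mul, mul_inv_cancel, permVec_one]

lemma hRow {k N : ℕ} (hN : 1 ≤ N) {g : Equiv.Perm (DesignPoint k)}
    (hg : g ∈ GLP k N 2) (S : Finset (Fin k)) (hS : S.card ≤ 2)
    (T : Finset (Fin k)) (hT : 3 ≤ T.card) :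
    ip (permVec k g (xvec k S)) (xvec k T) = 0 := by
  classical
  have hTne : T ≠ ∅ := by intro h; rw [h] at hT; simp at hT
  by_cases hSne : S = ∅
  · subst hSne
    have h1 : permVec k g (xvec k ∅) = xvec k ∅ := by
      funext p; simp [permVec, xvec]
    rw [h1, ip]
    simp_rw [show ∀ p : DesignPoint k, xvec k ∅ p * xvec k T p = xvec k T p
      from fun p => by simp [xvec]]
    exact sum_xvec_ne k hTne
  · rw [← permVec_inv_cancel k g (xvec k T), ip_perm]
    exact rowPerp hN (glp_inv hg) T hT S hSne hS
/-- Classification of mean-zero ±1-valued degree ≤ 2 multilinear functions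
of three sign-variables, at the level of their six coefficients. -/
lemma classify (α β γ δ ζ η : ℚ)
    (E1 : (α + β + γ + δ + ζ + η)^2 = 1)
    (E2 : (α + β - γ + δ - ζ - η)^2 = 1)
    (E3 : (α - β + γ - δ + ζ - η)^2 = 1)
    (E4 : (α - β - γ - δ - ζ + η)^2 = 1)
    (E5 : (-α + β + γ - δ - ζ + η)^2 = 1)
    (E6 : (-α + β - γ - δ + ζ - η)^2 = 1)
    (E7 : (-α - β + γ + δ - ζ - η)^2 = 1)
    (E8 : (-α - β - γ + δ + ζ + η)^2 = 1) :
    (β = 0 ∧ γ = 0 ∧ δ = 0 ∧ ζ = 0 ∧ η = 0 ∧ α^2 = 1) ∨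
    (α = 0 ∧ γ = 0 ∧ δ = 0 ∧ ζ = 0 ∧ η = 0 ∧ β^2 = 1) ∨
    (α = 0 ∧ β = 0 ∧ δ = 0 ∧ ζ = 0 ∧ η = 0 ∧ γ^2 = 1) ∨
    (α = 0 ∧ β = 0 ∧ γ = 0 ∧ ζ = 0 ∧ η = 0 ∧ δ^2 = 1) ∨
    (α = 0 ∧ β = 0 ∧ γ = 0 ∧ δ = 0 ∧ η = 0 ∧ ζ^2 = 1) ∨
    (α = 0 ∧ β = 0 ∧ γ = 0 ∧ δ = 0 ∧ ζ = 0 ∧ η^2 = 1) ∨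
    (α = 0 ∧ η = 0 ∧ β^2 = 1/4 ∧ γ^2 = 1/4 ∧ δ^2 = 1/4 ∧ ζ^2 = 1/4) ∨
    (β = 0 ∧ ζ = 0 ∧ α^2 = 1/4 ∧ γ^2 = 1/4 ∧ δ^2 = 1/4 ∧ η^2 = 1/4) ∨
    (γ = 0 ∧ δ = 0 ∧ α^2 = 1/4 ∧ β^2 = 1/4 ∧ ζ^2 = 1/4 ∧ η^2 = 1/4) := by
  have n0 : α^2 + β^2 + γ^2 + δ^2 + ζ^2 + η^2 = 1 := by
    linear_combination (E1 + E2 + E3 + E4 + E5 + E6 + E7 + E8) / 8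
  have ha : β*δ + γ*ζ = 0 := by
    linear_combination (E1 + E2 + E3 + E4 - E5 - E6 - E7 - E8) / 16
  have hb : α*δ + γ*η = 0 := by
    linear_combination (E1 + E2 - E3 - E4 + E5 + E6 - E7 - E8) / 16
  have hc : α*ζ + β*η = 0 := by
    linear_combination (E1 - E2 + E3 - E4 + E5 - E6 + E7 - E8) / 16
  have hab : α*β + ζ*η = 0 := by
    linear_combination (E1 + E2 - E3 - E4 - E5 - E6 + E7 + E8) / 16
  have hac : α*γ + δ*η = 0 := by
    linear_combination (E1 - E2 + E3 - E4 - E5 + E6 - E7 + E8) / 16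
  have hbc : β*γ + δ*ζ = 0 := by
    linear_combination (E1 - E2 - E3 + E4 + E5 - E6 - E7 + E8) / 16
  have habc : α*η + β*ζ + γ*δ = 0 := by
    linear_combination (E1 - E2 - E3 + E4 - E5 + E6 + E7 - E8) / 16
  have hp12 : (α + η) * (β + ζ) = 0 := by linear_combination hab + hc
  have hp13 : (α + η) * (γ + δ) = 0 := by linear_combination hac + hb
  have hp23 : (β + ζ) * (γ + δ) = 0 := by linear_combination hbc + ha
  have hq12 : (α - η) * (β - ζ) = 0 := by linear_combination hab - hc
  have hq13 : (α - η) * (γ - δ) = 0 := by linear_combination hac - hb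
  have hq23 : (β - ζ) * (γ - δ) = 0 := by linear_combination hbc - ha
  have hpn : (α + η)^2 + (β + ζ)^2 + (γ + δ)^2 = 1 := by
    linear_combination n0 + 2 * habc
  have hqn : (α - η)^2 + (β - ζ)^2 + (γ - δ)^2 = 1 := by
    linear_combination n0 - 2 * habc
  have hp : ((α+η)^2 = 1 ∧ (β+ζ) = 0 ∧ (γ+δ) = 0)
      ∨ ((β+ζ)^2 = 1 ∧ (α+η) = 0 ∧ (γ+δ) = 0)
      ∨ ((γ+δ)^2 = 1 ∧ (α+η) = 0 ∧ (β+ζ) = 0) := by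
    by_cases h1 : α + η = 0
    · by_cases h2 : β + ζ = 0
      · right; right
        exact ⟨by linear_combination hpn - (α+η)*h1 - (β+ζ)*h2, h1, h2⟩
      · right; left
        have h3 : γ + δ = 0 := by
          rcases mul_eq_zero.mp hp23 with h | h
          · exact absurd h h2
          · exact h
        exact ⟨by linear_combination hpn - (α+η)*h1 - (γ+δ)*h3, h1, h3⟩
    · left
      have h2 : β + ζ = 0 := (mul_eq_zero.mp hp12).resolve_left h1
      have h3 : γ + δ = 0 := (mul_eq_zero.mp hp13).resolve_left h1
      exact ⟨by linear_combination hpn - (β+ζ)*h2 - (γ+δ)*h3, h2, h3⟩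
  have hq : ((α-η)^2 = 1 ∧ (β-ζ) = 0 ∧ (γ-δ) = 0)
      ∨ ((β-ζ)^2 = 1 ∧ (α-η) = 0 ∧ (γ-δ) = 0)
      ∨ ((γ-δ)^2 = 1 ∧ (α-η) = 0 ∧ (β-ζ) = 0) := by
    by_cases h1 : α - η = 0
    · by_cases h2 : β - ζ = 0
      · right; right
        exact ⟨by linear_combination hqn - (α-η)*h1 - (β-ζ)*h2, h1, h2⟩
      · right; left
        have h3 : γ - δ = 0 := by
          rcases mul_eq_zero.mp hq23 with h | h
          · exact absurd h h2
          · exact h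
        exact ⟨by linear_combination hqn - (α-η)*h1 - (γ-δ)*h3, h1, h3⟩
    · left
      have h2 : β - ζ = 0 := (mul_eq_zero.mp hq12).resolve_left h1
      have h3 : γ - δ = 0 := (mul_eq_zero.mp hq13).resolve_left h1
      exact ⟨by linear_combination hqn - (β-ζ)*h2 - (γ-δ)*h3, h2, h3⟩
  rcases hp with ⟨hP, hP2, hP3⟩ | ⟨hP, hP1, hP3⟩ | ⟨hP, hP1, hP2⟩ <;>
    rcases hq with ⟨hQ, hQ2, hQ3⟩ | ⟨hQ, hQ1, hQ3⟩ | ⟨hQ, hQ1, hQ2⟩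
  · -- (1,1): pure α or pure η
    have hβ : β = 0 := by linarith
    have hζ : ζ = 0 := by linarith
    have hγ : γ = 0 := by linarith
    have hδ : δ = 0 := by linarith
    have hαη : α * η = 0 := by linear_combination (hP - hQ)/4
    rcases mul_eq_zero.mp hαη with h | h
    · exact Or.inr (Or.inr (Or.inr (Or.inr (Or.inr (Or.inl
        ⟨h, hβ, hγ, hδ, hζ, by linear_combination hP - (2*η + α) * h⟩)))))
    · exact Or.inl ⟨hβ, hγ, hδ, hζ, h, by linear_combination hP - (2*α + η) * h⟩
  · -- (1,2): anchor c
    have hγ : γ = 0 := by linarith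
    have hδ : δ = 0 := by linarith
    refine Or.inr (Or.inr (Or.inr (Or.inr (Or.inr (Or.inr (Or.inr (Or.inr
      ⟨hγ, hδ, ?_, ?_, ?_, ?_⟩))))))) 
    · linear_combination hP/4 + ((3*α + η)/4) * hQ1
    · linear_combination hQ/4 + ((3*β - ζ)/4) * hP2
    · linear_combination hQ/4 + ((3*ζ - β)/4) * hP2
    · linear_combination hP/4 - ((α + 3*η)/4) * hQ1
  · -- (1,3): anchor b
    have hβ : β = 0 := by linarith
    have hζ : ζ = 0 := by linarith
    refine Or.inr (Or.inr (Or.inr (Or.inr (Or.inr (Or.inr (Or.inr (Or.inl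
      ⟨hβ, hζ, ?_, ?_, ?_, ?_⟩)))))))
    · linear_combination hP/4 + ((3*α + η)/4) * hQ1
    · linear_combination hQ/4 + ((3*γ - δ)/4) * hP3
    · linear_combination hQ/4 + ((3*δ - γ)/4) * hP3
    · linear_combination hP/4 - ((α + 3*η)/4) * hQ1
  · -- (2,1): anchor c
    have hγ : γ = 0 := by linarith
    have hδ : δ = 0 := by linarith
    refine Or.inr (Or.inr (Or.inr (Or.inr (Or.inr (Or.inr (Or.inr (Or.inr
      ⟨hγ, hδ, ?_, ?_, ?_, ?_⟩)))))))
    · linear_combination hQ/4 + ((3*α - η)/4) * hP1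
    · linear_combination hP/4 + ((3*β + ζ)/4) * hQ2
    · linear_combination hP/4 - ((β + 3*ζ)/4) * hQ2
    · linear_combination hQ/4 + ((3*η - α)/4) * hP1
  · -- (2,2): pure β or pure ζ
    have hα : α = 0 := by linarith
    have hη : η = 0 := by linarith
    have hγ : γ = 0 := by linarith
    have hδ : δ = 0 := by linarith
    have hβζ : β * ζ = 0 := by linear_combination (hP - hQ)/4
    rcases mul_eq_zero.mp hβζ with h | h
    · exact Or.inr (Or.inr (Or.inr (Or.inr (Or.inl
        ⟨hα, h, hγ, hδ, hη, by linear_combination hP - (2*ζ + β) * h⟩))))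
    · exact Or.inr (Or.inl ⟨hα, hγ, hδ, h, hη, by linear_combination hP - (2*β + ζ) * h⟩)
  · -- (2,3): anchor a
    have hα : α = 0 := by linarith
    have hη : η = 0 := by linarith
    refine Or.inr (Or.inr (Or.inr (Or.inr (Or.inr (Or.inr (Or.inl
      ⟨hα, hη, ?_, ?_, ?_, ?_⟩))))))
    · linear_combination hP/4 + ((3*β + ζ)/4) * hQ2
    · linear_combination hQ/4 + ((3*γ - δ)/4) * hP3
    · linear_combination hQ/4 + ((3*δ - γ)/4) * hP3
    · linear_combination hP/4 - ((3*ζ + β)/4) * hQ2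
  · -- (3,1): anchor b
    have hβ : β = 0 := by linarith
    have hζ : ζ = 0 := by linarith
    refine Or.inr (Or.inr (Or.inr (Or.inr (Or.inr (Or.inr (Or.inr (Or.inl
      ⟨hβ, hζ, ?_, ?_, ?_, ?_⟩)))))))
    · linear_combination hQ/4 + ((3*α - η)/4) * hP1
    · linear_combination hP/4 + ((3*γ + δ)/4) * hQ3
    · linear_combination hP/4 - ((3*δ + γ)/4) * hQ3
    · linear_combination hQ/4 + ((3*η - α)/4) * hP1
  · -- (3,2): anchor a
    have hα : α = 0 := by linarith
    have hη : η = 0 := by linarith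
    refine Or.inr (Or.inr (Or.inr (Or.inr (Or.inr (Or.inr (Or.inl
      ⟨hα, hη, ?_, ?_, ?_, ?_⟩))))))
    · linear_combination hQ/4 + ((3*β - ζ)/4) * hP2
    · linear_combination hP/4 + ((3*γ + δ)/4) * hQ3
    · linear_combination hP/4 - ((3*δ + γ)/4) * hQ3
    · linear_combination hQ/4 + ((3*ζ - β)/4) * hP2
  · -- (3,3): pure γ or pure δ
    have hα : α = 0 := by linarith
    have hη : η = 0 := by linarith
    have hβ : β = 0 := by linarith
    have hζ : ζ = 0 := by linarith
    have hγδ : γ * δ = 0 := by linear_combination (hP - hQ)/4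
    rcases mul_eq_zero.mp hγδ with h | h
    · exact Or.inr (Or.inr (Or.inr (Or.inl
        ⟨hα, hβ, h, hζ, hη, by linear_combination hP - (2*δ + γ) * h⟩)))
    · exact Or.inr (Or.inr (Or.inl
        ⟨hα, hβ, h, hζ, hη, by linear_combination hP - (2*γ + δ) * h⟩))
lemma xvec1 (k : ℕ) (a : Fin k) (p : DesignPoint k) :
    xvec k {a} p = ((p a : ℤ) : ℚ) := by
  rw [xvec, Finset.prod_singleton]

lemma xvec2 (k : ℕ) {a b : Fin k} (hab : a ≠ b) (p : DesignPoint k) :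
    xvec k {a, b} p = ((p a : ℤ) : ℚ) * ((p b : ℤ) : ℚ) := by
  rw [xvec, Finset.prod_pair hab]

lemma xvec3 (k : ℕ) {a b c : Fin k} (hab : a ≠ b) (hac : a ≠ c) (hbc : b ≠ c)
    (p : DesignPoint k) :
    xvec k {a, b, c} p = ((p a : ℤ) : ℚ) * ((p b : ℤ) : ℚ) * ((p c : ℤ) : ℚ) := by
  rw [xvec, Finset.prod_insert (by simp [hab, hac]), Finset.prod_pair hbc]
  ring

lemma xvec4 (k : ℕ) {a b c d : Fin k} (hab : a ≠ b) (hac : a ≠ c) (had : a ≠ d)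
    (hbc : b ≠ c) (hbd : b ≠ d) (hcd : c ≠ d) (p : DesignPoint k) :
    xvec k {a, b, c, d} p
      = ((p a : ℤ) : ℚ) * ((p b : ℤ) : ℚ) * ((p c : ℤ) : ℚ) * ((p d : ℤ) : ℚ) := by
  rw [xvec, Finset.prod_insert (by simp [hab, hac, had]),
    Finset.prod_insert (by simp [hbc, hbd]), Finset.prod_pair hcd]
  ring

lemma xvec5 (k : ℕ) {a b c d e : Fin k} (hab : a ≠ b) (hac : a ≠ c) (had : a ≠ d)
    (hae : a ≠ e) (hbc : b ≠ c) (hbd : b ≠ d) (hbe : b ≠ e) (hcd : c ≠ d)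
    (hce : c ≠ e) (hde : d ≠ e) (p : DesignPoint k) :
    xvec k {a, b, c, d, e} p
      = ((p a : ℤ) : ℚ) * ((p b : ℤ) : ℚ) * ((p c : ℤ) : ℚ) * ((p d : ℤ) : ℚ)
        * ((p e : ℤ) : ℚ) := by
  rw [xvec, Finset.prod_insert (by simp [hab, hac, had, hae]),
    Finset.prod_insert (by simp [hbc, hbd, hbe]),
    Finset.prod_insert (by simp [hcd, hce]), Finset.prod_pair hde]
  ring

lemma card3' {k : ℕ} {a b c : Fin k} (hab : a ≠ b) (hac : a ≠ c) (hbc : b ≠ c) :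
    ({a, b, c} : Finset (Fin k)).card = 3 := by
  rw [Finset.card_insert_of_notMem (by simp [hab, hac]), Finset.card_pair hbc]

lemma card4' {k : ℕ} {a b c d : Fin k} (hab : a ≠ b) (hac : a ≠ c) (had : a ≠ d)
    (hbc : b ≠ c) (hbd : b ≠ d) (hcd : c ≠ d) :
    ({a, b, c, d} : Finset (Fin k)).card = 4 := by
  rw [Finset.card_insert_of_notMem (by simp [hab, hac, had]), card3' hbc hbd hcd]

lemma card5' {k : ℕ} {a b c d e : Fin k} (hab : a ≠ b) (hac : a ≠ c) (had : a ≠ d)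
    (hae : a ≠ e) (hbc : b ≠ c) (hbd : b ≠ d) (hbe : b ≠ e) (hcd : c ≠ d)
    (hce : c ≠ e) (hde : d ≠ e) :
    ({a, b, c, d, e} : Finset (Fin k)).card = 5 := by
  rw [Finset.card_insert_of_notMem (by simp [hab, hac, had, hae]),
    card4' hbc hbd hbe hcd hce hde]

lemma ne_of_mem_notmem {k : ℕ} {s t : Finset (Fin k)} (x : Fin k)
    (hx : x ∈ s) (hx' : x ∉ t) : s ≠ t := fun h => hx' (h ▸ hx)

lemma half_of_sq {x : ℚ} (h : x^2 = 1/4) : x = 1/2 ∨ x = -(1/2) := by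
  have h1 : (x - 1/2) * (x + 1/2) = 0 := by linear_combination h
  rcases mul_eq_zero.mp h1 with h | h
  · left; linarith
  · right; linarith
end OAStuff

open OAStuff


/-- For `t = 2` and `g ∈ G^LP`: if some main effect `x_i` is sent
by `g` to the special form `±(1/2)x_{a,b} ± (1/2)x_{a,c} ± (1/2)x_b ± (1/2)x_c`,
then another main effect `x_j` with `j ≠ i` is sent to a form of the same kind. -/
theorem strength_two_special_form_forces_second
    (k N : ℕ) (hk : 2 ≤ k) (hN : 1 ≤ N)
    (g : Equiv.Perm (DesignPoint k)) (hg : g ∈ GLP k N 2)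
    (i : Fin k) (hi : specialForm k (permVec k g (xvec k {i}))) :
    ∃ j : Fin k, j ≠ i ∧ specialForm k (permVec k g (xvec k {j})) := by
  classical
  obtain ⟨a, b, c, hab, hac, hbc, e₁, e₂, e₃, e₄, he₁, he₂, he₃, he₄, hv⟩ := hi
  set K : ℚ := (2:ℚ)^k with hKdef
  have hK : K ≠ 0 := by positivity
  -- structured points
  set P : ℤˣ → ℤˣ → ℤˣ → DesignPoint k :=
    fun u₁ u₂ u₃ m => if m = a then u₁ else if m = b then u₂ else if m = c then u₃ else 1
    with hPdef
  have hPa : ∀ u₁ u₂ u₃, P u₁ u₂ u₃ a = u₁ := fun _ _ _ => if_pos rfl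
  have hPb : ∀ u₁ u₂ u₃, P u₁ u₂ u₃ b = u₂ := by
    intro u₁ u₂ u₃; simp [hPdef, Ne.symm hab]
  have hPc : ∀ u₁ u₂ u₃, P u₁ u₂ u₃ c = u₃ := by
    intro u₁ u₂ u₃; simp [hPdef, Ne.symm hac, Ne.symm hbc]
  -- value equations for the image of x_i
  have hval : ∀ u₁ u₂ u₃ : ℤˣ,
      (e₁ * (((u₁:ℤ):ℚ) * ((u₂:ℤ):ℚ)) + e₂ * (((u₁:ℤ):ℚ) * ((u₃:ℤ):ℚ))
        + e₃ * ((u₂:ℤ):ℚ) + e₄ * ((u₃:ℤ):ℚ))^2 = 1 := by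
    intro u₁ u₂ u₃
    have h0 : (permVec k g (xvec k {i}) (P u₁ u₂ u₃))^2 = 1 :=
      xvec_sq k {i} (g⁻¹ (P u₁ u₂ u₃))
    rw [hv] at h0
    simp only [xvec2 k hab, xvec2 k hac, xvec1 k b, xvec1 k c, hPa, hPb, hPc] at h0
    exact h0
  -- determinant of the sign pattern
  have hD : e₁ * e₄ - e₂ * e₃ ≠ 0 := by
    have A1 := hval 1 1 1
    have A2 := hval 1 1 (-1)
    have A3 := hval 1 (-1) 1
    have A4 := hval 1 (-1) (-1)
    have A5 := hval (-1) 1 1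
    have A6 := hval (-1) 1 (-1)
    have A7 := hval (-1) (-1) 1
    have A8 := hval (-1) (-1) (-1)
    simp only [Units.val_one, Units.val_neg, Int.cast_one, Int.cast_neg] at A1 A2 A3 A4 A5 A6 A7 A8
    rcases he₁ with h1 | h1 <;> rcases he₂ with h2 | h2 <;>
      rcases he₃ with h3 | h3 <;> rcases he₄ with h4 | h4 <;>
      rw [h1, h2, h3, h4] at A1 A2 A3 A4 A5 A6 A7 A8 ⊢ <;>
      revert A1 A2 A3 A4 A5 A6 A7 A8 <;> norm_num
  have he₁0 : e₁ ≠ 0 := by rcases he₁ with h | h <;> rw [h] <;> norm_num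
  have he₂0 : e₂ ≠ 0 := by rcases he₂ with h | h <;> rw [h] <;> norm_num
  have he₃0 : e₃ ≠ 0 := by rcases he₃ with h | h <;> rw [h] <;> norm_num
  have he₄0 : e₄ ≠ 0 := by rcases he₄ with h | h <;> rw [h] <;> norm_num
  -- per-j classification
  have key : ∀ j : Fin k, j ≠ i →
      specialForm k (permVec k g (xvec k {j})) ∨
      (∃ s : ℚ, s^2 = 1 ∧ ∀ p, permVec k g (xvec k {j}) p = s * xvec k {a} p) ∨
      (∃ s : ℚ, s^2 = 1 ∧ ∀ p, permVec k g (xvec k {j}) p = s * xvec k {b,c} p) := by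
    intro j hj
    set w : DesignPoint k → ℚ := permVec k g (xvec k {j}) with hwdef
    have hwsq : ∀ p, (w p)^2 = 1 := fun p => xvec_sq k {j} (g⁻¹ p)
    have hc3 : ∀ T : Finset (Fin k), 3 ≤ T.card → ip w (xvec k T) = 0 := by
      intro T hT
      exact hRow hN hg {j} (by simp) T hT
    have hcempty : ip w (xvec k ∅) = 0 := by
      rw [ip]
      simp_rw [show ∀ p : DesignPoint k, w p * xvec k ∅ p = w p
        from fun p => by simp [xvec]]
      rw [hwdef, sum_perm]
      exact sum_xvec_ne k (by simp)
    have hij : i ≠ j := Ne.symm hj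
    have F2 : ∀ U T₁ T₂ T₃ T₄ : Finset (Fin k), 3 ≤ U.card →
        (∀ p, xvec k {a,b} p * xvec k U p = xvec k T₁ p) →
        (∀ p, xvec k {a,c} p * xvec k U p = xvec k T₂ p) →
        (∀ p, xvec k {b} p * xvec k U p = xvec k T₃ p) →
        (∀ p, xvec k {c} p * xvec k U p = xvec k T₄ p) →
        e₁ * ip w (xvec k T₁) + e₂ * ip w (xvec k T₂)
          + e₃ * ip w (xvec k T₃) + e₄ * ip w (xvec k T₄) = 0 := by
      intro U T₁ T₂ T₃ T₄ hU h₁ h₂ h₃ h₄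
      have h0 : ip (permVec k g (xvec k {i,j})) (xvec k U) = 0 :=
        hRow hN hg {i,j} (le_of_eq (Finset.card_pair hij)) U hU
      have hexp : ∀ p : DesignPoint k,
          permVec k g (xvec k {i,j}) p * xvec k U p
            = e₁ * (w p * xvec k T₁ p) + e₂ * (w p * xvec k T₂ p)
              + e₃ * (w p * xvec k T₃ p) + e₄ * (w p * xvec k T₄ p) := by
        intro p
        have hsplit : permVec k g (xvec k {i,j}) p
            = permVec k g (xvec k {i}) p * w p := by
          show xvec k {i,j} (g⁻¹ p) = xvec k {i} (g⁻¹ p) * xvec k {j} (g⁻¹ p)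
          rw [xvec2 k hij, xvec1 k i, xvec1 k j]
        rw [hsplit, hv]
        simp only []
        rw [← h₁ p, ← h₂ p, ← h₃ p, ← h₄ p]
        ring
      rw [ip] at h0
      simp_rw [hexp] at h0
      rw [Finset.sum_add_distrib, Finset.sum_add_distrib, Finset.sum_add_distrib,
        ← Finset.mul_sum, ← Finset.mul_sum, ← Finset.mul_sum, ← Finset.mul_sum] at h0
      exact h0
    have R2 : e₁ * ip w (xvec k {c}) + e₂ * ip w (xvec k {b})
        + e₃ * ip w (xvec k {a,c}) + e₄ * ip w (xvec k {a,b}) = 0 := by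
      refine F2 {a,b,c} {c} {b} {a,c} {a,b}
        (le_of_eq (card3' hab hac hbc).symm) ?_ ?_ ?_ ?_
      · intro p
        rw [xvec2 k hab, xvec3 k hab hac hbc, xvec1 k c]
        linear_combination (((p b : ℤ):ℚ)^2 * ((p c : ℤ):ℚ)) * unit_cast_sq (p a)
          + ((p c : ℤ):ℚ) * unit_cast_sq (p b)
      · intro p
        rw [xvec2 k hac, xvec3 k hab hac hbc, xvec1 k b]
        linear_combination (((p c : ℤ):ℚ)^2 * ((p b : ℤ):ℚ)) * unit_cast_sq (p a)
          + ((p b : ℤ):ℚ) * unit_cast_sq (p c)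
      · intro p
        rw [xvec1 k b, xvec3 k hab hac hbc, xvec2 k hac]
        linear_combination (((p a : ℤ):ℚ) * ((p c : ℤ):ℚ)) * unit_cast_sq (p b)
      · intro p
        rw [xvec1 k c, xvec3 k hab hac hbc, xvec2 k hab]
        linear_combination (((p a : ℤ):ℚ) * ((p b : ℤ):ℚ)) * unit_cast_sq (p c)
    have hkill1 : ∀ u : Fin k, u ≠ a → u ≠ b → u ≠ c →
        ip w (xvec k {u}) = 0 ∧ ip w (xvec k {a,u}) = 0 := by
      intro u hua hub huc
      have hau : a ≠ u := Ne.symm hua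
      have hbu : b ≠ u := Ne.symm hub
      have hcu : c ≠ u := Ne.symm huc
      have h1 : e₁ * ip w (xvec k {u}) + e₂ * ip w (xvec k {b,c,u})
          + e₃ * ip w (xvec k {a,u}) + e₄ * ip w (xvec k {a,b,c,u}) = 0 := by
        refine F2 {a,b,u} {u} {b,c,u} {a,u} {a,b,c,u}
          (le_of_eq (card3' hab hau hbu).symm) ?_ ?_ ?_ ?_
        · intro p
          rw [xvec2 k hab, xvec3 k hab hau hbu, xvec1 k u]
          linear_combination (((p b : ℤ):ℚ)^2 * ((p u : ℤ):ℚ)) * unit_cast_sq (p a)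
            + ((p u : ℤ):ℚ) * unit_cast_sq (p b)
        · intro p
          rw [xvec2 k hac, xvec3 k hab hau hbu, xvec3 k hbc hbu hcu]
          linear_combination (((p b : ℤ):ℚ) * ((p c : ℤ):ℚ) * ((p u : ℤ):ℚ)) * unit_cast_sq (p a)
        · intro p
          rw [xvec1 k b, xvec3 k hab hau hbu, xvec2 k hau]
          linear_combination (((p a : ℤ):ℚ) * ((p u : ℤ):ℚ)) * unit_cast_sq (p b)
        · intro p
          rw [xvec1 k c, xvec3 k hab hau hbu, xvec4 k hab hac hau hbc hbu hcu]
          ring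
      have h2 : e₁ * ip w (xvec k {b,c,u}) + e₂ * ip w (xvec k {u})
          + e₃ * ip w (xvec k {a,b,c,u}) + e₄ * ip w (xvec k {a,u}) = 0 := by
        refine F2 {a,c,u} {b,c,u} {u} {a,b,c,u} {a,u}
          (le_of_eq (card3' hac hau hcu).symm) ?_ ?_ ?_ ?_
        · intro p
          rw [xvec2 k hab, xvec3 k hac hau hcu, xvec3 k hbc hbu hcu]
          linear_combination (((p b : ℤ):ℚ) * ((p c : ℤ):ℚ) * ((p u : ℤ):ℚ)) * unit_cast_sq (p a)
        · intro p
          rw [xvec2 k hac, xvec3 k hac hau hcu, xvec1 k u]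
          linear_combination (((p c : ℤ):ℚ)^2 * ((p u : ℤ):ℚ)) * unit_cast_sq (p a)
            + ((p u : ℤ):ℚ) * unit_cast_sq (p c)
        · intro p
          rw [xvec1 k b, xvec3 k hac hau hcu, xvec4 k hab hac hau hbc hbu hcu]
          ring
        · intro p
          rw [xvec1 k c, xvec3 k hac hau hcu, xvec2 k hau]
          linear_combination (((p a : ℤ):ℚ) * ((p u : ℤ):ℚ)) * unit_cast_sq (p c)
      rw [hc3 {b,c,u} (le_of_eq (card3' hbc hbu hcu).symm),
        hc3 {a,b,c,u} (by rw [card4' hab hac hau hbc hbu hcu]; norm_num)] at h1 h2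
      have h1' : e₁ * ip w (xvec k {u}) + e₃ * ip w (xvec k {a,u}) = 0 := by linarith
      have h2' : e₂ * ip w (xvec k {u}) + e₄ * ip w (xvec k {a,u}) = 0 := by linarith
      constructor
      · have h3 : (e₁*e₄ - e₂*e₃) * ip w (xvec k {u}) = 0 := by
          linear_combination e₄ * h1' - e₃ * h2'
        exact (mul_eq_zero.mp h3).resolve_left hD
      · have h3 : (e₁*e₄ - e₂*e₃) * ip w (xvec k {a,u}) = 0 := by
          linear_combination e₁ * h2' - e₂ * h1'
        exact (mul_eq_zero.mp h3).resolve_left hD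
    have hkill2 : ∀ u : Fin k, u ≠ a → u ≠ b → u ≠ c →
        ip w (xvec k {b,u}) = 0 ∧ ip w (xvec k {c,u}) = 0 := by
      intro u hua hub huc
      have hau : a ≠ u := Ne.symm hua
      have hbu : b ≠ u := Ne.symm hub
      have hcu : c ≠ u := Ne.symm huc
      have h1 : e₁ * ip w (xvec k {a,c,u}) + e₂ * ip w (xvec k {a,b,u})
          + e₃ * ip w (xvec k {c,u}) + e₄ * ip w (xvec k {b,u}) = 0 := by
        refine F2 {b,c,u} {a,c,u} {a,b,u} {c,u} {b,u}
          (le_of_eq (card3' hbc hbu hcu).symm) ?_ ?_ ?_ ?_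
        · intro p
          rw [xvec2 k hab, xvec3 k hbc hbu hcu, xvec3 k hac hau hcu]
          linear_combination (((p a : ℤ):ℚ) * ((p c : ℤ):ℚ) * ((p u : ℤ):ℚ)) * unit_cast_sq (p b)
        · intro p
          rw [xvec2 k hac, xvec3 k hbc hbu hcu, xvec3 k hab hau hbu]
          linear_combination (((p a : ℤ):ℚ) * ((p b : ℤ):ℚ) * ((p u : ℤ):ℚ)) * unit_cast_sq (p c)
        · intro p
          rw [xvec1 k b, xvec3 k hbc hbu hcu, xvec2 k hcu]
          linear_combination (((p c : ℤ):ℚ) * ((p u : ℤ):ℚ)) * unit_cast_sq (p b)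
        · intro p
          rw [xvec1 k c, xvec3 k hbc hbu hcu, xvec2 k hbu]
          linear_combination (((p b : ℤ):ℚ) * ((p u : ℤ):ℚ)) * unit_cast_sq (p c)
      have h2 : e₁ * ip w (xvec k {c,u}) + e₂ * ip w (xvec k {b,u})
          + e₃ * ip w (xvec k {a,c,u}) + e₄ * ip w (xvec k {a,b,u}) = 0 := by
        refine F2 {a,b,c,u} {c,u} {b,u} {a,c,u} {a,b,u}
          (by rw [card4' hab hac hau hbc hbu hcu]; norm_num) ?_ ?_ ?_ ?_
        · intro p
          rw [xvec2 k hab, xvec4 k hab hac hau hbc hbu hcu, xvec2 k hcu]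
          linear_combination (((p b : ℤ):ℚ)^2 * ((p c : ℤ):ℚ) * ((p u : ℤ):ℚ)) * unit_cast_sq (p a)
            + (((p c : ℤ):ℚ) * ((p u : ℤ):ℚ)) * unit_cast_sq (p b)
        · intro p
          rw [xvec2 k hac, xvec4 k hab hac hau hbc hbu hcu, xvec2 k hbu]
          linear_combination (((p c : ℤ):ℚ)^2 * ((p b : ℤ):ℚ) * ((p u : ℤ):ℚ)) * unit_cast_sq (p a)
            + (((p b : ℤ):ℚ) * ((p u : ℤ):ℚ)) * unit_cast_sq (p c)
        · intro p
          rw [xvec1 k b, xvec4 k hab hac hau hbc hbu hcu, xvec3 k hac hau hcu]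
          linear_combination (((p a : ℤ):ℚ) * ((p c : ℤ):ℚ) * ((p u : ℤ):ℚ)) * unit_cast_sq (p b)
        · intro p
          rw [xvec1 k c, xvec4 k hab hac hau hbc hbu hcu, xvec3 k hab hau hbu]
          linear_combination (((p a : ℤ):ℚ) * ((p b : ℤ):ℚ) * ((p u : ℤ):ℚ)) * unit_cast_sq (p c)
      rw [hc3 {a,c,u} (le_of_eq (card3' hac hau hcu).symm),
        hc3 {a,b,u} (le_of_eq (card3' hab hau hbu).symm)] at h1 h2
      have h1' : e₃ * ip w (xvec k {c,u}) + e₄ * ip w (xvec k {b,u}) = 0 := by linarith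
      have h2' : e₁ * ip w (xvec k {c,u}) + e₂ * ip w (xvec k {b,u}) = 0 := by linarith
      constructor
      · have h3 : (e₁*e₄ - e₂*e₃) * ip w (xvec k {b,u}) = 0 := by
          linear_combination e₁ * h1' - e₃ * h2'
        exact (mul_eq_zero.mp h3).resolve_left hD
      · have h3 : (e₁*e₄ - e₂*e₃) * ip w (xvec k {c,u}) = 0 := by
          linear_combination e₄ * h2' - e₂ * h1'
        exact (mul_eq_zero.mp h3).resolve_left hD
    have hkill3 : ∀ u u' : Fin k, u ≠ a → u ≠ b → u ≠ c → u' ≠ a → u' ≠ b → u' ≠ c →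
        u ≠ u' → ip w (xvec k {u,u'}) = 0 := by
      intro u u' hua hub huc hu'a hu'b hu'c huu'
      have hau : a ≠ u := Ne.symm hua
      have hbu : b ≠ u := Ne.symm hub
      have hcu : c ≠ u := Ne.symm huc
      have hau' : a ≠ u' := Ne.symm hu'a
      have hbu' : b ≠ u' := Ne.symm hu'b
      have hcu' : c ≠ u' := Ne.symm hu'c
      have h1 : e₁ * ip w (xvec k {a,u,u'}) + e₂ * ip w (xvec k {a,b,c,u,u'})
          + e₃ * ip w (xvec k {u,u'}) + e₄ * ip w (xvec k {b,c,u,u'}) = 0 := by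
        refine F2 {b,u,u'} {a,u,u'} {a,b,c,u,u'} {u,u'} {b,c,u,u'}
          (le_of_eq (card3' hbu hbu' huu').symm) ?_ ?_ ?_ ?_
        · intro p
          rw [xvec2 k hab, xvec3 k hbu hbu' huu', xvec3 k hau hau' huu']
          linear_combination (((p a : ℤ):ℚ) * ((p u : ℤ):ℚ) * ((p u' : ℤ):ℚ)) * unit_cast_sq (p b)
        · intro p
          rw [xvec2 k hac, xvec3 k hbu hbu' huu',
            xvec5 k hab hac hau hau' hbc hbu hbu' hcu hcu' huu']
          ring
        · intro p
          rw [xvec1 k b, xvec3 k hbu hbu' huu', xvec2 k huu']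
          linear_combination (((p u : ℤ):ℚ) * ((p u' : ℤ):ℚ)) * unit_cast_sq (p b)
        · intro p
          rw [xvec1 k c, xvec3 k hbu hbu' huu', xvec4 k hbc hbu hbu' hcu hcu' huu']
          ring
      rw [hc3 {a,u,u'} (le_of_eq (card3' hau hau' huu').symm),
        hc3 {a,b,c,u,u'} (by rw [card5' hab hac hau hau' hbc hbu hbu' hcu hcu' huu']; norm_num),
        hc3 {b,c,u,u'} (by rw [card4' hbc hbu hbu' hcu hcu' huu']; norm_num)] at h1
      have h1' : e₃ * ip w (xvec k {u,u'}) = 0 := by linarith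
      exact (mul_eq_zero.mp h1').resolve_left he₃0
    -- inequalities between the six index sets
    have nab : ({a} : Finset (Fin k)) ≠ {b} := fun h => hab (Finset.singleton_injective h)
    have nac : ({a} : Finset (Fin k)) ≠ {c} := fun h => hac (Finset.singleton_injective h)
    have nbc : ({b} : Finset (Fin k)) ≠ {c} := fun h => hbc (Finset.singleton_injective h)
    have nsp : ∀ (x y z : Fin k), y ≠ z → ({x} : Finset (Fin k)) ≠ {y,z} := by
      intro x y z hyz h
      have := congrArg Finset.card h
      rw [Finset.card_singleton, Finset.card_pair hyz] at this
      omega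
    have npp1 : ({a,b} : Finset (Fin k)) ≠ {a,c} :=
      ne_of_mem_notmem b (by simp) (by simp [Ne.symm hab, hbc])
    have npp2 : ({a,b} : Finset (Fin k)) ≠ {b,c} :=
      ne_of_mem_notmem a (by simp) (by simp [hab, hac])
    have npp3 : ({a,c} : Finset (Fin k)) ≠ {b,c} :=
      ne_of_mem_notmem a (by simp) (by simp [hab, hac])
    -- all other coefficients vanish
    have hvanish : ∀ T : Finset (Fin k),
        T ∉ ({{a},{b},{c},{a,b},{a,c},{b,c}} : Finset (Finset (Fin k))) →
        ip w (xvec k T) = 0 := by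
      intro T hT
      rcases (show T.card = 0 ∨ T.card = 1 ∨ T.card = 2 ∨ 3 ≤ T.card by omega)
        with h | h | h | h
      · rw [Finset.card_eq_zero.mp h]; exact hcempty
      · obtain ⟨u, rfl⟩ := Finset.card_eq_one.mp h
        have hua : u ≠ a := fun h' => hT (by rw [h']; simp)
        have hub : u ≠ b := fun h' => hT (by rw [h']; simp)
        have huc : u ≠ c := fun h' => hT (by rw [h']; simp)
        exact (hkill1 u hua hub huc).1
      · obtain ⟨u, u', huu', rfl⟩ := Finset.card_eq_two.mp h
        by_cases hua : u = a
        · subst hua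
          by_cases hu'b : u' = b
          · exact absurd (by rw [hu'b]; simp) hT
          · by_cases hu'c : u' = c
            · exact absurd (by rw [hu'c]; simp) hT
            · exact (hkill1 u' (Ne.symm huu') hu'b hu'c).2
        · by_cases hub : u = b
          · subst hub
            by_cases hu'a : u' = a
            · exact absurd (by rw [hu'a, Finset.pair_comm u a]; simp) hT
            · by_cases hu'c : u' = c
              · exact absurd (by rw [hu'c]; simp) hT
              · exact (hkill2 u' hu'a (Ne.symm huu') hu'c).1
          · by_cases huc : u = c
            · subst huc
              by_cases hu'a : u' = a
              · exact absurd (by rw [hu'a, Finset.pair_comm u a]; simp) hT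
              · by_cases hu'b : u' = b
                · exact absurd (by rw [hu'b, Finset.pair_comm u b]; simp) hT
                · exact (hkill2 u' hu'a hu'b (Ne.symm huu')).2
            · by_cases hu'a : u' = a
              · subst hu'a
                rw [Finset.pair_comm]
                exact (hkill1 u hua hub huc).2
              · by_cases hu'b : u' = b
                · subst hu'b
                  rw [Finset.pair_comm]
                  exact (hkill2 u hua hub huc).1
                · by_cases hu'c : u' = c
                  · subst hu'c
                    rw [Finset.pair_comm]
                    exact (hkill2 u hua hub huc).2
                  · exact hkill3 u u' hua hub huc hu'a hu'b hu'c huu'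
      · exact hc3 T h
    -- reconstruction of w from its six possibly-nonzero coefficients
    have hrec : ∀ p : DesignPoint k, K * w p
        = ip w (xvec k {a}) * xvec k {a} p + ip w (xvec k {b}) * xvec k {b} p
          + ip w (xvec k {c}) * xvec k {c} p + ip w (xvec k {a,b}) * xvec k {a,b} p
          + ip w (xvec k {a,c}) * xvec k {a,c} p + ip w (xvec k {b,c}) * xvec k {b,c} p := by
      intro p
      rw [hKdef, ← expansion k w p]
      rw [← Finset.sum_subset
        (Finset.subset_univ ({{a},{b},{c},{a,b},{a,c},{b,c}} : Finset (Finset (Fin k))))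
        (fun T _ hT => by rw [hvanish T hT, zero_mul])]
      rw [Finset.sum_insert (by simp [nab, nac, nsp a a b hab, nsp a a c hac, nsp a b c hbc]),
        Finset.sum_insert (by simp [nbc, nsp b a b hab, nsp b a c hac, nsp b b c hbc]),
        Finset.sum_insert (by simp [nsp c a b hab, nsp c a c hac, nsp c b c hbc]),
        Finset.sum_insert (by simp [npp1, npp2]),
        Finset.sum_insert (by simp [npp3]),
        Finset.sum_singleton]
      ring
    -- normalized coefficients
    set α : ℚ := ip w (xvec k {a}) / K with hαdef
    set β : ℚ := ip w (xvec k {b}) / K with hβdef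
    set γ : ℚ := ip w (xvec k {c}) / K with hγdef
    set δ : ℚ := ip w (xvec k {a,b}) / K with hδdef
    set ζ : ℚ := ip w (xvec k {a,c}) / K with hζdef
    set η : ℚ := ip w (xvec k {b,c}) / K with hηdef
    have hca : ip w (xvec k {a}) = K * α := by rw [hαdef]; field_simp
    have hcb : ip w (xvec k {b}) = K * β := by rw [hβdef]; field_simp
    have hcc : ip w (xvec k {c}) = K * γ := by rw [hγdef]; field_simp
    have hcab : ip w (xvec k {a,b}) = K * δ := by rw [hδdef]; field_simp
    have hcac : ip w (xvec k {a,c}) = K * ζ := by rw [hζdef]; field_simp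
    have hcbc : ip w (xvec k {b,c}) = K * η := by rw [hηdef]; field_simp
    have hrecn : ∀ p : DesignPoint k, w p
        = α * xvec k {a} p + β * xvec k {b} p + γ * xvec k {c} p
          + δ * xvec k {a,b} p + ζ * xvec k {a,c} p + η * xvec k {b,c} p := by
      intro p
      refine mul_left_cancel₀ hK ?_
      rw [hrec p, hca, hcb, hcc, hcab, hcac, hcbc]
      ring
    -- the eight value equations
    have hwpt : ∀ u₁ u₂ u₃ : ℤˣ,
        (α * ((u₁:ℤ):ℚ) + β * ((u₂:ℤ):ℚ) + γ * ((u₃:ℤ):ℚ)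
          + δ * (((u₁:ℤ):ℚ) * ((u₂:ℤ):ℚ)) + ζ * (((u₁:ℤ):ℚ) * ((u₃:ℤ):ℚ))
          + η * (((u₂:ℤ):ℚ) * ((u₃:ℤ):ℚ)))^2 = 1 := by
      intro u₁ u₂ u₃
      have h1 := hrecn (P u₁ u₂ u₃)
      rw [xvec1 k a, xvec1 k b, xvec1 k c, xvec2 k hab, xvec2 k hac, xvec2 k hbc,
        hPa, hPb, hPc] at h1
      rw [← h1]
      exact hwsq (P u₁ u₂ u₃)
    have A1 := hwpt 1 1 1
    have A2 := hwpt 1 1 (-1)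
    have A3 := hwpt 1 (-1) 1
    have A4 := hwpt 1 (-1) (-1)
    have A5 := hwpt (-1) 1 1
    have A6 := hwpt (-1) 1 (-1)
    have A7 := hwpt (-1) (-1) 1
    have A8 := hwpt (-1) (-1) (-1)
    simp only [Units.val_one, Units.val_neg, Int.cast_one,
      Int.cast_neg] at A1 A2 A3 A4 A5 A6 A7 A8
    have hcl := classify α β γ δ ζ η
      (by linear_combination A1) (by linear_combination A2)
      (by linear_combination A3) (by linear_combination A4)
      (by linear_combination A5) (by linear_combination A6)
      (by linear_combination A7) (by linear_combination A8)
    -- dispatch the nine cases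
    rcases hcl with ⟨h1,h2,h3,h4,h5,h6⟩ | ⟨h1,h2,h3,h4,h5,h6⟩ | ⟨h1,h2,h3,h4,h5,h6⟩ |
      ⟨h1,h2,h3,h4,h5,h6⟩ | ⟨h1,h2,h3,h4,h5,h6⟩ | ⟨h1,h2,h3,h4,h5,h6⟩ |
      ⟨h1,h2,h3,h4,h5,h6⟩ | ⟨h1,h2,h3,h4,h5,h6⟩ | ⟨h1,h2,h3,h4,h5,h6⟩
    · -- pure α
      refine Or.inr (Or.inl ⟨α, h6, fun p => ?_⟩)
      rw [hrecn p, h1, h2, h3, h4, h5]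
      ring
    · -- pure β : contradiction with R2
      exfalso
      rw [hcb, hcc, hcab, hcac, h2, h3, h4] at R2
      have hβ0 : β = 0 := by
        have h7 : (e₂ * K) * β = 0 := by linear_combination R2
        have h8 : e₂ * K ≠ 0 := mul_ne_zero he₂0 hK
        exact (mul_eq_zero.mp h7).resolve_left h8
      rw [hβ0] at h6
      norm_num at h6
    · -- pure γ : contradiction with R2
      exfalso
      rw [hcb, hcc, hcab, hcac, h2, h3, h4] at R2
      have hγ0 : γ = 0 := by
        have h7 : (e₁ * K) * γ = 0 := by linear_combination R2
        exact (mul_eq_zero.mp h7).resolve_left (mul_ne_zero he₁0 hK)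
      rw [hγ0] at h6
      norm_num at h6
    · -- pure δ : contradiction with R2
      exfalso
      rw [hcb, hcc, hcab, hcac, h2, h3, h4] at R2
      have hδ0 : δ = 0 := by
        have h7 : (e₄ * K) * δ = 0 := by linear_combination R2
        exact (mul_eq_zero.mp h7).resolve_left (mul_ne_zero he₄0 hK)
      rw [hδ0] at h6
      norm_num at h6
    · -- pure ζ : contradiction with R2
      exfalso
      rw [hcb, hcc, hcab, hcac, h2, h3, h4] at R2
      have hζ0 : ζ = 0 := by
        have h7 : (e₃ * K) * ζ = 0 := by linear_combination R2
        exact (mul_eq_zero.mp h7).resolve_left (mul_ne_zero he₃0 hK)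
      rw [hζ0] at h6
      norm_num at h6
    · -- pure η
      refine Or.inr (Or.inr ⟨η, h6, fun p => ?_⟩)
      rw [hrecn p, h1, h2, h3, h4, h5]
      ring
    · -- special, anchored at a
      refine Or.inl ⟨a, b, c, hab, hac, hbc, δ, ζ, β, γ,
        half_of_sq h5, half_of_sq h6, half_of_sq h3, half_of_sq h4, ?_⟩
      funext p
      show w p = _
      rw [hrecn p, h1, h2]
      ring
    · -- special, anchored at b
      refine Or.inl ⟨b, a, c, Ne.symm hab, hbc, hac, δ, η, α, γ,
        half_of_sq h5, half_of_sq h6, half_of_sq h3, half_of_sq h4, ?_⟩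
      funext p
      show w p = _
      rw [Finset.pair_comm b a]
      rw [hrecn p, h1, h2]
      ring
    · -- special, anchored at c
      refine Or.inl ⟨c, a, b, Ne.symm hac, Ne.symm hbc, hab, ζ, η, α, β,
        half_of_sq h5, half_of_sq h6, half_of_sq h3, half_of_sq h4, ?_⟩
      funext p
      show w p = _
      rw [Finset.pair_comm c a, Finset.pair_comm c b]
      rw [hrecn p, h1, h2]
      ring
  -- choose two indices different from i
  obtain ⟨j₁, j₂, h12, h1i, h2i⟩ : ∃ j₁ j₂ : Fin k, j₁ ≠ j₂ ∧ j₁ ≠ i ∧ j₂ ≠ i := by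
    by_cases h1 : i = a
    · exact ⟨b, c, hbc, fun h => hab (h.trans h1).symm, fun h => hac (h.trans h1).symm⟩
    · by_cases h2 : i = b
      · exact ⟨a, c, hac, fun h => h1 h.symm, fun h => hbc (h.trans h2).symm⟩
      · exact ⟨a, b, hab, fun h => h1 h.symm, fun h => h2 h.symm⟩
  have hcast : ((2^k : ℕ) : ℚ) ≠ 0 :=
    ne_of_gt (by exact_mod_cast pow_pos (by norm_num : (0:ℕ) < 2) k)
  rcases key j₁ h1i with hs | ⟨s₁, hs₁, hw₁⟩ | ⟨s₁, hs₁, hw₁⟩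
  · exact ⟨j₁, h1i, hs⟩
  · rcases key j₂ h2i with hs | ⟨s₂, hs₂, hw₂⟩ | ⟨s₂, hs₂, hw₂⟩
    · exact ⟨j₂, h2i, hs⟩
    · -- both of type ±x_a : contradicts orthogonality
      exfalso
      have horth : ip (permVec k g (xvec k {j₁})) (permVec k g (xvec k {j₂})) = 0 := by
        rw [ip_perm]
        exact ip_xvec k {j₁} {j₂} (fun h => h12 (Finset.singleton_injective h))
      rw [ip] at horth
      simp_rw [show ∀ p : DesignPoint k,
          permVec k g (xvec k {j₁}) p * permVec k g (xvec k {j₂}) p = s₁ * s₂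
        from fun p => by
          rw [hw₁ p, hw₂ p]
          linear_combination (s₁*s₂) * xvec_mul_self k {a} p] at horth
      rw [Finset.sum_const, Finset.card_univ, card_dp, nsmul_eq_mul] at horth
      have hss : s₁ * s₂ = 0 := (mul_eq_zero.mp horth).resolve_left hcast
      have hss2 : (s₁ * s₂)^2 = 1 := by rw [mul_pow, hs₁, hs₂]; norm_num
      rw [hss] at hss2
      norm_num at hss2
    · -- x_a and x_{bc} : contradicts the product being in the row space
      exfalso
      have h0 : ip (permVec k g (xvec k {j₁,j₂})) (xvec k {a,b,c}) = 0 :=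
        hRow hN hg {j₁,j₂} (le_of_eq (Finset.card_pair h12)) {a,b,c}
          (le_of_eq (card3' hab hac hbc).symm)
      rw [ip] at h0
      simp_rw [show ∀ p : DesignPoint k,
          permVec k g (xvec k {j₁,j₂}) p * xvec k {a,b,c} p = s₁ * s₂
        from fun p => by
          have hsplit : permVec k g (xvec k {j₁,j₂}) p
              = permVec k g (xvec k {j₁}) p * permVec k g (xvec k {j₂}) p := by
            show xvec k {j₁,j₂} (g⁻¹ p) = xvec k {j₁} (g⁻¹ p) * xvec k {j₂} (g⁻¹ p)
            rw [xvec2 k h12, xvec1 k j₁, xvec1 k j₂]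
          rw [hsplit, hw₁ p, hw₂ p, xvec1 k a, xvec2 k hbc, xvec3 k hab hac hbc]
          linear_combination (s₁*s₂*(((p b : ℤ):ℚ)^2*((p c : ℤ):ℚ)^2)) * unit_cast_sq (p a)
            + (s₁*s₂*((p c : ℤ):ℚ)^2) * unit_cast_sq (p b)
            + (s₁*s₂) * unit_cast_sq (p c)] at h0
      rw [Finset.sum_const, Finset.card_univ, card_dp, nsmul_eq_mul] at h0
      have hss : s₁ * s₂ = 0 := (mul_eq_zero.mp h0).resolve_left hcast
      have hss2 : (s₁ * s₂)^2 = 1 := by rw [mul_pow, hs₁, hs₂]; norm_num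
      rw [hss] at hss2
      norm_num at hss2
  · rcases key j₂ h2i with hs | ⟨s₂, hs₂, hw₂⟩ | ⟨s₂, hs₂, hw₂⟩
    · exact ⟨j₂, h2i, hs⟩
    · -- x_{bc} and x_a
      exfalso
      have h0 : ip (permVec k g (xvec k {j₁,j₂})) (xvec k {a,b,c}) = 0 :=
        hRow hN hg {j₁,j₂} (le_of_eq (Finset.card_pair h12)) {a,b,c}
          (le_of_eq (card3' hab hac hbc).symm)
      rw [ip] at h0
      simp_rw [show ∀ p : DesignPoint k,
          permVec k g (xvec k {j₁,j₂}) p * xvec k {a,b,c} p = s₁ * s₂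
        from fun p => by
          have hsplit : permVec k g (xvec k {j₁,j₂}) p
              = permVec k g (xvec k {j₁}) p * permVec k g (xvec k {j₂}) p := by
            show xvec k {j₁,j₂} (g⁻¹ p) = xvec k {j₁} (g⁻¹ p) * xvec k {j₂} (g⁻¹ p)
            rw [xvec2 k h12, xvec1 k j₁, xvec1 k j₂]
          rw [hsplit, hw₁ p, hw₂ p, xvec1 k a, xvec2 k hbc, xvec3 k hab hac hbc]
          linear_combination (s₁*s₂*(((p b : ℤ):ℚ)^2*((p c : ℤ):ℚ)^2)) * unit_cast_sq (p a)
            + (s₁*s₂*((p c : ℤ):ℚ)^2) * unit_cast_sq (p b)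
            + (s₁*s₂) * unit_cast_sq (p c)] at h0
      rw [Finset.sum_const, Finset.card_univ, card_dp, nsmul_eq_mul] at h0
      have hss : s₁ * s₂ = 0 := (mul_eq_zero.mp h0).resolve_left hcast
      have hss2 : (s₁ * s₂)^2 = 1 := by rw [mul_pow, hs₁, hs₂]; norm_num
      rw [hss] at hss2
      norm_num at hss2
    · -- both of type ±x_{bc}
      exfalso
      have horth : ip (permVec k g (xvec k {j₁})) (permVec k g (xvec k {j₂})) = 0 := by
        rw [ip_perm]
        exact ip_xvec k {j₁} {j₂} (fun h => h12 (Finset.singleton_injective h))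
      rw [ip] at horth
      simp_rw [show ∀ p : DesignPoint k,
          permVec k g (xvec k {j₁}) p * permVec k g (xvec k {j₂}) p = s₁ * s₂
        from fun p => by
          rw [hw₁ p, hw₂ p]
          linear_combination (s₁*s₂) * xvec_mul_self k {b,c} p] at horth
      rw [Finset.sum_const, Finset.card_univ, card_dp, nsmul_eq_mul] at horth
      have hss : s₁ * s₂ = 0 := (mul_eq_zero.mp horth).resolve_left hcast
      have hss2 : (s₁ * s₂)^2 = 1 := by rw [mul_pow, hs₁, hs₂]; norm_num
      rw [hss] at hss2
      norm_num at hss2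
end

section
/- Let t be even with 2 ≤ t ≤ k. Then each permutation ρ_i of P (defined by ρ_i(p)_i = p_i and ρ_i(p)_j = p_i·p_j for j ≠ i) belongs to G^LP, as does every sign-change permutation p ↦ (ε_1 p_1, …, ε_k p_k) for ε ∈ {−1,1}^k; consequently G^LP contains a subgroup isomorphic to the semidirect product S_2^k ⋊ S_{k+1}, of order 2^k·(k+1)!, generated by the sign-change permutations (a normal subgroup isomorphic to S_2^k) together with R = ⟨ρ_1, …, ρ_k⟩ ≅ S_{k+1}. -/
/-- The underlying function of `ρ_i : P → P`: it fixes the `i`-th coordinate and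
sends the `j`-th coordinate to `p_i * p_j` for `j ≠ i`. -/
def rhoFun (k : ℕ) (i : Fin k) (p : DesignPoint k) : DesignPoint k :=
  fun j => if j = i then p i else p i * p j

lemma rhoFun_involutive (k : ℕ) (i : Fin k) : Function.Involutive (rhoFun k i) := by
  intro p
  funext j
  by_cases h : j = i <;>
    simp [rhoFun, h, ← mul_assoc, Int.units_mul_self]

/-- The permutation `ρ_i` of `P = {-1,1}^k`, with `ρ_i(p)_i = p_i` and
`ρ_i(p)_j = p_i * p_j` for `j ≠ i`. -/
def rho (k : ℕ) (i : Fin k) : Equiv.Perm (DesignPoint k) :=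
  ⟨rhoFun k i, rhoFun k i, rhoFun_involutive k i, rhoFun_involutive k i⟩

/-- The sign-change permutation of `P = {-1,1}^k` given by `ε ∈ {-1,1}^k`:
`p ↦ (ε 1 * p 1, …, ε k * p k)`. -/
def signChange (k : ℕ) (ε : Fin k → ℤˣ) : Equiv.Perm (DesignPoint k) :=
  Equiv.piCongrRight fun i => Equiv.mulLeft (ε i)

-- ### auxiliary : units-valued characteristics

def xu (k : ℕ) (S : Finset (Fin k)) (p : DesignPoint k) : ℤˣ := ∏ i ∈ S, p i

lemma xvec_eq_xu (k : ℕ) (S : Finset (Fin k)) (p : DesignPoint k) :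
    xvec k S p = ((xu k S p : ℤ) : ℚ) := by
  simp [xvec, xu]

lemma units_pow_even (u : ℤˣ) {n : ℕ} (h : Even n) : u ^ n = 1 := by
  obtain ⟨m, rfl⟩ := h
  rw [← two_mul, pow_mul]
  simp [sq, Int.units_mul_self]

lemma units_pow_odd (u : ℤˣ) {n : ℕ} (h : Odd n) : u ^ n = u := by
  obtain ⟨m, rfl⟩ := h
  rw [pow_add, pow_one, pow_mul]
  simp [sq, Int.units_mul_self]

lemma mem_GLP_of (k N t : ℕ) (π : Equiv.Perm (DesignPoint k))
    (h : ∀ S : Finset (Fin k), S ≠ ∅ → S.card ≤ t →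
      ∃ (c : ℚ) (S' : Finset (Fin k)), S' ≠ ∅ ∧ S'.card ≤ t ∧
        ∀ p, xvec k S (π p) = c * xvec k S' p) :
    π ∈ GLP k N t := by
  rintro f ⟨h0, h1, h2⟩
  refine ⟨fun p => h0 _, ?_, ?_⟩
  · rw [← h1]
    exact Equiv.sum_comp π⁻¹ f
  · intro S hS hcard
    obtain ⟨c, S', hS', hc', heq⟩ := h S hS hcard
    have := Equiv.sum_comp π (fun p => xvec k S p * permVec k π f p)
    rw [← this]
    have : ∀ q, xvec k S (π q) * permVec k π f (π q) = c * (xvec k S' q * f q) := by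
      intro q
      rw [heq q]
      simp [permVec, mul_assoc]
    rw [Finset.sum_congr rfl fun q _ => this q, ← Finset.mul_sum, h2 S' hS' hc', mul_zero]

lemma xu_rho (k : ℕ) (i : Fin k) (S : Finset (Fin k)) (p : DesignPoint k) :
    xu k S (rhoFun k i p) = p i ^ S.card * xu k (S.erase i) p := by
  by_cases hi : i ∈ S
  · have h1 : xu k S (rhoFun k i p)
        = rhoFun k i p i * ∏ j ∈ S.erase i, rhoFun k i p j :=
      (Finset.mul_prod_erase S _ hi).symm
    have h2 : ∏ j ∈ S.erase i, rhoFun k i p j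
        = ∏ j ∈ S.erase i, (p i * p j) := by
      refine Finset.prod_congr rfl fun j hj => ?_
      have : j ≠ i := Finset.ne_of_mem_erase hj
      simp [rhoFun, this]
    have h3 : rhoFun k i p i = p i := by simp [rhoFun]
    rw [h1, h2, h3, Finset.prod_mul_distrib, Finset.prod_const]
    have hcard : (S.erase i).card = S.card - 1 := Finset.card_erase_of_mem hi
    have hS1 : 1 ≤ S.card := Finset.card_pos.mpr ⟨i, hi⟩
    rw [hcard, ← mul_assoc, ← pow_succ']
    congr 2
    omega
  · have herase : S.erase i = S := Finset.erase_eq_of_notMem hi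
    have h2 : xu k S (rhoFun k i p) = ∏ j ∈ S, (p i * p j) := by
      refine Finset.prod_congr rfl fun j hj => ?_
      have : j ≠ i := fun h => hi (h ▸ hj)
      simp [rhoFun, this]
    rw [herase, h2, Finset.prod_mul_distrib, Finset.prod_const]
    rfl

lemma rho_mem_GLP (k N t : ℕ) (ht2 : 2 ≤ t) (hteven : Even t) (i : Fin k) :
    rho k i ∈ GLP k N t := by
  refine mem_GLP_of k N t (rho k i) fun S hS hcard => ?_
  have hSne : S.Nonempty := Finset.nonempty_of_ne_empty hS
  by_cases hpar : Even S.card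
  · refine ⟨1, S.erase i, ?_, ?_, ?_⟩
    · by_cases hi : i ∈ S
      · have : 2 ≤ S.card := by
          rcases hpar with ⟨m, hm⟩
          have := Finset.card_pos.mpr hSne
          omega
        have : 0 < (S.erase i).card := by
          rw [Finset.card_erase_of_mem hi]; omega
        exact Finset.nonempty_iff_ne_empty.mp (Finset.card_pos.mp this)
      · rw [Finset.erase_eq_of_notMem hi]; exact hS
    · exact le_trans (Finset.card_erase_le) hcard
    · intro p
      rw [one_mul, xvec_eq_xu, xvec_eq_xu]
      show ((xu k S (rhoFun k i p) : ℤ) : ℚ) = _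
      rw [xu_rho, units_pow_even _ hpar, one_mul]
  · refine ⟨1, insert i S, ?_, ?_, ?_⟩
    · exact Finset.nonempty_iff_ne_empty.mp (Finset.insert_nonempty i S)
    · have : S.card < t := by
        rcases Nat.lt_or_ge S.card t with h | h
        · exact h
        · exfalso; have : S.card = t := le_antisymm hcard h
          exact hpar (this ▸ hteven)
      exact le_trans (Finset.card_insert_le i S) this
    · intro p
      rw [one_mul, xvec_eq_xu, xvec_eq_xu]
      show ((xu k S (rhoFun k i p) : ℤ) : ℚ) = _
      rw [xu_rho, units_pow_odd _ (Nat.odd_iff.mpr (Nat.not_even_iff.mp hpar))]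
      have key : p i * xu k (S.erase i) p = xu k (insert i S) p := by
        by_cases hi : i ∈ S
        · rw [Finset.insert_eq_self.mpr hi]
          exact Finset.mul_prod_erase S _ hi
        · rw [Finset.erase_eq_of_notMem hi]
          exact (Finset.prod_insert hi).symm
      rw [← key]

lemma signChange_apply (k : ℕ) (ε : Fin k → ℤˣ) (p : DesignPoint k) :
    signChange k ε p = ε * p := rfl

lemma signChange_mem_GLP (k N t : ℕ) (ε : Fin k → ℤˣ) :
    signChange k ε ∈ GLP k N t := by
  refine mem_GLP_of k N t (signChange k ε) fun S hS hcard => ?_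
  refine ⟨((xu k S ε : ℤ) : ℚ), S, hS, hcard, fun p => ?_⟩
  rw [xvec_eq_xu, xvec_eq_xu, signChange_apply]
  push_cast [xu]
  rw [← Finset.prod_mul_distrib]
  exact Finset.prod_congr rfl fun j _ => by simp [Pi.mul_apply]

-- ### sign-change monoid hom

def sc (k : ℕ) : (Fin k → ℤˣ) →* Equiv.Perm (DesignPoint k) where
  toFun := signChange k
  map_one' := Equiv.ext fun p => by
    simp [signChange_apply]
  map_mul' ε δ := Equiv.ext fun p => by
    simp only [Equiv.Perm.mul_apply, signChange_apply, mul_assoc]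

lemma sc_injective (k : ℕ) : Function.Injective (sc k) := by
  intro ε δ h
  have := congrArg (fun π : Equiv.Perm (DesignPoint k) => π 1) h
  simpa [sc, signChange_apply] using this

-- ### the S_{k+1} action

def extPt (k : ℕ) (p : DesignPoint k) : Fin (k + 1) → ℤˣ := Fin.snoc p 1

lemma extPt_castSucc (k : ℕ) (p : DesignPoint k) (j : Fin k) :
    extPt k p j.castSucc = p j := Fin.snoc_castSucc _ _ _

lemma extPt_last (k : ℕ) (p : DesignPoint k) :
    extPt k p (Fin.last k) = 1 := Fin.snoc_last _ _

lemma extPt_mul (k : ℕ) (p q : DesignPoint k) (m : Fin (k + 1)) :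
    extPt k (p * q) m = extPt k p m * extPt k q m := by
  induction m using Fin.lastCases with
  | last => simp [extPt_last]
  | cast j => simp [extPt_castSucc, Pi.mul_apply]

lemma extPt_one (k : ℕ) (m : Fin (k + 1)) : extPt k (1 : DesignPoint k) m = 1 := by
  induction m using Fin.lastCases with
  | last => simp [extPt_last]
  | cast j => simp [extPt_castSucc]

def PsiFun (k : ℕ) (σ : Equiv.Perm (Fin (k + 1))) (p : DesignPoint k) : DesignPoint k :=
  fun j => extPt k p (σ⁻¹ j.castSucc) * extPt k p (σ⁻¹ (Fin.last k))

lemma extPt_PsiFun (k : ℕ) (σ : Equiv.Perm (Fin (k + 1))) (p : DesignPoint k)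
    (m : Fin (k + 1)) :
    extPt k (PsiFun k σ p) m = extPt k p (σ⁻¹ m) * extPt k p (σ⁻¹ (Fin.last k)) := by
  induction m using Fin.lastCases with
  | last => rw [extPt_last, Int.units_mul_self]
  | cast j => rw [extPt_castSucc]; rfl

lemma PsiFun_one (k : ℕ) (p : DesignPoint k) : PsiFun k 1 p = p := by
  funext j
  simp [PsiFun, extPt_castSucc, extPt_last]

lemma PsiFun_mul (k : ℕ) (σ τ : Equiv.Perm (Fin (k + 1))) (p : DesignPoint k) :
    PsiFun k (σ * τ) p = PsiFun k σ (PsiFun k τ p) := by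
  funext j
  show extPt k p ((σ * τ)⁻¹ j.castSucc) * extPt k p ((σ * τ)⁻¹ (Fin.last k))
      = extPt k (PsiFun k τ p) (σ⁻¹ j.castSucc) * extPt k (PsiFun k τ p) (σ⁻¹ (Fin.last k))
  rw [extPt_PsiFun, extPt_PsiFun, mul_mul_mul_comm, Int.units_mul_self, mul_one,
    mul_inv_rev, Equiv.Perm.mul_apply, Equiv.Perm.mul_apply]

lemma PsiFun_leftinv (k : ℕ) (σ : Equiv.Perm (Fin (k + 1))) (p : DesignPoint k) :
    PsiFun k σ⁻¹ (PsiFun k σ p) = p := by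
  rw [← PsiFun_mul, inv_mul_cancel, PsiFun_one]

lemma PsiFun_rightinv (k : ℕ) (σ : Equiv.Perm (Fin (k + 1))) (p : DesignPoint k) :
    PsiFun k σ (PsiFun k σ⁻¹ p) = p := by
  rw [← PsiFun_mul, mul_inv_cancel, PsiFun_one]

def Psi (k : ℕ) : Equiv.Perm (Fin (k + 1)) →* Equiv.Perm (DesignPoint k) where
  toFun σ := ⟨PsiFun k σ, PsiFun k σ⁻¹, PsiFun_leftinv k σ, PsiFun_rightinv k σ⟩
  map_one' := Equiv.ext fun p => PsiFun_one k p
  map_mul' σ τ := Equiv.ext fun p => PsiFun_mul k σ τ p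

lemma Psi_apply (k : ℕ) (σ : Equiv.Perm (Fin (k + 1))) (p : DesignPoint k) :
    Psi k σ p = PsiFun k σ p := rfl

lemma PsiFun_mulPt (k : ℕ) (σ : Equiv.Perm (Fin (k + 1))) (p q : DesignPoint k) :
    PsiFun k σ (p * q) = PsiFun k σ p * PsiFun k σ q := by
  funext j
  simp only [PsiFun, extPt_mul, Pi.mul_apply]
  rw [mul_mul_mul_comm]

lemma PsiFun_onePt (k : ℕ) (σ : Equiv.Perm (Fin (k + 1))) :
    PsiFun k σ (1 : DesignPoint k) = 1 := by
  funext j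
  simp [PsiFun, extPt_one]

lemma Psi_swap (k : ℕ) (i : Fin k) :
    Psi k (Equiv.swap i.castSucc (Fin.last k)) = rho k i := by
  apply Equiv.ext
  intro p
  funext j
  show PsiFun k _ p j = rhoFun k i p j
  rw [PsiFun, Equiv.swap_inv]
  by_cases h : j = i
  · subst h
    rw [Equiv.swap_apply_left, Equiv.swap_apply_right, extPt_last, extPt_castSucc, one_mul]
    simp [rhoFun]
  · have h1 : j.castSucc ≠ i.castSucc := fun hc => h (Fin.castSucc_injective k hc)
    have h2 : j.castSucc ≠ Fin.last k := (Fin.castSucc_lt_last j).ne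
    rw [Equiv.swap_apply_of_ne_of_ne h1 h2, Equiv.swap_apply_right,
      extPt_castSucc, extPt_castSucc]
    simp [rhoFun, h, mul_comm]

def indPt (k : ℕ) (m : Fin k) : DesignPoint k := fun i => if i = m then -1 else 1

lemma extPt_indPt_neg (k : ℕ) (m : Fin k) (n : Fin (k + 1))
    (hn : extPt k (indPt k m) n = -1) : n = m.castSucc := by
  induction n using Fin.lastCases with
  | last => rw [extPt_last] at hn; exact absurd hn (by decide)
  | cast j =>
    rw [extPt_castSucc] at hn
    by_cases hj : j = m
    · rw [hj]
    · rw [indPt, if_neg hj] at hn; exact absurd hn (by decide)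

lemma extPt_indPt (k : ℕ) (m j : Fin k) :
    extPt k (indPt k m) j.castSucc = if j = m then -1 else 1 := by
  rw [extPt_castSucc]; rfl

lemma Psi_injective (k : ℕ) (hk : 2 ≤ k) : Function.Injective (Psi k) := by
  rw [injective_iff_map_eq_one]
  intro σ hσ
  have h : ∀ (p : DesignPoint k) (j : Fin k),
      extPt k p (σ⁻¹ j.castSucc) * extPt k p (σ⁻¹ (Fin.last k)) = p j := by
    intro p j
    have := congrArg (fun π : Equiv.Perm (DesignPoint k) => π p j) hσ
    simpa [Psi_apply, PsiFun] using this
  have hlast : σ⁻¹ (Fin.last k) = Fin.last k := by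
    by_contra hne
    obtain ⟨j₀, hj₀⟩ := Fin.exists_castSucc_eq.mpr hne
    haveI : Nontrivial (Fin k) := Fin.nontrivial_iff_two_le.mpr hk
    obtain ⟨j₁, hj₁⟩ := exists_ne j₀
    have e1 := h (indPt k j₁) j₁
    rw [← hj₀, extPt_indPt, if_neg (Ne.symm hj₁), mul_one] at e1
    have e1' : extPt k (indPt k j₁) (σ⁻¹ j₁.castSucc) = -1 := by
      rw [e1]; simp [indPt]
    have f1 : σ⁻¹ j₁.castSucc = j₁.castSucc := extPt_indPt_neg k _ _ e1'
    have e2 := h (indPt k j₀) j₁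
    rw [← hj₀, extPt_indPt, if_pos rfl] at e2
    have e2' : extPt k (indPt k j₀) (σ⁻¹ j₁.castSucc) = -1 := by
      have h3 : indPt k j₀ j₁ = 1 := by simp [indPt, hj₁]
      rw [h3] at e2
      have := congrArg (fun u => u * (-1 : ℤˣ)) e2
      simpa [mul_assoc] using this
    have f2 : σ⁻¹ j₁.castSucc = j₀.castSucc := extPt_indPt_neg k _ _ e2'
    rw [f1] at f2
    exact hj₁ (Fin.castSucc_injective k f2)
  have hfix : ∀ j : Fin k, σ⁻¹ j.castSucc = j.castSucc := by
    intro j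
    have e := h (indPt k j) j
    rw [hlast, extPt_last, mul_one] at e
    have e' : extPt k (indPt k j) (σ⁻¹ j.castSucc) = -1 := by
      rw [e]; simp [indPt]
    exact extPt_indPt_neg k _ _ e'
  have hinv : σ⁻¹ = 1 := by
    apply Equiv.ext
    intro n
    induction n using Fin.lastCases with
    | last => simpa using hlast
    | cast j => simpa using hfix j
  rw [← inv_inv σ, hinv, inv_one]

-- ### generation of S_{k+1} by star transpositions

lemma closure_swaps_top (k : ℕ) :
    Subgroup.closure (Set.range fun i : Fin k =>
      Equiv.swap i.castSucc (Fin.last k)) = ⊤ := by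
  rw [eq_top_iff, ← Equiv.Perm.closure_isSwap, Subgroup.closure_le]
  rintro σ ⟨a, b, hab, rfl⟩
  have hmem : ∀ c : Fin (k + 1), c ≠ Fin.last k →
      Equiv.swap c (Fin.last k) ∈ Subgroup.closure (Set.range fun i : Fin k =>
        Equiv.swap i.castSucc (Fin.last k)) := by
    intro c hc
    obtain ⟨i, rfl⟩ := Fin.exists_castSucc_eq.mpr hc
    exact Subgroup.subset_closure ⟨i, rfl⟩
  by_cases hb : b = Fin.last k
  · subst hb
    exact hmem a hab
  · by_cases ha : a = Fin.last k
    · subst ha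
      rw [Equiv.swap_comm]
      exact hmem b hb
    · have key : Equiv.swap (Fin.last k) a * Equiv.swap b (Fin.last k) *
          Equiv.swap (Fin.last k) a = Equiv.swap a b :=
        Equiv.swap_mul_swap_mul_swap hb (Ne.symm hab)
      rw [← key]
      have h1 : Equiv.swap (Fin.last k) a ∈ Subgroup.closure (Set.range fun i : Fin k =>
          Equiv.swap i.castSucc (Fin.last k)) := by
        rw [Equiv.swap_comm]; exact hmem a ha
      exact mul_mem (mul_mem h1 (hmem b hb)) h1

lemma Psi_range (k : ℕ) :
    (Psi k).range = Subgroup.closure (Set.range (rho k)) := by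
  rw [MonoidHom.range_eq_map, ← closure_swaps_top k, MonoidHom.map_closure]
  congr 1
  have h : (⇑(Psi k)) ∘ (fun i : Fin k => Equiv.swap i.castSucc (Fin.last k)) = rho k :=
    funext (Psi_swap k)
  rw [← Set.range_comp, h]

lemma sc_range (k : ℕ) :
    (sc k).range = Subgroup.closure (Set.range (signChange k)) := by
  have : Set.range (signChange k) = ((sc k).range : Set (Equiv.Perm (DesignPoint k))) := by
    rw [MonoidHom.coe_range]; rfl
  rw [this, Subgroup.closure_eq]

-- ### the semidirect product

def phiAct (k : ℕ) : Equiv.Perm (Fin (k + 1)) →* MulAut (DesignPoint k) where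
  toFun σ := { Psi k σ with map_mul' := PsiFun_mulPt k σ }
  map_one' := MulEquiv.ext fun p => PsiFun_one k p
  map_mul' σ τ := MulEquiv.ext fun p => PsiFun_mul k σ τ p

lemma compat (k : ℕ) : ∀ σ : Equiv.Perm (Fin (k + 1)),
    (sc k).comp (phiAct k σ).toMonoidHom =
      (MulAut.conj (Psi k σ)).toMonoidHom.comp (sc k) := by
  intro σ
  refine MonoidHom.ext fun ε => Equiv.ext fun p => ?_
  show signChange k (PsiFun k σ ε) p = (Psi k σ * sc k ε * (Psi k σ)⁻¹) p
  have h1 : ((Psi k σ)⁻¹ : Equiv.Perm (DesignPoint k)) p = PsiFun k σ⁻¹ p := by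
    rw [← map_inv]; rfl
  rw [Equiv.Perm.mul_apply, Equiv.Perm.mul_apply, h1, signChange_apply]
  show PsiFun k σ ε * p = PsiFun k σ (signChange k ε (PsiFun k σ⁻¹ p))
  rw [signChange_apply, PsiFun_mulPt, PsiFun_rightinv]

def chi (k : ℕ) : (DesignPoint k) ⋊[phiAct k] Equiv.Perm (Fin (k + 1)) →*
    Equiv.Perm (DesignPoint k) :=
  SemidirectProduct.lift (sc k) (Psi k) (compat k)

lemma chi_apply (k : ℕ) (x : (DesignPoint k) ⋊[phiAct k] Equiv.Perm (Fin (k + 1))) :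
    chi k x = sc k x.left * Psi k x.right := rfl

lemma chi_injective (k : ℕ) (hk : 2 ≤ k) : Function.Injective (chi k) := by
  rw [injective_iff_map_eq_one]
  intro x hx
  have h1 : (chi k x) (1 : DesignPoint k) = x.left := by
    rw [chi_apply, Equiv.Perm.mul_apply, Psi_apply, PsiFun_onePt]
    show signChange k x.left 1 = x.left
    rw [signChange_apply, mul_one]
  rw [hx] at h1
  have hleft : x.left = 1 := by
    rw [← h1]; rfl
  have hright : x.right = 1 := by
    apply Psi_injective k hk
    have : sc k x.left * Psi k x.right = 1 := hx
    rw [hleft, map_one, one_mul] at this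
    rw [this, map_one]
  cases x with
  | mk l r =>
    simp only at hleft hright
    rw [hleft, hright]
    rfl

lemma chi_range (k : ℕ) :
    (chi k).range = (sc k).range ⊔ (Psi k).range := by
  apply le_antisymm
  · rintro x ⟨y, rfl⟩
    rw [chi_apply]
    exact mul_mem (Subgroup.mem_sup_left ⟨y.left, rfl⟩)
      (Subgroup.mem_sup_right ⟨y.right, rfl⟩)
  · refine sup_le ?_ ?_
    · rintro x ⟨ε, rfl⟩
      exact ⟨SemidirectProduct.inl ε, SemidirectProduct.lift_inl _ _ _ ε⟩
    · rintro x ⟨σ, rfl⟩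
      exact ⟨SemidirectProduct.inr σ, SemidirectProduct.lift_inr _ _ _ σ⟩

lemma chi_range_eq_closure (k : ℕ) :
    (chi k).range = Subgroup.closure (Set.range (signChange k) ∪ Set.range (rho k)) := by
  rw [Subgroup.closure_union, chi_range, sc_range, Psi_range]

def sdEquivProd (k : ℕ) :
    ((DesignPoint k) ⋊[phiAct k] Equiv.Perm (Fin (k + 1))) ≃
      (DesignPoint k) × Equiv.Perm (Fin (k + 1)) where
  toFun x := (x.left, x.right)
  invFun p := ⟨p.1, p.2⟩
  left_inv x := rfl
  right_inv p := rfl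

lemma card_closure_union (k : ℕ) (hk : 2 ≤ k) :
    Nat.card (Subgroup.closure (Set.range (signChange k) ∪ Set.range (rho k))) =
      2 ^ k * Nat.factorial (k + 1) := by
  rw [← chi_range_eq_closure]
  have h1 : Nat.card (chi k).range =
      Nat.card ((DesignPoint k) ⋊[phiAct k] Equiv.Perm (Fin (k + 1))) :=
    Nat.card_congr (MonoidHom.ofInjective (chi_injective k hk)).toEquiv.symm
  rw [h1, Nat.card_congr (sdEquivProd k), Nat.card_prod]
  have h2 : Nat.card (DesignPoint k) = 2 ^ k := by
    rw [Nat.card_fun]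
    simp [Nat.card_eq_fintype_card, Fintype.card_units_int]
  have h3 : Nat.card (Equiv.Perm (Fin (k + 1))) = Nat.factorial (k + 1) := by
    rw [Nat.card_eq_fintype_card, Fintype.card_perm, Fintype.card_fin]
  rw [h2, h3]

-- ### conjugation and normality

lemma conj_sc (k : ℕ) (σ : Equiv.Perm (Fin (k + 1))) (δ : DesignPoint k) :
    Psi k σ * sc k δ * (Psi k σ)⁻¹ = sc k (phiAct k σ δ) := by
  have h := DFunLike.congr_fun (compat k σ) δ
  simp only [MonoidHom.comp_apply, MulEquiv.coe_toMonoidHom, MulAut.conj_apply] at h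
  exact h.symm

lemma range_normalized (k : ℕ) :
    ∀ g ∈ (chi k).range, ∀ h ∈ (sc k).range, g * h * g⁻¹ ∈ (sc k).range := by
  rintro g ⟨y, rfl⟩ h ⟨δ, rfl⟩
  rw [chi_apply]
  set a := sc k y.left
  set b := Psi k y.right
  have hab : a * b * sc k δ * (a * b)⁻¹ = a * (b * sc k δ * b⁻¹) * a⁻¹ := by
    group
  rw [mul_assoc a b, ← mul_assoc, hab, conj_sc]
  refine ⟨y.left * phiAct k y.right δ * y.left⁻¹, ?_⟩
  rw [map_mul, map_mul, map_inv]

-- ### the Perm (Fin 2) equivalence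

def u2equiv : ℤˣ ≃* Equiv.Perm (Fin 2) where
  toFun u := if u = 1 then 1 else Equiv.swap 0 1
  invFun π := if π = 1 then 1 else -1
  left_inv := by decide
  right_inv := by decide
  map_mul' := by decide

-- ### GLP closure properties

lemma one_mem_GLP (k N t : ℕ) : (1 : Equiv.Perm (DesignPoint k)) ∈ GLP k N t := by
  intro f hf
  have : permVec k 1 f = f := by
    funext p
    simp [permVec]
  rwa [this]

lemma mul_mem_GLP (k N t : ℕ) (π σ : Equiv.Perm (DesignPoint k))
    (hπ : π ∈ GLP k N t) (hσ : σ ∈ GLP k N t) : π * σ ∈ GLP k N t := by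
  intro f hf
  have : permVec k (π * σ) f = permVec k π (permVec k σ f) := by
    funext p
    simp [permVec, mul_inv_rev, Equiv.Perm.mul_apply]
  rw [this]
  exact hπ _ (hσ f hf)

lemma rho_inv (k : ℕ) (i : Fin k) : (rho k i)⁻¹ = rho k i := rfl

lemma U_inv_subset (k : ℕ) :
    (Set.range (signChange k) ∪ Set.range (rho k))⁻¹ ⊆
      Set.range (signChange k) ∪ Set.range (rho k) := by
  intro x hx
  rw [Set.mem_inv] at hx
  rcases hx with ⟨ε, hε⟩ | ⟨i, hi⟩
  · left
    refine ⟨ε⁻¹, ?_⟩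
    have : sc k ε⁻¹ = (sc k ε)⁻¹ := map_inv _ _
    show sc k ε⁻¹ = x
    rw [this]
    show ((sc k) ε)⁻¹ = x
    have hε' : sc k ε = x⁻¹ := hε
    rw [hε', inv_inv]
  · right
    refine ⟨i, ?_⟩
    rw [← inv_inv x, ← hi, rho_inv]

lemma closure_subset_GLP (k N t : ℕ) (ht2 : 2 ≤ t) (hteven : Even t) :
    ((Subgroup.closure (Set.range (signChange k) ∪ Set.range (rho k)) :
        Subgroup (Equiv.Perm (DesignPoint k))) : Set (Equiv.Perm (DesignPoint k)))
      ⊆ GLP k N t := by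
  intro g hg
  have hg' : g ∈ Subgroup.closure (Set.range (signChange k) ∪ Set.range (rho k)) := hg
  set U := Set.range (signChange k) ∪ Set.range (rho k) with hU
  have hm : g ∈ Submonoid.closure U := by
    have h2 : (Subgroup.closure U).toSubmonoid = Submonoid.closure (U ∪ U⁻¹) :=
      Subgroup.closure_toSubmonoid U
    have h3 : U ∪ U⁻¹ = U := Set.union_eq_self_of_subset_right (U_inv_subset k)
    rw [h3] at h2
    rw [← h2]
    exact hg'
  refine Submonoid.closure_induction ?_ ?_ ?_ hm
  · rintro x (⟨ε, rfl⟩ | ⟨i, rfl⟩)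
    · exact signChange_mem_GLP k N t ε
    · exact rho_mem_GLP k N t ht2 hteven i
  · exact one_mem_GLP k N t
  · intro x y _ _ hx hy
    exact mul_mem_GLP k N t x y hx hy

/-- For even strength `t` with `2 ≤ t ≤ k`, each `ρ_i` and each
sign-change permutation belongs to `G^LP`; consequently `G^LP` contains the
subgroup generated by the sign changes together with `R = ⟨ρ_1, …, ρ_k⟩`, which
has order `2^k · (k+1)!` and is the internal semidirect product of its normal
subgroup of sign changes (isomorphic to `S_2^k`) with `R ≅ S_{k+1}`. -/
theorem even_strength_semidirect_subgroup
    (k N t : ℕ) (hk : 2 ≤ k) (hN : 1 ≤ N) (ht2 : 2 ≤ t) (htk : t ≤ k)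
    (hteven : Even t) :
    (∀ i : Fin k, rho k i ∈ GLP k N t) ∧
    (∀ ε : Fin k → ℤˣ, signChange k ε ∈ GLP k N t) ∧
    ((Subgroup.closure (Set.range (signChange k) ∪ Set.range (rho k)) :
        Set (Equiv.Perm (DesignPoint k))) ⊆ GLP k N t) ∧
    Nat.card (Subgroup.closure (Set.range (signChange k) ∪ Set.range (rho k))) =
      2 ^ k * Nat.factorial (k + 1) ∧
    Subgroup.closure (Set.range (signChange k)) ⊔
        Subgroup.closure (Set.range (rho k)) =
      Subgroup.closure (Set.range (signChange k) ∪ Set.range (rho k)) ∧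
    ((Subgroup.closure (Set.range (signChange k))).subgroupOf
      (Subgroup.closure (Set.range (signChange k) ∪ Set.range (rho k)))).Normal ∧
    Nonempty (Subgroup.closure (Set.range (signChange k)) ≃*
      (Fin k → Equiv.Perm (Fin 2))) ∧
    Nonempty (Subgroup.closure (Set.range (rho k)) ≃* Equiv.Perm (Fin (k + 1))) := by
  refine ⟨rho_mem_GLP k N t ht2 hteven, signChange_mem_GLP k N t,
    closure_subset_GLP k N t ht2 hteven, card_closure_union k hk,
    (Subgroup.closure_union _ _).symm, ?_, ?_, ?_⟩
  · constructor
    intro n hn g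
    rw [Subgroup.mem_subgroupOf] at hn ⊢
    rw [← sc_range] at hn ⊢
    have hg : (g : Equiv.Perm (DesignPoint k)) ∈ (chi k).range := by
      rw [chi_range_eq_closure]
      exact g.2
    have := range_normalized k g hg n hn
    simpa using this
  · exact ⟨(MulEquiv.subgroupCongr (sc_range k).symm).trans
      ((MonoidHom.ofInjective (sc_injective k)).symm.trans
        (MulEquiv.piCongrRight fun _ => u2equiv))⟩
  · exact ⟨(MulEquiv.subgroupCongr (Psi_range k).symm).trans
      (MonoidHom.ofInjective (Psi_injective k hk)).symm⟩
end

section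
/- Let t = 2 and k ≥ 4. Then G^LP is isomorphic to the semidirect product S_2^k ⋊ S_{k+1}; concretely, G^LP is the internal semidirect product of its normal subgroup of sign-change permutations {p ↦ (ε_1 p_1, …, ε_k p_k) : ε ∈ {−1,1}^k} (isomorphic to S_2^k) with the subgroup R = ⟨ρ_1, …, ρ_k⟩ (isomorphic to S_{k+1}), where ρ_i(p)_i = p_i and ρ_i(p)_j = p_i·p_j for j ≠ i. In particular |G^LP| = 2^k·(k+1)!. -/
namespace OA
open scoped Matrix

variable {k : ℕ}

lemma units_sq (u : ℤˣ) : ((u:ℤ):ℚ) * ((u:ℤ):ℚ) = 1 := by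
  rcases Int.units_eq_one_or u with h | h <;> simp [h]

lemma xvec_mul (S T : Finset (Fin k)) (p : DesignPoint k) :
    xvec k S p * xvec k T p = xvec k (symmDiff S T) p := by
  unfold xvec
  rw [← Finset.prod_union_inter]
  have h1 : S ∪ T = (symmDiff S T) ∪ (S ⊓ T) := by
    rw [Finset.union_comm (symmDiff S T)]
    exact (inf_sup_symmDiff S T).symm
  rw [h1, Finset.prod_union (disjoint_symmDiff_inf S T)]
  simp only [Finset.inf_eq_inter]
  rw [mul_assoc, ← Finset.prod_mul_distrib]
  simp [units_sq]

lemma card_designPoint : Fintype.card (DesignPoint k) = 2 ^ k := by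
  have h2 : Fintype.card ℤˣ = 2 := by decide
  rw [Fintype.card_fun, h2, Fintype.card_fin]

lemma sum_xvec_empty : ∑ p : DesignPoint k, xvec k ∅ p = 2 ^ k := by
  have := @card_designPoint k
  simp [xvec, Finset.card_univ, this]

lemma sum_xvec {S : Finset (Fin k)} (hS : S ≠ ∅) :
    ∑ p : DesignPoint k, xvec k S p = 0 := by
  obtain ⟨i0, hi0⟩ := Finset.nonempty_iff_ne_empty.2 hS
  refine Finset.sum_involution (fun p _ => Function.update p i0 (-(p i0))) ?_ ?_ ?_ ?_
  · intro p _
    have h : xvec k S (Function.update p i0 (-(p i0))) = - xvec k S p := by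
      unfold xvec
      have hfun : (fun i => (((Function.update p i0 (-(p i0)) i : ℤˣ) : ℤ) : ℚ))
          = Function.update (fun i => (((p i : ℤˣ) :ℤ):ℚ)) i0 (-(((p i0 : ℤˣ):ℤ):ℚ)) := by
        funext i
        by_cases hi : i = i0
        · subst hi; simp [Units.val_neg]
        · simp [Function.update_of_ne hi]
      calc ∏ i ∈ S, (((Function.update p i0 (-(p i0)) i : ℤˣ) : ℤ) : ℚ)
          = ∏ i ∈ S, Function.update (fun i => (((p i : ℤˣ):ℤ):ℚ)) i0
              (-(((p i0 : ℤˣ):ℤ):ℚ)) i := by rw [hfun]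
        _ = - xvec k S p := by
            rw [Finset.prod_update_of_mem hi0, ← Finset.erase_eq, neg_mul,
              Finset.mul_prod_erase S (fun i => (((p i : ℤˣ):ℤ):ℚ)) hi0]
            rfl
    rw [h]; ring
  · intro p _ _ hcon
    have h1 : -(p i0) = p i0 := by
      have := congrFun hcon i0
      simpa using this
    have h2 := congrArg (fun u : ℤˣ => (u : ℤ)) h1
    rcases Int.units_eq_one_or (p i0) with h | h <;> rw [h] at h2 <;> simp at h2
  · intro p _; exact Finset.mem_univ _
  · intro p _
    funext i
    by_cases hi : i = i0 <;> simp [hi]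

lemma sum_xvec_mul (S T : Finset (Fin k)) :
    ∑ p : DesignPoint k, xvec k S p * xvec k T p
      = if S = T then (2:ℚ) ^ k else 0 := by
  rw [Finset.sum_congr rfl (fun p _ => xvec_mul S T p)]
  by_cases hST : S = T
  · simp only [hST, symmDiff_self]
    simpa using (sum_xvec_empty (k := k))
  · rw [if_neg hST]
    exact sum_xvec (fun hc => hST (symmDiff_eq_bot.1 hc))

lemma xvec_eq_one_or (S : Finset (Fin k)) (p : DesignPoint k) :
    xvec k S p = 1 ∨ xvec k S p = -1 := by
  have h : xvec k S p * xvec k S p = 1 := by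
    rw [xvec_mul, symmDiff_self]; simp [xvec]
  exact mul_self_eq_one_iff.1 h


variable {k : ℕ}

lemma signChange_apply (ε : Fin k → ℤˣ) (p : DesignPoint k) :
    signChange k ε p = fun i => ε i * p i := rfl

/-- lift a design point to `{±1}^{k+1}` with leading coordinate `1`. -/
def lift (p : DesignPoint k) : Fin (k+1) → ℤˣ := Fin.cons 1 p

/-- project a vector in `{±1}^{k+1}` to a design point (homogeneous coords). -/
def proj (q : Fin (k+1) → ℤˣ) : DesignPoint k := fun i => q i.succ * q 0

lemma proj_lift (p : DesignPoint k) : proj (lift p) = p := by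
  funext i; simp [proj, lift]

lemma proj_mul (F q : Fin (k+1) → ℤˣ) :
    proj (fun j => F j * q j) = signChange k (fun i => F i.succ * F 0) (proj q) := by
  funext i
  simp only [proj, signChange_apply]
  rw [mul_mul_mul_comm (F i.succ) (q i.succ), mul_mul_mul_comm (F i.succ) (F 0)]

lemma lift_proj (q : Fin (k+1) → ℤˣ) : lift (proj q) = fun j => q j * q 0 := by
  funext j
  refine Fin.cases ?_ (fun a => ?_) j
  · simp [lift, Int.units_mul_self]
  · simp [lift, proj]

def phiFun (σ : Equiv.Perm (Fin (k+1))) (p : DesignPoint k) : DesignPoint k :=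
  proj (fun j => lift p (σ⁻¹ j))

lemma phiFun_proj (σ : Equiv.Perm (Fin (k+1))) (q : Fin (k+1) → ℤˣ) :
    phiFun σ (proj q) = proj (fun j => q (σ⁻¹ j)) := by
  unfold phiFun
  rw [lift_proj]
  funext i
  simp only [proj]
  rw [mul_mul_mul_comm (q (σ⁻¹ i.succ)) (q 0), Int.units_mul_self, mul_one]

lemma phiFun_one (p : DesignPoint k) : phiFun 1 p = p := by
  unfold phiFun; simpa using proj_lift p

lemma phiFun_mul (σ τ : Equiv.Perm (Fin (k+1))) (p : DesignPoint k) :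
    phiFun (σ * τ) p = phiFun σ (phiFun τ p) := by
  have h1 : phiFun τ p = proj (fun j => lift p (τ⁻¹ j)) := rfl
  rw [h1, phiFun_proj]
  unfold phiFun
  congr 1

/-- the group homomorphism `S_{k+1} → Perm({±1}^k)` (homogeneous coordinates). -/
def phi (k : ℕ) : Equiv.Perm (Fin (k+1)) →* Equiv.Perm (DesignPoint k) where
  toFun σ :=
    { toFun := phiFun σ
      invFun := phiFun σ⁻¹
      left_inv := fun p => by rw [← phiFun_mul]; simp [phiFun_one]
      right_inv := fun p => by rw [← phiFun_mul]; simp [phiFun_one] }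
  map_one' := Equiv.ext fun p => phiFun_one p
  map_mul' := fun σ τ => Equiv.ext fun p => phiFun_mul σ τ p

lemma phi_apply (σ : Equiv.Perm (Fin (k+1))) (p : DesignPoint k) :
    phi k σ p = phiFun σ p := rfl

lemma phi_swap (i : Fin k) : phi k (Equiv.swap 0 i.succ) = rho k i := by
  apply Equiv.ext
  intro p
  funext j
  have hinv : (Equiv.swap (0 : Fin (k+1)) i.succ)⁻¹ = Equiv.swap 0 i.succ :=
    Equiv.swap_inv 0 i.succ
  show phiFun (Equiv.swap 0 i.succ) p j = rhoFun k i p j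
  unfold phiFun proj
  rw [hinv]
  simp only [Equiv.swap_apply_left]
  by_cases hj : j = i
  · subst hj
    rw [Equiv.swap_apply_right]
    simp [lift, rhoFun]
  · have h1 : j.succ ≠ 0 := Fin.succ_ne_zero j
    have h2 : j.succ ≠ i.succ := fun hc => hj (Fin.succ_injective _ hc)
    rw [Equiv.swap_apply_of_ne_of_ne h1 h2]
    simp [lift, rhoFun, hj, mul_comm]

/-- the neighbours of the all-ones point. -/
def nu (m : Fin (k+1)) : DesignPoint k := proj (fun j => if j = m then -1 else 1)

lemma phi_nu (σ : Equiv.Perm (Fin (k+1))) (m : Fin (k+1)) :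
    phi k σ (nu m) = nu (σ m) := by
  rw [phi_apply]
  unfold nu
  rw [phiFun_proj]
  have heq : (fun j => if σ⁻¹ j = m then (-1:ℤˣ) else 1)
      = (fun j => if j = σ m then (-1:ℤˣ) else 1) := by
    funext j
    by_cases h : j = σ m
    · have h2 : σ⁻¹ j = m := by rw [h]; simp
      rw [if_pos h2, if_pos h]
    · have h2 : σ⁻¹ j ≠ m := by
        intro hc
        exact h (by rw [← hc]; simp)
      rw [if_neg h2, if_neg h]
  rw [heq]

lemma nu_zero : (nu 0 : DesignPoint k) = fun _ => -1 := by
  funext i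
  simp [nu, proj, Fin.succ_ne_zero i]

lemma nu_succ (a : Fin k) : (nu a.succ : DesignPoint k) = fun j => if j = a then -1 else 1 := by
  funext j
  have h0 : (0 : Fin (k+1)) ≠ a.succ := (Fin.succ_ne_zero a).symm
  by_cases hj : j = a
  · simp [nu, proj, hj, h0]
  · have : j.succ ≠ a.succ := fun hc => hj (Fin.succ_injective _ hc)
    simp [nu, proj, this, h0, hj]

lemma nu_injective (hk : 2 ≤ k) : Function.Injective (nu (k := k)) := by
  have hnt : Nontrivial (Fin k) := Fin.nontrivial_iff_two_le.mpr hk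
  have hne1 : ((-1 : ℤˣ)) ≠ 1 := by decide
  intro m m' h
  induction m using Fin.cases with
  | zero =>
    induction m' using Fin.cases with
    | zero => rfl
    | succ b =>
      exfalso
      obtain ⟨j, hj⟩ := exists_ne b
      rw [nu_zero, nu_succ] at h
      have h2 := congrFun h j
      rw [if_neg hj] at h2
      exact hne1 h2
  | succ a =>
    induction m' using Fin.cases with
    | zero =>
      exfalso
      obtain ⟨j, hj⟩ := exists_ne a
      rw [nu_zero, nu_succ] at h
      have h2 := congrFun h j
      rw [if_neg hj] at h2
      exact hne1 h2.symm
    | succ b =>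
      by_cases hab : a = b
      · rw [hab]
      · exfalso
        rw [nu_succ, nu_succ] at h
        have h2 := congrFun h a
        rw [if_pos rfl, if_neg hab] at h2
        exact hne1 h2


/-! ### the sign-change homomorphism -/

def psi (k : ℕ) : (Fin k → ℤˣ) →* Equiv.Perm (DesignPoint k) where
  toFun := signChange k
  map_one' := by
    apply Equiv.ext; intro p; funext i; simp [signChange_apply]
  map_mul' := fun ε ε' => by
    apply Equiv.ext; intro p; funext i
    simp [signChange_apply, Equiv.Perm.mul_apply, mul_assoc]

lemma psi_apply_one_pt (ε : Fin k → ℤˣ) : psi k ε (1 : DesignPoint k) = ε := by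
  funext i
  simp [psi, signChange_apply]

lemma psi_injective : Function.Injective (psi k) := by
  intro ε ε' h
  rw [← psi_apply_one_pt ε, ← psi_apply_one_pt ε', h]

lemma lift_one : lift (1 : DesignPoint k) = fun _ => 1 := by
  funext j
  refine Fin.cases ?_ (fun a => ?_) j <;> simp [lift] <;> rfl

lemma phi_fixes_one (σ : Equiv.Perm (Fin (k+1))) : phi k σ (1 : DesignPoint k) = 1 := by
  rw [phi_apply]
  unfold phiFun
  rw [lift_one]
  funext i
  simp [proj]

lemma sClosure_eq : Subgroup.closure (Set.range (signChange k)) = (psi k).range := by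
  have h : Set.range (signChange k) = ((psi k).range : Set (Equiv.Perm (DesignPoint k))) := by
    rw [MonoidHom.coe_range]; rfl
  rw [h, Subgroup.closure_eq]

lemma star_swaps_top :
    (⊤ : Subgroup (Equiv.Perm (Fin (k+1)))) =
      Subgroup.closure {σ | ∃ i : Fin k, σ = Equiv.swap 0 i.succ} := by
  apply le_antisymm ?_ le_top
  rw [← Equiv.Perm.closure_isSwap]
  rw [Subgroup.closure_le]
  rintro σ ⟨a, b, hab, rfl⟩
  by_cases ha : a = 0
  · subst ha
    obtain ⟨c, rfl⟩ := Fin.eq_succ_of_ne_zero (Ne.symm hab)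
    exact Subgroup.subset_closure ⟨c, rfl⟩
  · by_cases hb : b = 0
    · subst hb
      rw [Equiv.swap_comm]
      obtain ⟨c, rfl⟩ := Fin.eq_succ_of_ne_zero ha
      exact Subgroup.subset_closure ⟨c, rfl⟩
    · obtain ⟨c, rfl⟩ := Fin.eq_succ_of_ne_zero ha
      obtain ⟨d, rfl⟩ := Fin.eq_succ_of_ne_zero hb
      have key : Equiv.swap (0:Fin (k+1)) c.succ * Equiv.swap 0 d.succ * Equiv.swap 0 c.succ
          = Equiv.swap c.succ d.succ := by
        have h1 : d.succ ≠ (0:Fin (k+1)) := Fin.succ_ne_zero d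
        have h2 : d.succ ≠ c.succ := fun hc => hab ((Fin.succ_injective _ hc).symm ▸ rfl)
        have := Equiv.swap_mul_swap_mul_swap (x := d.succ) (y := (0:Fin (k+1))) (z := c.succ) h1 h2
        rw [Equiv.swap_comm d.succ 0] at this
        rw [this, Equiv.swap_comm]
      rw [← key]
      exact Subgroup.mul_mem _ (Subgroup.mul_mem _
        (Subgroup.subset_closure ⟨c, rfl⟩) (Subgroup.subset_closure ⟨d, rfl⟩))
        (Subgroup.subset_closure ⟨c, rfl⟩)

lemma rClosure_eq : Subgroup.closure (Set.range (rho k)) = (phi k).range := by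
  apply le_antisymm
  · rw [Subgroup.closure_le]
    rintro x ⟨i, rfl⟩
    exact ⟨Equiv.swap 0 i.succ, phi_swap i⟩
  · rintro x ⟨σ, rfl⟩
    have hσ : σ ∈ Subgroup.closure {σ | ∃ i : Fin k, σ = Equiv.swap 0 i.succ} := by
      rw [← star_swaps_top]; trivial
    refine Subgroup.closure_induction
      (p := fun g _ => phi k g ∈ Subgroup.closure (Set.range (rho k))) ?_ ?_ ?_ ?_ hσ
    · rintro x ⟨i, rfl⟩
      rw [phi_swap]
      exact Subgroup.subset_closure ⟨i, rfl⟩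
    · show phi k 1 ∈ _
      rw [map_one]; exact Subgroup.one_mem _
    · intro x y _ _ hx hy
      show phi k (x * y) ∈ _
      rw [map_mul]; exact Subgroup.mul_mem _ hx hy
    · intro x _ hx
      show phi k x⁻¹ ∈ _
      rw [map_inv]; exact Subgroup.inv_mem _ hx

lemma phi_injective (hk : 2 ≤ k) : Function.Injective (phi k) := by
  intro σ τ h
  apply Equiv.ext
  intro m
  apply nu_injective hk
  rw [← phi_nu, ← phi_nu, h]

lemma inf_eq_bot (hk : 2 ≤ k) :
    Subgroup.closure (Set.range (signChange k)) ⊓ Subgroup.closure (Set.range (rho k)) = ⊥ := by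
  rw [sClosure_eq, rClosure_eq, eq_bot_iff]
  rintro x ⟨⟨ε, rfl⟩, ⟨σ, hσ⟩⟩
  have h1 : psi k ε (1 : DesignPoint k) = ε := psi_apply_one_pt ε
  have h2 : psi k ε (1 : DesignPoint k) = 1 := by rw [← hσ]; exact phi_fixes_one σ
  have : ε = 1 := by rw [← h1, h2]
  rw [Subgroup.mem_bot, this, map_one]

/-- the order-2 mul-equiv. -/
def e2 : ℤˣ ≃* Equiv.Perm (Fin 2) where
  toFun u := if u = 1 then 1 else Equiv.swap 0 1
  invFun π := if π = 1 then 1 else -1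
  left_inv := by decide
  right_inv := by decide
  map_mul' := by decide

noncomputable def sIso :
    Subgroup.closure (Set.range (signChange k)) ≃* (Fin k → Equiv.Perm (Fin 2)) :=
  ((MulEquiv.subgroupCongr sClosure_eq).trans
    (MonoidHom.ofInjective (psi_injective (k := k))).symm).trans
    (MulEquiv.piCongrRight (fun _ => e2))

noncomputable def rIso (hk : 2 ≤ k) :
    Subgroup.closure (Set.range (rho k)) ≃* Equiv.Perm (Fin (k+1)) :=
  (MulEquiv.subgroupCongr rClosure_eq).trans
    (MonoidHom.ofInjective (phi_injective hk)).symm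

/-! ### conjugation of sign changes by `phi` -/

lemma conj_psi (σ : Equiv.Perm (Fin (k+1))) (ε : Fin k → ℤˣ) :
    phi k σ * psi k ε * (phi k σ)⁻¹ ∈ (psi k).range := by
  classical
  set E : Fin (k+1) → ℤˣ := Fin.cons 1 ε with hE
  refine ⟨fun i => E (σ⁻¹ i.succ) * E (σ⁻¹ 0), ?_⟩
  apply Equiv.ext
  intro p
  have hinv : (phi k σ)⁻¹ = phi k σ⁻¹ := by rw [← map_inv]
  show psi k _ p = (phi k σ) ((psi k ε) (((phi k σ)⁻¹) p))
  rw [hinv]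
  have step1 : phi k σ⁻¹ p = proj (fun j => lift p (σ j)) := by
    conv_lhs => rw [← proj_lift p]
    rw [phi_apply, phiFun_proj]
    congr 1
  rw [step1]
  have step2 : psi k ε (proj (fun j => lift p (σ j))) = proj (fun j => E j * lift p (σ j)) := by
    rw [proj_mul]
    have h3 : (fun i => E i.succ * E 0) = ε := by funext i; simp [hE]
    rw [h3]
    rfl
  rw [step2]
  have step3 : phi k σ (proj (fun j => E j * lift p (σ j)))
      = proj (fun j => E (σ⁻¹ j) * lift p j) := by
    rw [phi_apply, phiFun_proj]
    congr 1
    funext j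
    simp
  rw [step3, proj_mul, proj_lift]
  rfl

/-! ### the product subgroup `M = S·R` -/

def calM (k : ℕ) : Subgroup (Equiv.Perm (DesignPoint k)) where
  carrier := {x | ∃ ε σ, x = psi k ε * phi k σ}
  one_mem' := ⟨1, 1, by rw [map_one, map_one, one_mul]⟩
  mul_mem' := by
    rintro x y ⟨ε, σ, rfl⟩ ⟨ε', σ', rfl⟩
    obtain ⟨ε'', h⟩ := conj_psi σ ε'
    refine ⟨ε * ε'', σ * σ', ?_⟩
    rw [map_mul, map_mul, h]
    group
  inv_mem' := by
    rintro x ⟨ε, σ, rfl⟩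
    obtain ⟨ε'', h⟩ := conj_psi σ⁻¹ ε⁻¹
    refine ⟨ε'', σ⁻¹, ?_⟩
    rw [mul_inv_rev, ← map_inv, ← map_inv, h]
    group

lemma mem_calM_iff {x : Equiv.Perm (DesignPoint k)} :
    x ∈ calM k ↔ ∃ ε σ, x = psi k ε * phi k σ := Iff.rfl

lemma sup_eq_calM : (psi k).range ⊔ (phi k).range = calM k := by
  apply le_antisymm
  · apply sup_le
    · rintro x ⟨ε, rfl⟩; exact ⟨ε, 1, by rw [map_one, mul_one]⟩
    · rintro x ⟨σ, rfl⟩; exact ⟨1, σ, by rw [map_one, one_mul]⟩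
  · rintro x ⟨ε, σ, rfl⟩
    exact Subgroup.mul_mem _
      ((le_sup_left : (psi k).range ≤ _) ⟨ε, rfl⟩)
      ((le_sup_right : (phi k).range ≤ _) ⟨σ, rfl⟩)

lemma psiphi_apply_one (ε : Fin k → ℤˣ) (σ : Equiv.Perm (Fin (k+1))) :
    (psi k ε * phi k σ) (1 : DesignPoint k) = ε := by
  rw [Equiv.Perm.mul_apply, phi_fixes_one, psi_apply_one_pt]

noncomputable def calMEquiv (hk : 2 ≤ k) :
    ((Fin k → ℤˣ) × Equiv.Perm (Fin (k+1))) ≃ (calM k) := by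
  refine Equiv.ofBijective (fun z => ⟨psi k z.1 * phi k z.2, ⟨z.1, z.2, rfl⟩⟩) ⟨?_, ?_⟩
  · rintro ⟨ε, σ⟩ ⟨ε', σ'⟩ h
    have h1 : psi k ε * phi k σ = psi k ε' * phi k σ' := congrArg Subtype.val h
    have h2 : ε = ε' := by
      rw [← psiphi_apply_one ε σ, ← psiphi_apply_one ε' σ', h1]
    subst h2
    have h3 : phi k σ = phi k σ' := mul_left_cancel h1
    exact Prod.ext rfl (phi_injective hk h3)
  · rintro ⟨x, ε, σ, rfl⟩
    exact ⟨(ε, σ), rfl⟩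

lemma card_calM (hk : 2 ≤ k) : Nat.card (calM k) = 2 ^ k * Nat.factorial (k+1) := by
  rw [← Nat.card_congr (calMEquiv hk), Nat.card_prod]
  congr 1
  · rw [Nat.card_eq_fintype_card, Fintype.card_fun]
    have h2 : Fintype.card ℤˣ = 2 := by decide
    rw [h2, Fintype.card_fin]
  · rw [Nat.card_eq_fintype_card, Fintype.card_perm, Fintype.card_fin]

/-! ### `GLP` is a subgroup -/

lemma permVec_mul (σ τ : Equiv.Perm (DesignPoint k)) (f : DesignPoint k → ℚ) :
    permVec k (σ * τ) f = permVec k σ (permVec k τ f) := by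
  funext p
  simp [permVec, mul_inv_rev]

lemma glp_one {N t : ℕ} : (1 : Equiv.Perm (DesignPoint k)) ∈ GLP k N t := by
  intro f hf
  have : permVec k 1 f = f := rfl
  rwa [this]

lemma glp_mul {N t : ℕ} {a b : Equiv.Perm (DesignPoint k)}
    (ha : a ∈ GLP k N t) (hb : b ∈ GLP k N t) : a * b ∈ GLP k N t := by
  intro f hf
  rw [permVec_mul]
  exact ha _ (hb _ hf)

lemma glp_inv {N t : ℕ} {a : Equiv.Perm (DesignPoint k)}
    (ha : a ∈ GLP k N t) : a⁻¹ ∈ GLP k N t := by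
  have hpow : ∀ n : ℕ, a ^ (n+1) ∈ GLP k N t := by
    intro n
    induction n with
    | zero => rw [pow_one]; exact ha
    | succ n ih =>
      rw [pow_succ]
      exact glp_mul ih ha
  have hord : 0 < orderOf a := orderOf_pos a
  have h1 : a * a ^ (orderOf a - 1) = 1 := by
    rw [← pow_succ']
    rw [Nat.sub_add_cancel hord]
    exact pow_orderOf_eq_one a
  have h2 : a⁻¹ = a ^ (orderOf a - 1) := (eq_inv_of_mul_eq_one_right h1).symm
  rw [h2]
  rcases Nat.exists_eq_add_of_lt hord with ⟨n, hn⟩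
  rcases Nat.eq_zero_or_pos (orderOf a - 1) with h0 | hp
  · rw [h0, pow_zero]; exact glp_one
  · obtain ⟨m, hm⟩ := Nat.exists_eq_succ_of_ne_zero (Nat.pos_iff_ne_zero.1 hp)
    rw [hm]
    exact hpow m

def Hgrp (k N : ℕ) : Subgroup (Equiv.Perm (DesignPoint k)) where
  carrier := GLP k N 2
  one_mem' := glp_one
  mul_mem' := fun ha hb => glp_mul ha hb
  inv_mem' := fun ha => glp_inv ha

/-! ### membership of the generators in `GLP` -/

lemma mem_GLP_of_xvec {N : ℕ} (π : Equiv.Perm (DesignPoint k))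
    (h : ∀ S : Finset (Fin k), S ≠ ∅ → S.card ≤ 2 →
      ∃ (c : ℚ) (S' : Finset (Fin k)), S' ≠ ∅ ∧ S'.card ≤ 2 ∧
        ∀ q, xvec k S (π q) = c * xvec k S' q) :
    π ∈ GLP k N 2 := by
  rintro f ⟨hpos, hsum, hconstr⟩
  refine ⟨fun p => hpos _, ?_, ?_⟩
  · rw [← hsum]
    exact Fintype.sum_equiv π⁻¹ _ _ (fun p => rfl)
  · intro S hS hS2
    obtain ⟨c, S', hS'ne, hS'2, hc⟩ := h S hS hS2
    have hre : ∑ p, xvec k S p * permVec k π f p = ∑ q, xvec k S (π q) * f q := by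
      refine (Equiv.sum_comp π (fun p => xvec k S p * permVec k π f p)).symm.trans ?_
      apply Finset.sum_congr rfl
      intro q _
      simp [permVec]
    rw [hre]
    calc ∑ q, xvec k S (π q) * f q = c * ∑ q, xvec k S' q * f q := by
          rw [Finset.mul_sum]
          apply Finset.sum_congr rfl
          intro q _
          rw [hc q, mul_assoc]
      _ = 0 := by rw [hconstr S' hS'ne hS'2, mul_zero]

lemma cast_mul_units (u v : ℤˣ) :
    (((u * v : ℤˣ) : ℤ) : ℚ) = ((u:ℤ):ℚ) * ((v:ℤ):ℚ) := by
  rw [Units.val_mul, Int.cast_mul]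

lemma signChange_mem_GLP {N : ℕ} (ε : Fin k → ℤˣ) : signChange k ε ∈ GLP k N 2 := by
  apply mem_GLP_of_xvec
  intro S hS hS2
  refine ⟨xvec k S ε, S, hS, hS2, ?_⟩
  intro q
  unfold xvec
  rw [← Finset.prod_mul_distrib]
  apply Finset.prod_congr rfl
  intro i _
  rw [← cast_mul_units]
  rfl

lemma rho_apply (i : Fin k) (q : DesignPoint k) : rho k i q = rhoFun k i q := rfl

lemma rho_mem_GLP {N : ℕ} (i : Fin k) : rho k i ∈ GLP k N 2 := by
  apply mem_GLP_of_xvec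
  intro S hS hS2
  interval_cases h : S.card
  · exfalso; exact hS (Finset.card_eq_zero.1 h)
  · obtain ⟨j, rfl⟩ := Finset.card_eq_one.1 h
    by_cases hj : j = i
    · subst hj
      refine ⟨1, {j}, by simp, by simp, ?_⟩
      intro q
      rw [one_mul]
      unfold xvec
      rw [Finset.prod_singleton, Finset.prod_singleton, rho_apply]
      unfold rhoFun
      rw [if_pos rfl]
    · refine ⟨1, {i, j}, by simp, ?_, ?_⟩
      · rw [Finset.card_pair (Ne.symm hj)]
      intro q
      rw [one_mul]
      unfold xvec
      rw [Finset.prod_singleton, Finset.prod_pair (Ne.symm hj), rho_apply]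
      unfold rhoFun
      rw [if_neg hj, cast_mul_units]
  · obtain ⟨a, b, hab, rfl⟩ := Finset.card_eq_two.1 h
    by_cases hai : a = i
    · subst hai
      refine ⟨1, {b}, by simp, by simp, ?_⟩
      intro q
      rw [one_mul]
      unfold xvec
      rw [Finset.prod_pair hab, Finset.prod_singleton, rho_apply]
      unfold rhoFun
      rw [if_pos rfl, if_neg (Ne.symm hab), cast_mul_units]
      linear_combination ((q b : ℤ) : ℚ) * units_sq (q a)
    · by_cases hbi : b = i
      · subst hbi
        refine ⟨1, {a}, by simp, by simp, ?_⟩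
        intro q
        rw [one_mul]
        unfold xvec
        rw [Finset.prod_pair hab, Finset.prod_singleton, rho_apply]
        unfold rhoFun
        rw [if_pos rfl, if_neg hab, cast_mul_units]
        linear_combination ((q a : ℤ) : ℚ) * units_sq (q b)
      · refine ⟨1, {a, b}, by simp, by rw [Finset.card_pair hab], ?_⟩
        intro q
        rw [one_mul]
        unfold xvec
        rw [Finset.prod_pair hab, Finset.prod_pair hab, rho_apply]
        unfold rhoFun
        rw [if_neg hai, if_neg hbi, cast_mul_units, cast_mul_units]
        linear_combination (((q a : ℤ) : ℚ) * ((q b : ℤ) : ℚ)) * units_sq (q i)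

/-! ### analysis: `GLP` preserves the degree-≤2 kernel -/

lemma xvec_empty (p : DesignPoint k) : xvec k ∅ p = 1 := by simp [xvec]

lemma feas_point {N : ℕ} {T : Finset (Fin k)} (hT : 3 ≤ T.card) :
    (fun p => (N:ℚ)/2^k * (1 + xvec k T p)) ∈ feas k N 2 := by
  have hTne : T ≠ ∅ := by
    intro hc; rw [hc] at hT; simp at hT
  have h2k : (0:ℚ) < 2^k := by positivity
  refine ⟨?_, ?_, ?_⟩
  · intro p
    apply mul_nonneg (by positivity)
    rcases xvec_eq_one_or T p with h | h <;> rw [h] <;> norm_num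
  · rw [← Finset.mul_sum]
    rw [Finset.sum_add_distrib, sum_xvec hTne, add_zero, Finset.sum_const,
      Finset.card_univ, card_designPoint]
    field_simp
    simp
  · intro S hS hS2
    have hST : S ≠ T := by
      intro hc; rw [hc] at hS2; omega
    calc ∑ p, xvec k S p * ((N:ℚ)/2^k * (1 + xvec k T p))
        = (N:ℚ)/2^k * ∑ p, (xvec k S p + xvec k S p * xvec k T p) := by
          rw [Finset.mul_sum]
          apply Finset.sum_congr rfl
          intro p _
          ring
      _ = (N:ℚ)/2^k * ((∑ p, xvec k S p) + ∑ p, xvec k S p * xvec k T p) := by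
          rw [Finset.sum_add_distrib]
      _ = 0 := by
          rw [sum_xvec hS, sum_xvec_mul, if_neg hST]
          norm_num

lemma glp_orth' {N : ℕ} (hN : 1 ≤ N) {π : Equiv.Perm (DesignPoint k)}
    (hπ : π ∈ GLP k N 2) {S T : Finset (Fin k)}
    (hS2 : S.card ≤ 2) (hT : 3 ≤ T.card) :
    ∑ p, xvec k S (π p) * xvec k T p = 0 := by
  have hTne : T ≠ ∅ := by
    intro hc; rw [hc] at hT; simp at hT
  by_cases hS : S = ∅
  · subst hS
    calc ∑ p, xvec k ∅ (π p) * xvec k T p = ∑ p, xvec k T p := by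
          apply Finset.sum_congr rfl
          intro p _
          rw [xvec_empty, one_mul]
      _ = 0 := sum_xvec hTne
  · have hfp := hπ _ (feas_point (N := N) hT)
    obtain ⟨_, _, hconstr⟩ := hfp
    have h0 := hconstr S hS hS2
    have hre : ∑ p, xvec k S p * permVec k π (fun p => (N:ℚ)/2^k * (1 + xvec k T p)) p
        = ∑ q, xvec k S (π q) * ((N:ℚ)/2^k * (1 + xvec k T q)) := by
      refine (Equiv.sum_comp π (fun p => xvec k S p *
        permVec k π (fun p => (N:ℚ)/2^k * (1 + xvec k T p)) p)).symm.trans ?_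
      apply Finset.sum_congr rfl
      intro q _
      simp [permVec]
    rw [hre] at h0
    have h1 : ∑ q, xvec k S (π q) * ((N:ℚ)/2^k * (1 + xvec k T q))
        = (N:ℚ)/2^k * ((∑ q, xvec k S (π q)) + ∑ q, xvec k S (π q) * xvec k T q) := by
      rw [← Finset.sum_add_distrib, Finset.mul_sum]
      apply Finset.sum_congr rfl
      intro q _
      ring
    rw [h1] at h0
    have h2 : ∑ q, xvec k S (π q) = 0 := by
      rw [Equiv.sum_comp π (xvec k S)]
      exact sum_xvec hS
    rw [h2, zero_add] at h0
    have hNne : (N:ℚ)/2^k ≠ 0 := by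
      have : (0:ℚ) < (N:ℚ) := by exact_mod_cast hN
      positivity
    exact (mul_eq_zero.1 h0).resolve_left hNne

lemma sum_all_char (q p : DesignPoint k) :
    ∑ T : Finset (Fin k), xvec k T q * xvec k T p = if q = p then (2:ℚ)^k else 0 := by
  have h1 : ∀ T : Finset (Fin k), xvec k T q * xvec k T p
      = ∏ i ∈ T, (((q i:ℤ):ℚ) * ((p i:ℤ):ℚ)) := by
    intro T; unfold xvec; rw [Finset.prod_mul_distrib]
  rw [Finset.sum_congr rfl (fun T _ => h1 T)]
  have h2 : ∑ T : Finset (Fin k), ∏ i ∈ T, (((q i:ℤ):ℚ) * ((p i:ℤ):ℚ))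
      = ∏ i : Fin k, (((q i:ℤ):ℚ) * ((p i:ℤ):ℚ) + 1) := by
    rw [Finset.prod_add]
    rw [Finset.powerset_univ]
    apply Finset.sum_congr rfl
    intro T _
    simp
  rw [h2]
  by_cases hqp : q = p
  · subst hqp
    rw [if_pos rfl]
    calc ∏ i : Fin k, (((q i:ℤ):ℚ) * ((q i:ℤ):ℚ) + 1)
        = ∏ _i : Fin k, (2:ℚ) := by
          apply Finset.prod_congr rfl
          intro i _
          rw [units_sq]
          norm_num
      _ = 2^k := by rw [Finset.prod_const, Finset.card_univ, Fintype.card_fin]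
  · rw [if_neg hqp]
    obtain ⟨i0, hi0⟩ := Function.ne_iff.1 hqp
    apply Finset.prod_eq_zero (Finset.mem_univ i0)
    have : ((q i0:ℤ):ℚ) * ((p i0:ℤ):ℚ) = -1 := by
      rcases Int.units_eq_one_or (q i0) with h | h <;>
        rcases Int.units_eq_one_or (p i0) with h' | h'
      · exact absurd (h.trans h'.symm) hi0
      · rw [h, h']; norm_num
      · rw [h, h']; norm_num
      · exact absurd (h.trans h'.symm) hi0
    rw [this]
    ring

lemma fourier_expand (v : DesignPoint k → ℚ) (p : DesignPoint k) :
    v p = ∑ T : Finset (Fin k), ((∑ q, v q * xvec k T q) / 2^k) * xvec k T p := by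
  have h2k : (0:ℚ) < 2^k := by positivity
  have key : ∑ T : Finset (Fin k), (∑ q, v q * xvec k T q) * xvec k T p = v p * 2^k := by
    calc ∑ T : Finset (Fin k), (∑ q, v q * xvec k T q) * xvec k T p
        = ∑ T : Finset (Fin k), ∑ q, v q * (xvec k T q * xvec k T p) := by
          apply Finset.sum_congr rfl
          intro T _
          rw [Finset.sum_mul]
          apply Finset.sum_congr rfl
          intro q _
          ring
      _ = ∑ q, ∑ T : Finset (Fin k), v q * (xvec k T q * xvec k T p) := Finset.sum_comm
      _ = ∑ q, v q * (if q = p then (2:ℚ)^k else 0) := by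
          apply Finset.sum_congr rfl
          intro q _
          rw [← Finset.mul_sum, sum_all_char]
      _ = v p * 2^k := by
          simp only [mul_ite, mul_zero]
          rw [Finset.sum_ite_eq' Finset.univ p (fun q => v q * 2^k)]
          simp
  calc v p = (∑ T : Finset (Fin k), (∑ q, v q * xvec k T q) * xvec k T p) / 2^k := by
        rw [key]; field_simp
    _ = ∑ T : Finset (Fin k), ((∑ q, v q * xvec k T q) / 2^k) * xvec k T p := by
        rw [Finset.sum_div]
        apply Finset.sum_congr rfl
        intro T _
        ring

/-- index type: subsets of size at most 2. -/
abbrev SmallSet (k : ℕ) := {S : Finset (Fin k) // S.card ≤ 2}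

noncomputable def Bmat (k : ℕ) : Matrix (SmallSet k) (DesignPoint k) ℚ :=
  fun S p => xvec k S.1 p

noncomputable def Bpi (π : Equiv.Perm (DesignPoint k)) :
    Matrix (SmallSet k) (DesignPoint k) ℚ :=
  fun S p => xvec k S.1 (π p)

noncomputable def Cmat (π : Equiv.Perm (DesignPoint k)) :
    Matrix (SmallSet k) (SmallSet k) ℚ :=
  fun S W => (∑ p, xvec k S.1 (π p) * xvec k W.1 p) / 2^k

lemma expand_small {N : ℕ} (hN : 1 ≤ N) {π : Equiv.Perm (DesignPoint k)}
    (hπ : π ∈ GLP k N 2) (S : SmallSet k) (p : DesignPoint k) :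
    xvec k S.1 (π p) = ∑ W : SmallSet k, Cmat π S W * xvec k W.1 p := by
  have h0 := fourier_expand (fun r => xvec k S.1 (π r)) p
  rw [h0]
  rw [← Finset.sum_filter_add_sum_filter_not Finset.univ
    (fun T : Finset (Fin k) => T.card ≤ 2)]
  have hz : ∑ T ∈ Finset.univ.filter (fun T : Finset (Fin k) => ¬ T.card ≤ 2),
      ((∑ q, xvec k S.1 (π q) * xvec k T q) / 2^k) * xvec k T p = 0 := by
    apply Finset.sum_eq_zero
    intro T hT
    have h3 : 3 ≤ T.card := by
      have := (Finset.mem_filter.1 hT).2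
      omega
    rw [glp_orth' hN hπ S.2 h3, zero_div, zero_mul]
  rw [hz, add_zero]
  exact Finset.sum_subtype _ (fun T => by simp) _

lemma BBt : Bmat k * (Bmat k)ᵀ = ((2:ℚ)^k) • (1 : Matrix (SmallSet k) (SmallSet k) ℚ) := by
  ext S S'
  rw [Matrix.mul_apply]
  simp only [Bmat, Matrix.transpose_apply, Matrix.smul_apply, Matrix.one_apply]
  rw [sum_xvec_mul]
  by_cases h : S = S'
  · rw [if_pos (by rw [h]), if_pos h]
    simp
  · rw [if_neg (fun hc => h (Subtype.ext hc)), if_neg h]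
    simp

lemma BpiBpit (π : Equiv.Perm (DesignPoint k)) :
    Bpi π * (Bpi π)ᵀ = ((2:ℚ)^k) • (1 : Matrix (SmallSet k) (SmallSet k) ℚ) := by
  ext S S'
  rw [Matrix.mul_apply]
  simp only [Bpi, Matrix.transpose_apply, Matrix.smul_apply, Matrix.one_apply]
  rw [Equiv.sum_comp π (fun r => xvec k S.1 r * xvec k S'.1 r)]
  rw [sum_xvec_mul]
  by_cases h : S = S'
  · rw [if_pos (by rw [h]), if_pos h]
    simp
  · rw [if_neg (fun hc => h (Subtype.ext hc)), if_neg h]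
    simp

lemma Bpi_eq {N : ℕ} (hN : 1 ≤ N) {π : Equiv.Perm (DesignPoint k)}
    (hπ : π ∈ GLP k N 2) : Bpi π = Cmat π * Bmat k := by
  ext S p
  rw [Matrix.mul_apply]
  exact expand_small hN hπ S p

lemma C_orth {N : ℕ} (hN : 1 ≤ N) {π : Equiv.Perm (DesignPoint k)}
    (hπ : π ∈ GLP k N 2) : Cmat π * (Cmat π)ᵀ = 1 := by
  have h1 := BpiBpit (k := k) π
  rw [Bpi_eq hN hπ] at h1
  rw [Matrix.transpose_mul, ← Matrix.mul_assoc, Matrix.mul_assoc (Cmat π), BBt] at h1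
  rw [Matrix.mul_smul, Matrix.mul_one, Matrix.smul_mul] at h1
  have h2k : ((2:ℚ)^k) ≠ 0 := by positivity
  have := smul_right_injective (Matrix (SmallSet k) (SmallSet k) ℚ) h2k h1
  exact this

def eker (p q : DesignPoint k) : ℚ := ∑ S : SmallSet k, xvec k S.1 p * xvec k S.1 q

lemma eker_perm {N : ℕ} (hN : 1 ≤ N) {π : Equiv.Perm (DesignPoint k)}
    (hπ : π ∈ GLP k N 2) (p q : DesignPoint k) :
    eker (π p) (π q) = eker p q := by
  have hC : (Cmat π)ᵀ * Cmat π = 1 := mul_eq_one_comm.1 (C_orth hN hπ)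
  have h : (Bpi π)ᵀ * Bpi π = (Bmat k)ᵀ * Bmat k := by
    rw [Bpi_eq hN hπ, Matrix.transpose_mul, Matrix.mul_assoc,
      ← Matrix.mul_assoc (Cmat π)ᵀ, hC, Matrix.one_mul]
  have h1 := Matrix.ext_iff.2 h p q
  simp only [Matrix.mul_apply, Matrix.transpose_apply, Bpi, Bmat] at h1
  exact h1

/-! ### the kernel as a function of the inner product -/

def mval (p q : DesignPoint k) : ℚ := ∑ i, ((p i:ℤ):ℚ) * ((q i:ℤ):ℚ)

lemma sq_sum_aux (s : Finset (Fin k)) (x : Fin k → ℚ) :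
    (∑ i ∈ s, x i)^2 = ∑ i ∈ s, (x i)^2
      + 2 * ∑ S ∈ s.powersetCard 2, ∏ i ∈ S, x i := by
  classical
  induction s using Finset.induction_on with
  | empty => simp [Finset.powersetCard_eq_filter, Finset.filter_singleton]
  | @insert a s ha ih =>
    rw [Finset.sum_insert ha, Finset.sum_insert ha]
    have h2 : (2 : ℕ) = Nat.succ 1 := rfl
    rw [h2, Finset.powersetCard_succ_insert ha]
    have hdisj : Disjoint (Finset.powersetCard (Nat.succ 1) s)
        (Finset.image (insert a) (Finset.powersetCard 1 s)) := by
      rw [Finset.disjoint_left]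
      intro T hT hT'
      obtain ⟨U, hU, rfl⟩ := Finset.mem_image.1 hT'
      have h3 := (Finset.mem_powersetCard.1 hT).1
      have h4 : a ∈ insert a U := Finset.mem_insert_self a U
      exact ha (h3 h4)
    rw [Finset.sum_union hdisj]
    have himg : ∑ T ∈ Finset.image (insert a) (Finset.powersetCard 1 s), ∏ i ∈ T, x i
        = x a * ∑ i ∈ s, x i := by
      rw [Finset.sum_image]
      · rw [Finset.powersetCard_one, Finset.sum_map]
        simp only [Function.Embedding.coeFn_mk]
        rw [Finset.mul_sum]
        apply Finset.sum_congr rfl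
        intro i hi
        have hia : a ∉ ({i} : Finset (Fin k)) := by
          simp only [Finset.mem_singleton]
          intro hc
          rw [hc] at ha
          exact ha hi
        rw [Finset.prod_insert hia, Finset.prod_singleton]
      · intro U hU V hV hUV
        have hU' := (Finset.mem_powersetCard.1 hU).1
        have hV' := (Finset.mem_powersetCard.1 hV).1
        have haU : a ∉ U := fun hc => ha (hU' hc)
        have haV : a ∉ V := fun hc => ha (hV' hc)
        have := congrArg (fun W => Finset.erase W a) hUV
        simpa [Finset.erase_insert haU, Finset.erase_insert haV] using this
    rw [himg]
    ring_nf
    ring_nf at ih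
    linarith [ih]

lemma eker_eq (p q : DesignPoint k) :
    2 * eker p q = mval p q ^ 2 + 2 * mval p q + 2 - k := by
  classical
  set x : Fin k → ℚ := fun i => ((p i:ℤ):ℚ) * ((q i:ℤ):ℚ) with hx
  have hsub : eker p q
      = ∑ T ∈ Finset.univ.filter (fun T : Finset (Fin k) => T.card ≤ 2), ∏ i ∈ T, x i := by
    unfold eker
    rw [Finset.sum_subtype (p := fun T : Finset (Fin k) => T.card ≤ 2)
      (Finset.univ.filter (fun T : Finset (Fin k) => T.card ≤ 2))
      (fun T => by simp) (fun T => ∏ i ∈ T, x i)]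
    apply Finset.sum_congr rfl
    intro S _
    unfold xvec
    rw [Finset.prod_mul_distrib]
  have split : Finset.univ.filter (fun T : Finset (Fin k) => T.card ≤ 2)
      = ((Finset.univ.powersetCard 0 ∪ Finset.univ.powersetCard 1)
          ∪ Finset.univ.powersetCard 2 : Finset (Finset (Fin k))) := by
    ext T
    simp only [Finset.mem_filter, Finset.mem_univ, true_and, Finset.mem_union,
      Finset.mem_powersetCard, Finset.subset_univ]
    omega
  have d1 : Disjoint (Finset.univ.powersetCard 0 : Finset (Finset (Fin k)))
      (Finset.univ.powersetCard 1) := by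
    rw [Finset.disjoint_left]
    intro T h0 h1
    rw [Finset.mem_powersetCard] at h0 h1
    omega
  have d2 : Disjoint ((Finset.univ.powersetCard 0 ∪ Finset.univ.powersetCard 1) :
      Finset (Finset (Fin k))) (Finset.univ.powersetCard 2) := by
    rw [Finset.disjoint_left]
    intro T h0 h1
    rw [Finset.mem_union] at h0
    rw [Finset.mem_powersetCard] at h1
    rcases h0 with h0 | h0 <;> rw [Finset.mem_powersetCard] at h0 <;> omega
  have s0 : ∑ T ∈ (Finset.univ.powersetCard 0 : Finset (Finset (Fin k))), ∏ i ∈ T, x i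
      = 1 := by
    rw [Finset.powersetCard_zero, Finset.sum_singleton, Finset.prod_empty]
  have s1 : ∑ T ∈ (Finset.univ.powersetCard 1 : Finset (Finset (Fin k))), ∏ i ∈ T, x i
      = mval p q := by
    rw [Finset.powersetCard_one, Finset.sum_map]
    apply Finset.sum_congr rfl
    intro i _
    simp only [Function.Embedding.coeFn_mk]
    rw [Finset.prod_singleton]
  have hm : mval p q = ∑ i, x i := rfl
  have hxsq : ∑ i, (x i)^2 = (k:ℚ) := by
    have : ∀ i : Fin k, (x i)^2 = 1 := by
      intro i
      have h1 : (x i)^2 = (((p i:ℤ):ℚ) * ((p i:ℤ):ℚ)) * (((q i:ℤ):ℚ) * ((q i:ℤ):ℚ)) := by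
        rw [hx]; ring
      rw [h1, units_sq, units_sq, one_mul]
    rw [Finset.sum_congr rfl (fun i _ => this i), Finset.sum_const, Finset.card_univ,
      Fintype.card_fin]
    simp
  have hsq := sq_sum_aux Finset.univ x
  rw [hxsq, ← hm] at hsq
  rw [hsub, split, Finset.sum_union d2, Finset.sum_union d1, s0, s1]
  linarith

lemma eker_inj {p q p' q' : DesignPoint k} (h : eker p q = eker p' q') :
    mval p q = mval p' q' ∨ mval p q + mval p' q' = -2 := by
  have h1 := eker_eq p q
  have h2 := eker_eq p' q'
  have h3 : (mval p q - mval p' q') * (mval p q + mval p' q' + 2) = 0 := by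
    linear_combination h2 - h1 + 2 * h
  rcases mul_eq_zero.1 h3 with h4 | h4
  · left; linarith
  · right; linarith

/-! ### adjacency (the folded-cube graph) -/

def delta (i : Fin k) : DesignPoint k := fun j => if j = i then -1 else 1

def mOne : DesignPoint k := fun _ => -1

def AdjP (p q : DesignPoint k) : Prop := mval p q = k - 2 ∨ mval p q = -k

lemma units_eq_neg_of_ne {u v : ℤˣ} (h : u ≠ v) : u = -v := by
  rcases Int.units_eq_one_or u with h1 | h1 <;>
    rcases Int.units_eq_one_or v with h2 | h2 <;>
      rw [h1, h2] <;> first | rfl | (exfalso; exact h (by rw [h1, h2])) | decide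

lemma cast_pq (u v : ℤˣ) :
    ((u:ℤ):ℚ) * ((v:ℤ):ℚ) = if u = v then 1 else -1 := by
  rcases Int.units_eq_one_or u with h1 | h1 <;>
    rcases Int.units_eq_one_or v with h2 | h2 <;>
      rw [h1, h2] <;> norm_num <;> decide

def disag (p q : DesignPoint k) : Finset (Fin k) :=
  Finset.univ.filter (fun i => ¬ p i = q i)

lemma mval_eq (p q : DesignPoint k) :
    mval p q = (k:ℚ) - 2 * (disag p q).card := by
  unfold mval
  rw [Finset.sum_congr rfl (fun i _ => cast_pq (p i) (q i))]
  rw [Finset.sum_ite, Finset.sum_const, Finset.sum_const, nsmul_eq_mul, nsmul_eq_mul]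
  unfold disag
  have h0 := Finset.card_filter_add_card_filter_not
    (s := (Finset.univ : Finset (Fin k))) (fun i => p i = q i)
  rw [Finset.card_univ, Fintype.card_fin] at h0
  have h1 : ((Finset.filter (fun i => p i = q i) Finset.univ).card : ℚ)
      + ((Finset.filter (fun i => ¬ p i = q i) Finset.univ).card : ℚ) = (k:ℚ) := by
    exact_mod_cast h0
  linarith

/-! ### adjacency characterization -/

lemma delta_apply_self (i : Fin k) : delta (k := k) i i = -1 := by simp [delta]

lemma delta_apply_ne {i j : Fin k} (h : j ≠ i) : delta (k := k) i j = 1 := by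
  simp [delta, h]

lemma delta_mul_self (i : Fin k) : delta (k := k) i * delta i = 1 := by
  funext j
  by_cases h : j = i <;> simp [delta, Pi.mul_apply, h]

lemma mOne_mul_self : (mOne : DesignPoint k) * mOne = 1 := by
  funext j
  simp [mOne, Pi.mul_apply]

lemma units_eq_one_of_ne_neg {u : ℤˣ} (h : ¬ u = -1) : u = 1 :=
  (Int.units_eq_one_or u).resolve_right h

lemma units_neg_one_ne_one : ¬ ((-1 : ℤˣ) = 1) := by decide

lemma units_ne_neg_mul (u : ℤˣ) : ¬ (u = -1 * u) := by
  rcases Int.units_eq_one_or u with h | h <;> rw [h] <;> decide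

lemma disag_delta (i : Fin k) (p : DesignPoint k) :
    disag p (delta i * p) = {i} := by
  ext j
  simp only [disag, Finset.mem_filter, Finset.mem_univ, true_and, Finset.mem_singleton,
    Pi.mul_apply]
  by_cases h : j = i
  · subst h
    rw [delta_apply_self]
    exact ⟨fun _ => rfl, fun _ => units_ne_neg_mul (p j)⟩
  · rw [delta_apply_ne h, one_mul]
    simp [h]

lemma disag_mOne (p : DesignPoint k) : disag p (mOne * p) = Finset.univ := by
  ext j
  simp only [disag, Finset.mem_filter, Finset.mem_univ, true_and, iff_true, Pi.mul_apply]
  have h3 : (mOne j : ℤˣ) = -1 := rfl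
  rw [h3]
  exact units_ne_neg_mul (p j)

lemma adjP_iff (p q : DesignPoint k) :
    AdjP p q ↔ (∃ i, q = delta i * p) ∨ q = mOne * p := by
  constructor
  · intro h
    rcases h with h | h
    · -- mval = k - 2, so card disag = 1
      rw [mval_eq] at h
      have hd : ((disag p q).card : ℚ) = 1 := by linarith
      have hd' : (disag p q).card = 1 := by exact_mod_cast hd
      obtain ⟨i0, hi0⟩ := Finset.card_eq_one.1 hd'
      left
      refine ⟨i0, ?_⟩
      funext j
      by_cases hj : j = i0
      · subst hj
        have hmem : j ∈ disag p q := by rw [hi0]; exact Finset.mem_singleton_self j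
        simp only [disag, Finset.mem_filter] at hmem
        have := units_eq_neg_of_ne (fun hc => hmem.2 hc.symm)
        rw [Pi.mul_apply, delta_apply_self, this, neg_one_mul]
      · have hmem : j ∉ disag p q := by rw [hi0]; simp [hj]
        simp only [disag, Finset.mem_filter, Finset.mem_univ, true_and, not_not] at hmem
        rw [Pi.mul_apply, delta_apply_ne hj, one_mul, hmem]
    · rw [mval_eq] at h
      have hd : ((disag p q).card : ℚ) = k := by linarith
      have hd' : (disag p q).card = k := by exact_mod_cast hd
      have huniv : disag p q = Finset.univ :=
        Finset.eq_univ_of_card _ (by rw [hd', Fintype.card_fin])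
      right
      funext j
      have hmem : j ∈ disag p q := huniv ▸ Finset.mem_univ j
      simp only [disag, Finset.mem_filter] at hmem
      have := units_eq_neg_of_ne (fun hc => hmem.2 hc.symm)
      rw [Pi.mul_apply, this]
      rw [show (mOne j : ℤˣ) = -1 from rfl, neg_one_mul]
  · intro h
    rcases h with ⟨i, rfl⟩ | rfl
    · left
      rw [mval_eq, disag_delta, Finset.card_singleton]
      norm_num
    · right
      rw [mval_eq, disag_mOne, Finset.card_univ, Fintype.card_fin]
      ring

lemma adjP_delta (i : Fin k) (p : DesignPoint k) : AdjP p (delta i * p) :=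
  (adjP_iff _ _).2 (Or.inl ⟨i, rfl⟩)

lemma adjP_mOne (p : DesignPoint k) : AdjP p (mOne * p) :=
  (adjP_iff _ _).2 (Or.inr rfl)

lemma adjP_perm {N : ℕ} (hN : 1 ≤ N) {π : Equiv.Perm (DesignPoint k)}
    (hπ : π ∈ GLP k N 2) {p q : DesignPoint k} (h : AdjP p q) :
    AdjP (π p) (π q) := by
  have he := eker_perm hN hπ p q
  rcases eker_inj he with h1 | h1 <;> rcases h with h2 | h2
  · left; rw [h1, h2]
  · right; rw [h1, h2]
  · right; rw [h2] at h1; linarith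
  · left; rw [h2] at h1; linarith

lemma delta_eq_nu (i : Fin k) : delta i = nu i.succ := by
  rw [nu_succ]; rfl

lemma mOne_eq_nu : (mOne : DesignPoint k) = nu 0 := by
  rw [nu_zero]; rfl

lemma adj_one_iff (x : DesignPoint k) : AdjP 1 x ↔ ∃ m, x = nu m := by
  rw [adjP_iff]
  constructor
  · rintro (⟨i, rfl⟩ | rfl)
    · exact ⟨i.succ, by rw [← delta_eq_nu, mul_one]⟩
    · exact ⟨0, by rw [← mOne_eq_nu, mul_one]⟩
  · rintro ⟨m, rfl⟩
    induction m using Fin.cases with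
    | zero => right; rw [← mOne_eq_nu, mul_one]
    | succ a => left; exact ⟨a, by rw [← delta_eq_nu, mul_one]⟩

lemma exists_not_mem3 (hk : 4 ≤ k) (a b c : Fin k) :
    ∃ l : Fin k, l ≠ a ∧ l ≠ b ∧ l ≠ c := by
  by_contra hcon
  push_neg at hcon
  have hsub : (Finset.univ : Finset (Fin k)) ⊆ {a, b, c} := by
    intro l _
    simp only [Finset.mem_insert, Finset.mem_singleton]
    by_cases h1 : l = a
    · exact Or.inl h1
    by_cases h2 : l = b
    · exact Or.inr (Or.inl h2)
    exact Or.inr (Or.inr (hcon l h1 h2))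
  have hcard := Finset.card_le_card hsub
  rw [Finset.card_univ, Fintype.card_fin] at hcard
  have h3 : ({a, b, c} : Finset (Fin k)).card ≤ 3 := by
    apply le_trans (Finset.card_insert_le _ _)
    apply Nat.succ_le_succ
    apply le_trans (Finset.card_insert_le _ _)
    apply Nat.succ_le_succ
    simp
  omega

lemma cn_subset (hk : 4 ≤ k) {x w : DesignPoint k} {i j : Fin k} (hij : i ≠ j)
    (hu : AdjP (delta i * x) w) (hv : AdjP (delta j * x) w) :
    w = x ∨ w = delta i * (delta j * x) := by
  rw [adjP_iff] at hu hv
  rcases hu with ⟨a, ha⟩ | ha <;> rcases hv with ⟨b, hb⟩ | hb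
  · have heq : delta (k := k) a * delta i = delta b * delta j := by
      have h1 : (delta a * delta i) * x = (delta b * delta j) * x := by
        rw [mul_assoc, mul_assoc, ← ha, ← hb]
      exact mul_right_cancel h1
    by_cases hai : a = i
    · subst hai
      rw [delta_mul_self] at heq
      left
      rw [ha, ← mul_assoc, delta_mul_self, one_mul]
    · have hbj : b ≠ j := by
        intro hbj
        subst hbj
        rw [delta_mul_self] at heq
        have h2 := congrFun heq a
        rw [Pi.mul_apply, delta_apply_self, delta_apply_ne hai, Pi.one_apply] at h2
        exact absurd h2 (by decide)
      have hib : i = b := by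
        by_contra hib
        have h2 := congrFun heq i
        rw [Pi.mul_apply, Pi.mul_apply, delta_apply_ne (Ne.symm hai), delta_apply_self,
          delta_apply_ne hib, delta_apply_ne hij] at h2
        exact absurd h2 (by decide)
      subst hib
      have haj : a = j := by
        by_contra haj
        have h2 := congrFun heq a
        rw [Pi.mul_apply, Pi.mul_apply, delta_apply_self, delta_apply_ne hai,
          delta_apply_ne haj] at h2
        exact absurd h2 (by decide)
      subst haj
      right
      rw [ha, mul_left_comm]
  · exfalso
    have heq : delta (k := k) a * delta i = mOne * delta j := by
      have h1 : (delta a * delta i) * x = (mOne * delta j) * x := by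
        rw [mul_assoc, mul_assoc, ← ha, ← hb]
      exact mul_right_cancel h1
    obtain ⟨l, hla, hli, hlj⟩ := exists_not_mem3 hk a i j
    have h2 := congrFun heq l
    rw [Pi.mul_apply, Pi.mul_apply, delta_apply_ne hla, delta_apply_ne hli,
      delta_apply_ne hlj] at h2
    have h4 : (1 : ℤˣ) * 1 = (-1) * 1 := h2
    exact absurd h4 (by decide)
  · exfalso
    have heq : (mOne : DesignPoint k) * delta i = delta b * delta j := by
      have h1 : (mOne * delta i) * x = (delta b * delta j) * x := by
        rw [mul_assoc, mul_assoc, ← ha, ← hb]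
      exact mul_right_cancel h1
    obtain ⟨l, hlb, hli, hlj⟩ := exists_not_mem3 hk b i j
    have h2 := congrFun heq l
    rw [Pi.mul_apply, Pi.mul_apply, delta_apply_ne hli, delta_apply_ne hlb,
      delta_apply_ne hlj] at h2
    have h4 : (-1 : ℤˣ) * 1 = 1 * 1 := h2
    exact absurd h4 (by decide)
  · exfalso
    have h1 : delta (k := k) i * x = delta j * x := by
      exact mul_left_cancel (ha.symm.trans hb)
    have h2 : delta (k := k) i = delta j := mul_right_cancel h1
    have h3 := congrFun h2 i
    rw [delta_apply_self, delta_apply_ne hij] at h3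
    exact absurd h3 (by decide)

/-! ### weights and rigidity -/

def wt (p : DesignPoint k) : ℕ := (Finset.univ.filter (fun i => p i = -1)).card

def muv (p : DesignPoint k) : ℕ := min (wt p) (k + 1 - wt p)

lemma wt_le (p : DesignPoint k) : wt p ≤ k := by
  have := Finset.card_filter_le Finset.univ (fun i => p i = -1)
  rwa [Finset.card_univ, Fintype.card_fin] at this

lemma wt_eq_zero {p : DesignPoint k} (h : wt p = 0) : p = 1 := by
  funext i
  have h2 := Finset.card_eq_zero.1 h
  have hi : i ∉ Finset.univ.filter (fun i => p i = -1) := by rw [h2]; simp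
  simp only [Finset.mem_filter, Finset.mem_univ, true_and] at hi
  show p i = 1
  exact units_eq_one_of_ne_neg hi

lemma wt_eq_k {p : DesignPoint k} (h : wt p = k) : p = mOne := by
  have h2 : Finset.univ.filter (fun i => p i = -1) = Finset.univ :=
    Finset.eq_univ_of_card _ (by rw [Fintype.card_fin]; exact h)
  funext i
  have hi : i ∈ Finset.univ.filter (fun i => p i = -1) := by
    rw [h2]; exact Finset.mem_univ i
  simp only [Finset.mem_filter, Finset.mem_univ, true_and] at hi
  exact hi

lemma wt_delta_pos {p : DesignPoint k} {i : Fin k} (h : p i = 1) :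
    wt (delta i * p) = wt p + 1 := by
  unfold wt
  have hset : Finset.univ.filter (fun j => (delta i * p) j = -1)
      = insert i (Finset.univ.filter (fun j => p j = -1)) := by
    ext j
    simp only [Finset.mem_filter, Finset.mem_univ, true_and, Finset.mem_insert, Pi.mul_apply]
    by_cases hj : j = i
    · subst hj
      rw [delta_apply_self, h]
      simp
    · rw [delta_apply_ne hj, one_mul]
      simp [hj]
  rw [hset, Finset.card_insert_of_notMem]
  simp only [Finset.mem_filter, Finset.mem_univ, true_and]
  rw [h]
  decide

lemma wt_delta_neg {p : DesignPoint k} {i : Fin k} (h : p i = -1) :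
    wt (delta i * p) + 1 = wt p := by
  unfold wt
  have hset : Finset.univ.filter (fun j => (delta i * p) j = -1)
      = (Finset.univ.filter (fun j => p j = -1)).erase i := by
    ext j
    simp only [Finset.mem_filter, Finset.mem_univ, true_and, Finset.mem_erase, Pi.mul_apply]
    by_cases hj : j = i
    · subst hj
      rw [delta_apply_self, h]
      simp
    · rw [delta_apply_ne hj, one_mul]
      simp [hj]
  rw [hset]
  apply Finset.card_erase_add_one
  simp only [Finset.mem_filter, Finset.mem_univ, true_and]
  exact h

lemma filter_pos_card (p : DesignPoint k) :
    (Finset.univ.filter (fun i => p i = 1)).card + wt p = k := by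
  have hset : Finset.univ.filter (fun i => p i = 1)
      = Finset.univ.filter (fun i => ¬ p i = -1) := by
    ext i
    simp only [Finset.mem_filter, Finset.mem_univ, true_and]
    constructor
    · intro h hc; rw [h] at hc; exact absurd hc (by decide)
    · exact units_eq_one_of_ne_neg
  rw [hset]
  unfold wt
  rw [add_comm]
  have := Finset.card_filter_add_card_filter_not
    (s := (Finset.univ : Finset (Fin k))) (fun i => p i = -1)
  rwa [Finset.card_univ, Fintype.card_fin] at this

lemma muv_le_wt (p : DesignPoint k) : muv p ≤ wt p := min_le_left _ _

lemma muv_le_right (p : DesignPoint k) : muv p ≤ k + 1 - wt p := min_le_right _ _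

lemma eq_nu_of_muv_one {p : DesignPoint k} (h : muv p = 1) : ∃ m, p = nu m := by
  unfold muv at h
  rcases min_eq_iff.1 h with ⟨h1, _⟩ | ⟨h1, _⟩
  · obtain ⟨i0, hfi⟩ := Finset.card_eq_one.1 h1
    refine ⟨i0.succ, ?_⟩
    rw [← delta_eq_nu]
    funext j
    by_cases hj : j = i0
    · subst hj
      rw [delta_apply_self]
      have : j ∈ Finset.univ.filter (fun i => p i = -1) := by
        rw [hfi]; exact Finset.mem_singleton_self j
      simp only [Finset.mem_filter, Finset.mem_univ, true_and] at this
      exact this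
    · rw [delta_apply_ne hj]
      have : j ∉ Finset.univ.filter (fun i => p i = -1) := by
        rw [hfi]; simp [hj]
      simp only [Finset.mem_filter, Finset.mem_univ, true_and] at this
      exact units_eq_one_of_ne_neg this
  · have hwle := wt_le p
    have hw : wt p = k := by omega
    exact ⟨0, by rw [← mOne_eq_nu]; exact wt_eq_k hw⟩

lemma rigid (hk : 4 ≤ k) (α : Equiv.Perm (DesignPoint k))
    (hadj : ∀ p q : DesignPoint k, AdjP p q → AdjP (α p) (α q))
    (h1 : α 1 = 1) (hν : ∀ m : Fin (k+1), α (nu m) = nu m) :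
    ∀ p, α p = p := by
  have key : ∀ n, ∀ p : DesignPoint k, muv p ≤ n → α p = p := by
    intro n
    induction n with
    | zero =>
      intro p hp
      have h0 : muv p = 0 := Nat.le_zero.1 hp
      unfold muv at h0
      rcases Nat.min_eq_zero_iff.1 h0 with hw | hw
      · rw [wt_eq_zero hw]; exact h1
      · exfalso
        have := wt_le p
        omega
    | succ n ih =>
      intro p hp
      by_cases hle : muv p ≤ n
      · exact ih p hle
      have hd : muv p = n + 1 := by omega
      by_cases hn0 : n = 0
      · subst hn0
        obtain ⟨m, rfl⟩ := eq_nu_of_muv_one hd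
        exact hν m
      have hwle := wt_le p
      by_cases hcase : wt p ≤ k + 1 - wt p
      · -- case A
        have hw : wt p = n + 1 := by
          unfold muv at hd
          rw [min_eq_left hcase] at hd
          exact hd
        have hc2 : 1 < (Finset.univ.filter (fun i => p i = -1)).card := by
          show 1 < wt p
          omega
        obtain ⟨i, hi, j, hj, hij⟩ := Finset.one_lt_card.1 hc2
        simp only [Finset.mem_filter, Finset.mem_univ, true_and] at hi hj
        have hu_wt : wt (delta i * p) + 1 = wt p := wt_delta_neg hi
        have hv_wt : wt (delta j * p) + 1 = wt p := wt_delta_neg hj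
        have hji : (delta j * p) i = p i := by
          rw [Pi.mul_apply, delta_apply_ne hij, one_mul]
        have hz_wt : wt (delta i * (delta j * p)) + 2 = wt p := by
          have h2 : (delta j * p) i = -1 := by rw [hji]; exact hi
          have h3 := wt_delta_neg (p := delta j * p) (i := i) h2
          omega
        have hu_fix : α (delta i * p) = delta i * p := by
          apply ih
          have := muv_le_wt (delta i * p)
          omega
        have hv_fix : α (delta j * p) = delta j * p := by
          apply ih
          have := muv_le_wt (delta j * p)
          omega
        have hz_fix : α (delta i * (delta j * p)) = delta i * (delta j * p) := by
          apply ih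
          have := muv_le_wt (delta i * (delta j * p))
          omega
        have hadj_u : AdjP (delta i * p) (α p) := by
          have h4 : AdjP (delta i * p) p := by
            rw [adjP_iff]
            refine Or.inl ⟨i, ?_⟩
            rw [← mul_assoc, delta_mul_self, one_mul]
          have h5 := hadj _ _ h4
          rwa [hu_fix] at h5
        have hadj_v : AdjP (delta j * p) (α p) := by
          have h4 : AdjP (delta j * p) p := by
            rw [adjP_iff]
            refine Or.inl ⟨j, ?_⟩
            rw [← mul_assoc, delta_mul_self, one_mul]
          have h5 := hadj _ _ h4
          rwa [hv_fix] at h5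
        rcases cn_subset hk hij hadj_u hadj_v with hfin | hfin
        · exact hfin
        · exfalso
          have h6 : α (delta i * (delta j * p)) = α p := by rw [hz_fix, ← hfin]
          have h7 := α.injective h6
          have h8 := congrArg wt h7
          omega
      · -- case B
        have hw : k + 1 - wt p = n + 1 := by
          unfold muv at hd
          rw [min_eq_right (le_of_not_ge hcase)] at hd
          exact hd
        have hplus := filter_pos_card p
        by_cases hn1 : n = 1
        · -- w = k - 1 : exactly one +1 coordinate
          subst hn1
          have hc1 : (Finset.univ.filter (fun i => p i = 1)).card = 1 := by omega
          obtain ⟨i0, hfi⟩ := Finset.card_eq_one.1 hc1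
          have hpi0 : p i0 = 1 := by
            have : i0 ∈ Finset.univ.filter (fun i => p i = 1) := by
              rw [hfi]; exact Finset.mem_singleton_self i0
            simp only [Finset.mem_filter, Finset.mem_univ, true_and] at this
            exact this
          have hpother : ∀ j, j ≠ i0 → p j = -1 := by
            intro j hj
            have : j ∉ Finset.univ.filter (fun i => p i = 1) := by
              rw [hfi]; simp [hj]
            simp only [Finset.mem_filter, Finset.mem_univ, true_and] at this
            exact (Int.units_eq_one_or (p j)).resolve_left this
          have hpval : p = delta i0 * mOne := by
            funext l
            by_cases hl : l = i0
            · subst hl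
              have h9 : (mOne l : ℤˣ) = -1 := rfl
              rw [Pi.mul_apply, delta_apply_self, hpi0, h9]
              decide
            · rw [Pi.mul_apply, delta_apply_ne hl, one_mul, hpother l hl]
              rfl
          have hadj_u : AdjP (delta i0) (α p) := by
            have h4 : AdjP (delta i0) p := by
              rw [adjP_iff]
              right
              rw [hpval, mul_comm]
            have h5 := hadj _ _ h4
            have h6 : α (delta i0) = delta i0 := by
              rw [delta_eq_nu]; exact hν _
            rwa [h6] at h5
          have hadj_v : AdjP (mOne : DesignPoint k) (α p) := by
            have h4 : AdjP (mOne : DesignPoint k) p := by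
              rw [adjP_iff]
              left
              exact ⟨i0, hpval⟩
            have h5 := hadj _ _ h4
            have h6 : α mOne = mOne := by
              rw [mOne_eq_nu]; exact hν _
            rwa [h6] at h5
          rw [adjP_iff] at hadj_u hadj_v
          rcases hadj_u with ⟨a, ha⟩ | ha
          · rcases hadj_v with ⟨b, hb⟩ | hb
            · exfalso
              obtain ⟨l, hla, hli0, hlb⟩ := exists_not_mem3 hk a i0 b
              have h7 := congrFun (ha.symm.trans hb) l
              rw [Pi.mul_apply, Pi.mul_apply, delta_apply_ne hla, delta_apply_ne hli0,
                delta_apply_ne hlb] at h7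
              have h8 : (1 : ℤˣ) * 1 = 1 * (-1) := h7
              exact absurd h8 (by decide)
            · exfalso
              have h7 : α p = 1 := by rw [hb, mOne_mul_self]
              have h8 : p = 1 := by
                apply α.injective
                rw [h7, h1]
              have h9 := congrArg wt h8
              have h10 : wt (1 : DesignPoint k) = 0 := by
                apply Finset.card_eq_zero.2
                apply Finset.filter_false_of_mem
                intro l _
                have h11 : ((1 : DesignPoint k) l) = 1 := rfl
                rw [h11]
                decide
              omega
          · rw [ha, mul_comm, ← hpval]
        · -- n ≥ 2 : two +1 coordinates
          have hc2 : 1 < (Finset.univ.filter (fun i => p i = 1)).card := by omega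
          obtain ⟨i, hi, j, hj, hij⟩ := Finset.one_lt_card.1 hc2
          simp only [Finset.mem_filter, Finset.mem_univ, true_and] at hi hj
          have hu_wt : wt (delta i * p) = wt p + 1 := wt_delta_pos hi
          have hv_wt : wt (delta j * p) = wt p + 1 := wt_delta_pos hj
          have hji : (delta j * p) i = p i := by
            rw [Pi.mul_apply, delta_apply_ne hij, one_mul]
          have hz_wt : wt (delta i * (delta j * p)) = wt p + 2 := by
            have h2 : (delta j * p) i = 1 := by rw [hji]; exact hi
            have h3 := wt_delta_pos (p := delta j * p) (i := i) h2
            omega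
          have hu_fix : α (delta i * p) = delta i * p := by
            apply ih
            have := muv_le_right (delta i * p)
            omega
          have hv_fix : α (delta j * p) = delta j * p := by
            apply ih
            have := muv_le_right (delta j * p)
            omega
          have hz_fix : α (delta i * (delta j * p)) = delta i * (delta j * p) := by
            apply ih
            have := muv_le_right (delta i * (delta j * p))
            omega
          have hadj_u : AdjP (delta i * p) (α p) := by
            have h4 : AdjP (delta i * p) p := by
              rw [adjP_iff]
              refine Or.inl ⟨i, ?_⟩
              rw [← mul_assoc, delta_mul_self, one_mul]
            have h5 := hadj _ _ h4
            rwa [hu_fix] at h5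
          have hadj_v : AdjP (delta j * p) (α p) := by
            have h4 : AdjP (delta j * p) p := by
              rw [adjP_iff]
              refine Or.inl ⟨j, ?_⟩
              rw [← mul_assoc, delta_mul_self, one_mul]
            have h5 := hadj _ _ h4
            rwa [hv_fix] at h5
          rcases cn_subset hk hij hadj_u hadj_v with hfin | hfin
          · exact hfin
          · exfalso
            have h6 : α (delta i * (delta j * p)) = α p := by rw [hz_fix, ← hfin]
            have h7 := α.injective h6
            have h8 := congrArg wt h7
            omega
  intro p
  exact key (muv p) p le_rfl

/-! ### final assembly -/

lemma R_le_normalizer : (phi k).range ≤ Subgroup.normalizer ((psi k).range : Set (Equiv.Perm (DesignPoint k))) := by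
  rintro x ⟨σ, rfl⟩
  rw [Subgroup.mem_normalizer_iff]
  intro h
  constructor
  · rintro ⟨ε, rfl⟩
    exact conj_psi σ ε
  · rintro ⟨ε', he⟩
    obtain ⟨ε'', he2⟩ := conj_psi σ⁻¹ ε'
    refine ⟨ε'', ?_⟩
    rw [he2, map_inv, inv_inv, he]
    group

lemma glp_phi {N : ℕ} (σ : Equiv.Perm (Fin (k+1))) : phi k σ ∈ GLP k N 2 := by
  have h5 : (phi k).range ≤ Hgrp k N := by
    rw [← rClosure_eq]
    refine (Subgroup.closure_le _).2 ?_
    rintro _ ⟨i, rfl⟩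
    exact rho_mem_GLP i
  exact h5 ⟨σ, rfl⟩

lemma glp_le_calM {N : ℕ} (hk : 4 ≤ k) (hN : 1 ≤ N) :
    Hgrp k N ≤ calM k := by
  intro π hπ
  have hk2 : 2 ≤ k := by omega
  set c : DesignPoint k := π 1 with hcdef
  have hψc : psi k c ∈ GLP k N 2 := signChange_mem_GLP c
  set π₁ : Equiv.Perm (DesignPoint k) := (psi k c)⁻¹ * π with hπ₁def
  have hπ₁ : π₁ ∈ GLP k N 2 := glp_mul (glp_inv hψc) hπ
  have hone : π₁ 1 = 1 := by
    show (psi k c)⁻¹ (π 1) = 1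
    rw [← hcdef]
    apply (psi k c).injective
    rw [Equiv.Perm.coe_inv, Equiv.apply_symm_apply, psi_apply_one_pt]
  have hνex : ∀ m : Fin (k+1), ∃ m', π₁ (nu m) = nu m' := by
    intro m
    have h4 : AdjP (1 : DesignPoint k) (nu m) := (adj_one_iff _).2 ⟨m, rfl⟩
    have h5 := adjP_perm hN hπ₁ h4
    rw [hone] at h5
    exact (adj_one_iff _).1 h5
  choose s hs using hνex
  have hsinj : Function.Injective s := by
    intro m m' hmm
    have h6 : π₁ (nu m) = π₁ (nu m') := by rw [hs m, hs m', hmm]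
    exact nu_injective hk2 (π₁.injective h6)
  have hsbij : Function.Bijective s := Finite.injective_iff_bijective.1 hsinj
  set σ : Equiv.Perm (Fin (k+1)) := Equiv.ofBijective s hsbij with hσdef
  set π₂ : Equiv.Perm (DesignPoint k) := (phi k σ)⁻¹ * π₁ with hπ₂def
  have hπ₂ : π₂ ∈ GLP k N 2 := glp_mul (glp_inv (glp_phi σ)) hπ₁
  have hone2 : π₂ 1 = 1 := by
    show (phi k σ)⁻¹ (π₁ 1) = 1
    rw [hone]
    apply (phi k σ).injective
    rw [Equiv.Perm.coe_inv, Equiv.apply_symm_apply, phi_fixes_one]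
  have hν2 : ∀ m : Fin (k+1), π₂ (nu m) = nu m := by
    intro m
    show (phi k σ)⁻¹ (π₁ (nu m)) = nu m
    rw [hs m]
    apply (phi k σ).injective
    rw [Equiv.Perm.coe_inv, Equiv.apply_symm_apply, phi_nu]
    rfl
  have hrig := rigid hk π₂ (fun p q h => adjP_perm hN hπ₂ h) hone2 hν2
  have hπ₂1 : π₂ = 1 := Equiv.ext fun p => hrig p
  have h7 : π₁ = phi k σ := by
    have h8 : (phi k σ)⁻¹ * π₁ = 1 := hπ₂1
    have := inv_mul_eq_one.1 h8
    exact this.symm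
  have h9 : π = psi k c * phi k σ := by
    have h10 : (psi k c)⁻¹ * π = phi k σ := h7
    rw [← h10]
    group
  exact ⟨c, σ, h9⟩

end OA

/-- For `t = 2` and `k ≥ 4`, `G^LP ≅ S_2^k ⋊ S_{k+1}`: concretely,
`G^LP` (as a subgroup `H` of the permutations of `P`) is the internal semidirect
product of its normal subgroup of sign-change permutations (isomorphic to `S_2^k`)
with `R = ⟨ρ_1, …, ρ_k⟩ ≅ S_{k+1}`; in particular `|G^LP| = 2^k · (k+1)!`. -/
theorem strength_two_GLP_is_semidirect
    (k N : ℕ) (hk : 4 ≤ k) (hN : 1 ≤ N) :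
    ∃ H : Subgroup (Equiv.Perm (DesignPoint k)),
      (H : Set (Equiv.Perm (DesignPoint k))) = GLP k N 2 ∧
      Subgroup.closure (Set.range (signChange k)) ⊔
          Subgroup.closure (Set.range (rho k)) = H ∧
      Subgroup.closure (Set.range (signChange k)) ⊓
          Subgroup.closure (Set.range (rho k)) = ⊥ ∧
      ((Subgroup.closure (Set.range (signChange k))).subgroupOf H).Normal ∧
      Nonempty (Subgroup.closure (Set.range (signChange k)) ≃*
        (Fin k → Equiv.Perm (Fin 2))) ∧
      Nonempty (Subgroup.closure (Set.range (rho k)) ≃* Equiv.Perm (Fin (k + 1))) ∧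
      Nat.card H = 2 ^ k * Nat.factorial (k + 1) := by
  classical
  have hk2 : 2 ≤ k := by omega
  have hsup : Subgroup.closure (Set.range (signChange k))
      ⊔ Subgroup.closure (Set.range (rho k)) = OA.Hgrp k N := by
    apply le_antisymm
    · apply sup_le
      · exact (Subgroup.closure_le _).2
          (by rintro _ ⟨ε, rfl⟩; exact OA.signChange_mem_GLP ε)
      · exact (Subgroup.closure_le _).2
          (by rintro _ ⟨i, rfl⟩; exact OA.rho_mem_GLP i)
    · calc OA.Hgrp k N ≤ OA.calM k := OA.glp_le_calM hk hN
        _ = (OA.psi k).range ⊔ (OA.phi k).range := (OA.sup_eq_calM).symm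
        _ = _ := by rw [OA.sClosure_eq, OA.rClosure_eq]
  have hnorm : OA.Hgrp k N ≤ Subgroup.normalizer ((OA.psi k).range : Set (Equiv.Perm (DesignPoint k))) := by
    rw [← hsup, OA.sClosure_eq, OA.rClosure_eq]
    exact sup_le Subgroup.le_normalizer OA.R_le_normalizer
  have hNormal : ((Subgroup.closure (Set.range (signChange k))).subgroupOf
      (OA.Hgrp k N)).Normal := by
    constructor
    intro n hn g
    rw [Subgroup.mem_subgroupOf] at hn ⊢
    rw [OA.sClosure_eq] at hn ⊢
    have hg := hnorm g.2
    rw [Subgroup.mem_normalizer_iff] at hg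
    have h2 : (↑g : Equiv.Perm (DesignPoint k)) * ↑n * (↑g)⁻¹ ∈ (OA.psi k).range :=
      (hg ↑n).1 hn
    simpa using h2
  have hM : OA.calM k = OA.Hgrp k N := by
    rw [← OA.sup_eq_calM, ← OA.sClosure_eq, ← OA.rClosure_eq]
    exact hsup
  have hcard : Nat.card (OA.Hgrp k N) = 2 ^ k * Nat.factorial (k + 1) := by
    rw [← hM]
    exact OA.card_calM hk2
  exact ⟨OA.Hgrp k N, rfl, hsup, OA.inf_eq_bot hk2, hNormal, ⟨OA.sIso⟩,
    ⟨OA.rIso hk2⟩, hcard⟩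
end

section
/- Let k = 3 and t = 2. There exists a permutation g ∈ G^LP of P = {−1,1}^3 whose linear action satisfies g·x_1 = (1/2)x_{1,2} + (1/2)x_{1,3} + (1/2)x_2 − (1/2)x_3, g·x_2 = (1/2)x_{1,2} + (1/2)x_{1,3} − (1/2)x_2 + (1/2)x_3, and g·x_3 = x_1. Consequently |G^LP| > 2^3·(3+1)! = 192, so the conclusion of the strength-2 theorem (G^LP ≅ S_2^k ⋊ S_{k+1}) fails for k = 3. -/
/- ------------------ auxiliary lemmas ------------------- -/

lemma xvec_int (k : ℕ) (S : Finset (Fin k)) (p : DesignPoint k) :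
    xvec k S p = ((∏ i ∈ S, (p i : ℤ) : ℤ) : ℚ) := by
  simp [xvec]

lemma sum_xvec_zero (T : Finset (Fin 3)) (hT : T ≠ ∅) :
    ∑ p : DesignPoint 3, xvec 3 T p = 0 := by
  simp only [xvec_int]
  rw [← Int.cast_sum]
  norm_cast
  revert hT
  revert T
  decide

lemma univ_dp_eq : (Finset.univ : Finset (DesignPoint 3)) =
    {![1,1,1], ![1,1,-1], ![1,-1,1], ![1,-1,-1], ![-1,1,1], ![-1,1,-1], ![-1,-1,1], ![-1,-1,-1]} := by
  decide

lemma sum_dp (F : DesignPoint 3 → ℚ) :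
    ∑ p, F p = F ![1,1,1] + F ![1,1,-1] + F ![1,-1,1] + F ![1,-1,-1]
      + F ![-1,1,1] + F ![-1,1,-1] + F ![-1,-1,1] + F ![-1,-1,-1] := by
  rw [univ_dp_eq]
  rw [Finset.sum_insert (by decide), Finset.sum_insert (by decide), Finset.sum_insert (by decide),
    Finset.sum_insert (by decide), Finset.sum_insert (by decide), Finset.sum_insert (by decide),
    Finset.sum_insert (by decide), Finset.sum_singleton]
  ring

lemma constancy {N : ℕ} {f : DesignPoint 3 → ℚ} (hf : f ∈ feas 3 N 2) :
    ∀ p : DesignPoint 3, f p =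
      (f ![1,1,1] + f ![-1,-1,-1])/2
        + (f ![1,1,1] - f ![-1,-1,-1])/2 * xvec 3 Finset.univ p := by
  obtain ⟨-, -, hc⟩ := hf
  have h1 := hc {0} (by decide) (by decide)
  have h2 := hc {1} (by decide) (by decide)
  have h3 := hc {2} (by decide) (by decide)
  have h4 := hc {0,1} (by decide) (by decide)
  have h5 := hc {0,2} (by decide) (by decide)
  have h6 := hc {1,2} (by decide) (by decide)
  rw [sum_dp] at h1 h2 h3 h4 h5 h6
  norm_num [xvec, Finset.prod_pair, Finset.prod_singleton, (by decide : (0:Fin 3) ≠ 1),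
    (by decide : (0:Fin 3) ≠ 2), (by decide : (1:Fin 3) ≠ 2), Matrix.cons_val_two, Matrix.vecHead, Matrix.vecTail] at h1 h2 h3 h4 h5 h6
  intro p
  have hp : p = ![p 0, p 1, p 2] := by
    funext i; fin_cases i <;> rfl
  rw [hp]
  rcases Int.units_eq_one_or (p 0) with h0 | h0 <;>
    rcases Int.units_eq_one_or (p 1) with hb | hb <;>
    rcases Int.units_eq_one_or (p 2) with hcc | hcc <;>
    rw [h0, hb, hcc] <;>
    norm_num [xvec, Fin.prod_univ_three, Matrix.cons_val_two, Matrix.vecHead, Matrix.vecTail] <;>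
    linarith

lemma xvec_sq (S : Finset (Fin 3)) (r : DesignPoint 3) :
    xvec 3 S r * xvec 3 S r = 1 := by
  rw [xvec, ← Finset.prod_mul_distrib]
  apply Finset.prod_eq_one
  intro i _
  rcases Int.units_eq_one_or (r i) with h | h <;> rw [h] <;> norm_num

lemma xvec_mul_univ (S : Finset (Fin 3)) (r : DesignPoint 3) :
    xvec 3 S r * xvec 3 Finset.univ r = xvec 3 Sᶜ r := by
  have h : xvec 3 S r * xvec 3 Sᶜ r = xvec 3 Finset.univ r := by
    rw [xvec, xvec, xvec]; exact Finset.prod_mul_prod_compl S _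
  calc xvec 3 S r * xvec 3 Finset.univ r
      = (xvec 3 S r * xvec 3 S r) * xvec 3 Sᶜ r := by rw [← h]; ring
    _ = xvec 3 Sᶜ r := by rw [xvec_sq]; ring

lemma xvec_univ_eq (p : DesignPoint 3) :
    xvec 3 Finset.univ p = (((p 0 * p 1 * p 2 : ℤˣ) : ℤ) : ℚ) := by
  simp [xvec, Fin.prod_univ_three]

/-- Any parity-preserving permutation is in the LP symmetry group. -/
lemma good_mem {N : ℕ} (π : Equiv.Perm (DesignPoint 3))
    (hπ : ∀ p, xvec 3 Finset.univ (π p) = xvec 3 Finset.univ p) :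
    π ∈ GLP 3 N 2 := by
  intro f hf
  have hconst := constancy hf
  set a := (f ![1,1,1] + f ![-1,-1,-1])/2 with ha
  set b := (f ![1,1,1] - f ![-1,-1,-1])/2 with hbdef
  obtain ⟨hpos, hsum, hcons⟩ := hf
  refine ⟨fun p => hpos _, ?_, ?_⟩
  · show (∑ p, f (π⁻¹ p)) = (N : ℚ)
    rw [← hsum]
    exact Equiv.sum_comp π⁻¹ f
  · intro S hS hcard
    have hSc : Sᶜ ≠ ∅ := by
      revert hS hcard; revert S; decide
    have key : ∀ q, xvec 3 S (π q) * f q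
        = a * xvec 3 S (π q) + b * xvec 3 Sᶜ (π q) := by
      intro q
      rw [hconst q, ← hπ q]
      calc xvec 3 S (π q) * (a + b * xvec 3 Finset.univ (π q))
          = a * xvec 3 S (π q) + b * (xvec 3 S (π q) * xvec 3 Finset.univ (π q)) := by ring
        _ = a * xvec 3 S (π q) + b * xvec 3 Sᶜ (π q) := by rw [xvec_mul_univ]
    show (∑ p, xvec 3 S p * f (π⁻¹ p)) = 0
    have e1 : (∑ p, xvec 3 S p * f (π⁻¹ p)) = ∑ q, xvec 3 S (π q) * f q := by
      rw [← Equiv.sum_comp π (fun p => xvec 3 S p * f (π⁻¹ p))]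
      simp
    rw [e1]
    calc (∑ q, xvec 3 S (π q) * f q)
        = ∑ q, (a * xvec 3 S (π q) + b * xvec 3 Sᶜ (π q)) :=
          Finset.sum_congr rfl (fun q _ => key q)
      _ = a * (∑ q, xvec 3 S (π q)) + b * (∑ q, xvec 3 Sᶜ (π q)) := by
          rw [Finset.sum_add_distrib, Finset.mul_sum, Finset.mul_sum]
      _ = a * (∑ q, xvec 3 S q) + b * (∑ q, xvec 3 Sᶜ q) := by
          rw [Equiv.sum_comp π (xvec 3 S), Equiv.sum_comp π (xvec 3 Sᶜ)]
      _ = 0 := by rw [sum_xvec_zero S hS, sum_xvec_zero Sᶜ hSc]; ring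

/-- The exotic permutation `g` (given as the inverse direction `g⁻¹ = hmapDP`). -/
def gmapDP : DesignPoint 3 → DesignPoint 3 := fun q =>
  ![q 2, if q 2 = 1 then q 0 else -(q 1), if q 2 = 1 then q 1 else -(q 0)]

def hmapDP : DesignPoint 3 → DesignPoint 3 := fun p =>
  ![if p 0 = 1 then p 1 else -(p 2), if p 0 = 1 then p 2 else -(p 1), p 0]

def gpermDP : Equiv.Perm (DesignPoint 3) :=
  ⟨gmapDP, hmapDP, by intro x; revert x; decide, by intro x; revert x; decide⟩

lemma gperm_inv_apply (p : DesignPoint 3) : (gpermDP)⁻¹ p = hmapDP p := rfl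

lemma gperm_parity : ∀ p, xvec 3 Finset.univ (gpermDP p) = xvec 3 Finset.univ p := by
  intro p
  rw [xvec_univ_eq, xvec_univ_eq]
  have h : (gpermDP p) 0 * (gpermDP p) 1 * (gpermDP p) 2 = p 0 * p 1 * p 2 := by
    revert p; decide
  rw [h]

/-- The even-parity predicate. -/
def PeDP (p : DesignPoint 3) : Prop := p 0 * p 1 * p 2 = 1

instance : DecidablePred PeDP := fun p => by unfold PeDP; infer_instance

lemma pe_one {q : DesignPoint 3} (h : PeDP q) : q 0 * q 1 * q 2 = 1 := h

lemma pe_neg {q : DesignPoint 3} (h : ¬ PeDP q) : q 0 * q 1 * q 2 = -1 := by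
  rcases Int.units_eq_one_or (q 0 * q 1 * q 2) with hx | hx
  · exact absurd hx h
  · exact hx

/-- For `k = 3` and `t = 2` there is a permutation `g ∈ G^LP` with
`g·x_1 = (1/2)x_{1,2} + (1/2)x_{1,3} + (1/2)x_2 − (1/2)x_3`,
`g·x_2 = (1/2)x_{1,2} + (1/2)x_{1,3} − (1/2)x_2 + (1/2)x_3`, `g·x_3 = x_1`
(indices `1,2,3` encoded as `0,1,2 : Fin 3`); consequently
`|G^LP| > 2^3 · (3+1)! = 192`, so the strength-2 theorem fails for `k = 3`. -/
theorem strength_two_k_three_counterexample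
    (N : ℕ) (hN : 1 ≤ N) :
    (∃ g ∈ GLP 3 N 2,
      permVec 3 g (xvec 3 {0}) = (fun p =>
        (1/2) * xvec 3 {0, 1} p + (1/2) * xvec 3 {0, 2} p
          + (1/2) * xvec 3 {1} p - (1/2) * xvec 3 {2} p) ∧
      permVec 3 g (xvec 3 {1}) = (fun p =>
        (1/2) * xvec 3 {0, 1} p + (1/2) * xvec 3 {0, 2} p
          - (1/2) * xvec 3 {1} p + (1/2) * xvec 3 {2} p) ∧
      permVec 3 g (xvec 3 {2}) = xvec 3 {0}) ∧
    2 ^ 3 * Nat.factorial (3 + 1) < (GLP 3 N 2).ncard := by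
  constructor
  · refine ⟨gpermDP, good_mem _ gperm_parity, ?_, ?_, ?_⟩
    · funext p
      show xvec 3 {0} (hmapDP p) = _
      have hp : p = ![p 0, p 1, p 2] := by funext i; fin_cases i <;> rfl
      rw [hp]
      rcases Int.units_eq_one_or (p 0) with h0 | h0 <;>
        rcases Int.units_eq_one_or (p 1) with hb | hb <;>
        rcases Int.units_eq_one_or (p 2) with hcc | hcc <;>
        rw [h0, hb, hcc] <;>
        norm_num [hmapDP, xvec, Finset.prod_pair, Finset.prod_singleton,
          (by decide : (0:Fin 3) ≠ 1), (by decide : (0:Fin 3) ≠ 2), (by decide : (1:Fin 3) ≠ 2),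
          (by decide : ¬((-1:ℤˣ) = 1)), Matrix.cons_val_two, Matrix.vecHead, Matrix.vecTail]
    · funext p
      show xvec 3 {1} (hmapDP p) = _
      have hp : p = ![p 0, p 1, p 2] := by funext i; fin_cases i <;> rfl
      rw [hp]
      rcases Int.units_eq_one_or (p 0) with h0 | h0 <;>
        rcases Int.units_eq_one_or (p 1) with hb | hb <;>
        rcases Int.units_eq_one_or (p 2) with hcc | hcc <;>
        rw [h0, hb, hcc] <;>
        norm_num [hmapDP, xvec, Finset.prod_pair, Finset.prod_singleton,
          (by decide : (0:Fin 3) ≠ 1), (by decide : (0:Fin 3) ≠ 2), (by decide : (1:Fin 3) ≠ 2),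
          (by decide : ¬((-1:ℤˣ) = 1)), Matrix.cons_val_two, Matrix.vecHead, Matrix.vecTail]
    · funext p
      show xvec 3 {2} (hmapDP p) = _
      have hp : p = ![p 0, p 1, p 2] := by funext i; fin_cases i <;> rfl
      rw [hp]
      rcases Int.units_eq_one_or (p 0) with h0 | h0 <;>
        rcases Int.units_eq_one_or (p 1) with hb | hb <;>
        rcases Int.units_eq_one_or (p 2) with hcc | hcc <;>
        rw [h0, hb, hcc] <;>
        norm_num [hmapDP, xvec, Finset.prod_pair, Finset.prod_singleton,
          (by decide : (0:Fin 3) ≠ 1), (by decide : (0:Fin 3) ≠ 2), (by decide : (1:Fin 3) ≠ 2),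
          (by decide : ¬((-1:ℤˣ) = 1)), Matrix.cons_val_two, Matrix.vecHead, Matrix.vecTail]
  · -- counting
    have hsub : Set.range (Equiv.Perm.subtypeCongrHom PeDP) ⊆ GLP 3 N 2 := by
      rintro π ⟨⟨σ, τ⟩, rfl⟩
      apply good_mem
      intro p
      have hap : (Equiv.Perm.subtypeCongrHom PeDP) (σ, τ) p
          = if h : PeDP p then (σ ⟨p, h⟩ : DesignPoint 3) else (τ ⟨p, h⟩ : DesignPoint 3) :=
        Equiv.Perm.subtypeCongr.apply σ τ p
      rw [xvec_univ_eq, xvec_univ_eq, hap]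
      by_cases h : PeDP p
      · rw [dif_pos h, pe_one (σ ⟨p, h⟩).2, pe_one h]
      · rw [dif_neg h, pe_neg (τ ⟨p, h⟩).2, pe_neg h]
    have hle : (Set.range (Equiv.Perm.subtypeCongrHom PeDP)).ncard ≤ (GLP 3 N 2).ncard :=
      Set.ncard_le_ncard hsub (Set.toFinite _)
    have hcard : (Set.range (Equiv.Perm.subtypeCongrHom PeDP)).ncard = 576 := by
      rw [← Nat.card_coe_set_eq,
        Nat.card_range_of_injective (Equiv.Perm.subtypeCongrHom_injective PeDP)]
      rw [Nat.card_eq_fintype_card, Fintype.card_prod, Fintype.card_perm, Fintype.card_perm]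
      have c1 : Fintype.card {a : DesignPoint 3 // PeDP a} = 4 := by decide
      have c2 : Fintype.card {a : DesignPoint 3 // ¬ PeDP a} = 4 := by decide
      rw [c1, c2]
      decide
    have h192 : 2 ^ 3 * Nat.factorial (3 + 1) = 192 := by decide
    omega
end
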